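/- arXiv:math/0504490 — 8 statements merged into one kernel-verified Lean document; each statement's English description precedes it below -/
import Mathlib

section
/- Let T be an aperiodic Borel automorphism of a standard Borel space (X, 𝓑). Then for every integer m ≥ 1, every ε > 0, and any finite list of Borel probability measures μ₁, …, μ_p on X, there exists a Borel set F ⊆ X such that the sets F, T(F), T²(F), …, T^{m-1}(F) are pairwise disjoint and μᵢ(F ∪ T(F) ∪ ⋯ ∪ T^{m-1}(F)) > 1 − ε for every i = 1, …, p. -/
/-!
Fix a bounded injective Borel function `h` on `X` and let `L x` be the limsup of `h` along the
backward orbit `T⁻ⁿ x`. Since `L` is `T`-invariant, each set `{|h - L| < 1/(n+1)} \ {h = L}` meets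
every backward orbit, and these sets decrease to `∅` because `h = L` holds at most once on an
orbit of an aperiodic map; so one of them, `S`, is small for the finite measure
`ν = ∑ᵢ ∑_{0<j<m} Tʲ₊ μᵢ`. If `b x` is the first time the backward orbit of `x` enters `S`, then
`b (Tʲ x) = b x + j` as long as `T x, …, Tʲ x ∉ S`, so `F = {m ∣ b, T x, …, Tᵐ⁻¹ x ∉ S}` has `m`
disjoint iterates, and their union misses only `⋃_{0<j<m} T⁻ʲ S`, which is `ν`-small.
-/

open MeasureTheory Filter Function Set
open scoped ENNReal

namespace Rokhlin

section Orbits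

variable {α : Type*}

theorem injective_iterate_apply_of_periodicPts_eq_empty {g : α → α} (hg : periodicPts g = ∅)
    (x : α) : Injective fun n => g^[n] x := by
  intro a b hab
  by_contra hne
  wlog hlt : a < b generalizing a b
  · exact this hab.symm (Ne.symm hne) (by omega)
  have hper : IsPeriodicPt g (b - a) (g^[a] x) := by
    simp only [IsPeriodicPt, IsFixedPt, ← iterate_add_apply, Nat.sub_add_cancel hlt.le]
    exact hab.symm
  exact (eq_empty_iff_forall_notMem.1 hg _) (mk_mem_periodicPts (by omega) hper)

theorem iterate_iterate_of_le {f g : α → α} (hfg : LeftInverse g f) {b c : ℕ} (hbc : b ≤ c)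
    (x : α) : g^[b] (f^[c] x) = f^[c - b] x := by
  obtain ⟨d, rfl⟩ := Nat.exists_eq_add_of_le hbc
  rw [iterate_add_apply, hfg.iterate b, Nat.add_sub_cancel_left]

theorem periodicPts_eq_empty_of_leftInverse {f g : α → α} (hfg : LeftInverse f g)
    (hf : periodicPts f = ∅) : periodicPts g = ∅ :=
  eq_empty_of_forall_notMem fun x ⟨n, hn, hx⟩ =>
    (eq_empty_iff_forall_notMem.1 hf x) ⟨n, hn, (congrArg f^[n] hx).symm.trans (hfg.iterate n x)⟩

noncomputable def orbitLimsup (h : α → ℝ) (g : α → α) (x : α) : ℝ :=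
  limsup (fun n => h (g^[n] x)) atTop

theorem orbitLimsup_iterate (h : α → ℝ) (g : α → α) (k : ℕ) (x : α) :
    orbitLimsup h g (g^[k] x) = orbitLimsup h g x := by
  simp only [orbitLimsup, ← iterate_add_apply]
  exact limsup_nat_add (fun n => h (g^[n] x)) k

theorem frequently_abs_sub_orbitLimsup_lt {h : α → ℝ} {C : ℝ} (hC : ∀ x, |h x| ≤ C)
    (g : α → α) (x : α) {c : ℝ} (hc : 0 < c) :
    ∃ᶠ n in atTop, |h (g^[n] x) - orbitLimsup h g x| < c := by
  have hbdd : IsBoundedUnder (· ≤ ·) atTop fun n => h (g^[n] x) :=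
    isBoundedUnder_of ⟨C, fun n => (le_abs_self _).trans (hC _)⟩
  have hcobdd : IsCoboundedUnder (· ≤ ·) atTop fun n => h (g^[n] x) :=
    isCoboundedUnder_le_of_le atTop fun n => neg_le_of_abs_le (hC _)
  have hlow := frequently_lt_of_lt_limsup hcobdd (sub_lt_self (orbitLimsup h g x) hc)
  have hup := eventually_lt_of_limsup_lt (lt_add_of_pos_right (orbitLimsup h g x) hc) hbdd
  exact (hlow.and_eventually hup).mono fun n hn =>
    abs_sub_lt_iff.2 ⟨by linarith [hn.2], by linarith [hn.1]⟩

theorem eventually_ne_orbitLimsup {h : α → ℝ} (hh : Injective h) {g : α → α}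
    (hg : periodicPts g = ∅) (x : α) :
    ∀ᶠ n in atTop, h (g^[n] x) ≠ orbitLimsup h g x := by
  have hsub : {n | h (g^[n] x) = orbitLimsup h g x}.Subsingleton := fun a ha b hb =>
    injective_iterate_apply_of_periodicPts_eq_empty hg x (hh (ha.trans hb.symm))
  rw [← Nat.cofinite_eq_atTop]
  exact hsub.finite.eventually_cofinite_notMem

def MeetsForwardOrbits (g : α → α) (S : Set α) : Prop :=
  ∀ x, ∃ n, g^[n] x ∈ S

-- `0` (junk) when the forward orbit of `x` misses `S`.
noncomputable def hitTime (g : α → α) (S : Set α) (x : α) : ℕ :=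
  sInf {n | g^[n] x ∈ S}

theorem hitTime_iterate {f g : α → α} (hfg : LeftInverse g f) {S : Set α} {x : α}
    (hx : ∃ n, g^[n] x ∈ S) {c : ℕ} (hc : ∀ j, 0 < j → j ≤ c → f^[j] x ∉ S) :
    hitTime g S (f^[c] x) = hitTime g S x + c := by
  have hshift : {n | g^[n + c] (f^[c] x) ∈ S} = {n | g^[n] x ∈ S} := by
    ext n
    simp only [mem_ofPred_eq, iterate_add_apply, hfg.iterate c x]
  unfold hitTime
  rw [← Nat.sInf_add, hshift]
  obtain ⟨n, hn⟩ := hx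
  refine le_csInf ⟨n + c, by simpa [iterate_add_apply, hfg.iterate c x]⟩ fun b hb => ?_
  by_contra! hbc
  exact hc (c - b) (by omega) (by omega) (iterate_iterate_of_le hfg hbc.le x ▸ hb)

end Orbits

variable {X : Type*} [MeasurableSpace X]

theorem exists_antitone_iInter_eq_empty_meetsForwardOrbits {g : X → X} (hg : Measurable g)
    (hper : periodicPts g = ∅) {h : X → ℝ} (hhm : Measurable h) (hh : Injective h) {C : ℝ}
    (hC : ∀ x, |h x| ≤ C) :
    ∃ V : ℕ → Set X, (∀ n, MeasurableSet (V n)) ∧ Antitone V ∧ ⋂ n, V n = ∅ ∧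
      ∀ n, MeetsForwardOrbits g (V n) := by
  set L := orbitLimsup h g
  have hL : Measurable L := Measurable.limsup fun n => hhm.comp (hg.iterate n)
  refine ⟨fun n => {x | |h x - L x| < 1 / (n + 1)} \ {x | h x = L x}, fun n => ?_,
    fun a b hab x hx => ?_, ?_, fun n x => ?_⟩
  · exact (measurableSet_lt (hhm.sub hL).abs measurable_const).diff (measurableSet_eq_fun hhm hL)
  · exact ⟨(show |h x - L x| < _ from hx.1).trans_le (Nat.one_div_le_one_div hab), hx.2⟩
  · refine eq_empty_of_forall_notMem fun x hx => ?_
    simp only [mem_iInter, Set.mem_sdiff] at hx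
    refine (hx 0).2 (eq_of_forall_dist_le fun ε hε => ?_)
    obtain ⟨n, hn⟩ := exists_nat_one_div_lt hε
    exact (hx n).1.le.trans hn.le
  · have hfreq := frequently_abs_sub_orbitLimsup_lt hC g x (Nat.one_div_pos_of_nat (n := n))
    obtain ⟨k, hk, hne⟩ := (hfreq.and_eventually (eventually_ne_orbitLimsup hh hper x)).exists
    exact ⟨k, by simpa [L, orbitLimsup_iterate] using And.intro hk hne⟩

theorem exists_measure_lt_meetsForwardOrbits [StandardBorelSpace X] {g : X → X}
    (hg : Measurable g) (hper : periodicPts g = ∅) (ν : Measure X) [IsFiniteMeasure ν]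
    {δ : ℝ≥0∞} (hδ : 0 < δ) :
    ∃ S, MeasurableSet S ∧ ν S < δ ∧ MeetsForwardOrbits g S := by
  obtain ⟨f, hf⟩ := exists_measurableEmbedding_real X
  obtain ⟨V, hVm, hVanti, hVempty, hV⟩ := exists_antitone_iInter_eq_empty_meetsForwardOrbits hg
    hper (Real.measurable_arctan.comp hf.measurable) (Real.arctan_injective.comp hf.injective)
    (C := Real.pi / 2) fun x =>
      abs_le.2 ⟨(Real.neg_pi_div_two_lt_arctan _).le, (Real.arctan_lt_pi_div_two _).le⟩
  have hlim := tendsto_measure_iInter_atTop (μ := ν) (fun n => (hVm n).nullMeasurableSet) hVanti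
    ⟨0, measure_ne_top ν _⟩
  rw [hVempty, measure_empty] at hlim
  obtain ⟨n, hn⟩ := (hlim.eventually_lt_const hδ).exists
  exact ⟨V n, hVm n, hn, hV n⟩

theorem measurable_hitTime {g : X → X} (hg : Measurable g) {S : Set X} (hS : MeasurableSet S)
    (hmeets : MeetsForwardOrbits g S) : Measurable (hitTime g S) := by
  classical
  have : hitTime g S = fun x => Nat.find (hmeets x) := funext fun x => Nat.sInf_def (hmeets x)
  rw [this]
  exact measurable_find hmeets fun k => hg.iterate k hS

def towerBase (T : X ≃ᵐ X) (S : Set X) (m : ℕ) : Set X :=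
  {x | m ∣ hitTime T.symm S x ∧ ∀ j, 0 < j → j < m → T^[j] x ∉ S}

section Tower

variable {T : X ≃ᵐ X} {S : Set X} {m : ℕ}

theorem measurableSet_towerBase (hSm : MeasurableSet S) (hS : MeetsForwardOrbits T.symm S) :
    MeasurableSet (towerBase T S m) := by
  simp only [towerBase, ofPred_and, ofPred_forall]
  refine .inter (measurable_hitTime T.symm.measurable hSm hS (t := {k | m ∣ k}) trivial) ?_
  exact .iInter fun j => .iInter fun _ => .iInter fun _ => (T.measurable.iterate j hSm).compl

theorem iterate_notMem_towerBase (hS : MeetsForwardOrbits T.symm S) {x : X}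
    (hx : x ∈ towerBase T S m) {c : ℕ} (hc : 0 < c) (hcm : c < m) :
    T^[c] x ∉ towerBase T S m := by
  intro hcx
  have hhit : hitTime T.symm S (T^[c] x) = hitTime T.symm S x + c :=
    hitTime_iterate T.symm_apply_apply (hS x) fun j hj hjc => hx.2 j hj (hjc.trans_lt hcm)
  have hdvd : m ∣ c := (Nat.dvd_add_right hx.1).1 (hhit ▸ hcx.1)
  exact absurd (Nat.le_of_dvd hc hdvd) (by omega)

theorem disjoint_image_iterate_towerBase (hS : MeetsForwardOrbits T.symm S) {i j : ℕ}
    (hi : i < m) (hj : j < m) (hij : i ≠ j) :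
    Disjoint (T^[i] '' towerBase T S m) (T^[j] '' towerBase T S m) := by
  wlog hlt : i < j generalizing i j
  · exact (this hj hi hij.symm (by omega)).symm
  obtain ⟨c, rfl⟩ := Nat.exists_eq_add_of_le hlt.le
  rw [iterate_add, image_comp, disjoint_image_iff (T.injective.iterate i), disjoint_right]
  rintro _ ⟨x, hx, rfl⟩
  exact iterate_notMem_towerBase hS hx (by omega) (by omega)

theorem compl_iUnion_image_towerBase_subset (hS : MeetsForwardOrbits T.symm S) (hm : 0 < m) :
    (⋃ j ∈ Finset.range m, T^[j] '' towerBase T S m)ᶜ ⊆ ⋃ j ∈ Finset.Ico 1 m, T^[j] ⁻¹' S := by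
  intro y hy
  by_contra hyS
  simp only [mem_iUnion, mem_preimage, Finset.mem_Ico, exists_prop, not_exists, not_and] at hyS
  set r := hitTime T.symm S y % m
  set x := T.symm^[r] y
  have hxy : T^[r] x = y := (LeftInverse.iterate T.apply_symm_apply r) y
  have hbefore : ∀ j, 0 < j → j ≤ r → T^[j] x ∉ S := fun j hj hjr => by
    rw [iterate_iterate_of_le T.apply_symm_apply hjr]
    exact Nat.notMem_of_lt_sInf ((Nat.sub_lt_self hj hjr).trans_le (Nat.mod_le _ _))
  have hhit : hitTime T.symm S y = hitTime T.symm S x + r :=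
    hxy ▸ hitTime_iterate T.symm_apply_apply (hS x) hbefore
  have hxbase : x ∈ towerBase T S m := by
    refine ⟨?_, fun j hj hjm => ?_⟩
    · rw [show hitTime T.symm S x = hitTime T.symm S y - r by omega]
      exact Nat.dvd_sub_mod _
    · rcases le_or_gt j r with hjr | hrj
      · exact hbefore j hj hjr
      · rw [← Nat.sub_add_cancel hrj.le, iterate_add_apply, hxy]
        exact hyS _ ⟨by omega, by omega⟩
  exact hy (mem_biUnion (Finset.mem_range.2 (Nat.mod_lt _ hm)) ⟨x, hxbase, hxy⟩)

end Tower

theorem measure_biUnion_preimage_le_sum_map {ι : Type*} (s : Finset ι) {f : ι → X → X}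
    (hf : ∀ i, Measurable (f i)) (μ : Measure X) {S : Set X} (hS : MeasurableSet S) :
    μ (⋃ i ∈ s, f i ⁻¹' S) ≤ (∑ i ∈ s, μ.map (f i)) S := by
  simp only [Measure.finsetSum_apply, Measure.map_apply (hf _) hS]
  exact measure_biUnion_finset_le s _

-- The `min` with `1` matters: if `a ≥ 1` then `1 - a = 0` in `ℝ≥0∞`, and `0 < μ s` is still needed.
theorem one_sub_lt_measure_of_measure_compl_lt {μ : Measure X} [IsProbabilityMeasure μ]
    {s : Set X} {a : ℝ≥0∞} (h : μ sᶜ < min a 1) : 1 - a < μ s :=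
  calc 1 - a ≤ 1 - min a 1 := tsub_le_tsub_left (min_le_left _ _) _
    _ < 1 - μ sᶜ := (ENNReal.cancel_of_ne ENNReal.one_ne_top).tsub_lt_tsub_iff_left_of_le
      (ENNReal.cancel_of_lt' ((min_le_right a 1).trans_lt ENNReal.one_lt_top)) (min_le_right _ _)
      |>.2 h
    _ ≤ μ s := tsub_le_iff_right.2 (measure_univ (μ := μ) ▸ measure_univ_le_add_compl s)

end Rokhlin

open Rokhlin

/-- **Rokhlin lemma in Borel dynamics.** Let `T` be an aperiodic Borel automorphism of a
standard Borel space `X`. Then for every `m ≥ 1`, `ε > 0`, and Borel probability measures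
`μ₁, …, μ_p`, there is a Borel set `F` with `F, T F, …, T^{m-1} F` pairwise disjoint and
`μᵢ(F ∪ T F ∪ ⋯ ∪ T^{m-1} F) > 1 - ε` for all `i`. -/
theorem stmt_0 {X : Type*} [MeasurableSpace X] [StandardBorelSpace X]
    (T : X ≃ᵐ X)
    (hT : ∀ x : X, ∀ n : ℕ, 1 ≤ n → (T : X → X)^[n] x ≠ x)
    (m : ℕ) (hm : 1 ≤ m) (ε : ℝ) (hε : 0 < ε)
    (p : ℕ) (μ : Fin p → Measure X)
    (hμ : ∀ i, IsProbabilityMeasure (μ i)) :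
    ∃ F : Set X, MeasurableSet F ∧
      (∀ i j : ℕ, i < m → j < m → i ≠ j →
        Disjoint ((T : X → X)^[i] '' F) ((T : X → X)^[j] '' F)) ∧
      (∀ i : Fin p,
        1 - ENNReal.ofReal ε < μ i (⋃ j ∈ Finset.range m, (T : X → X)^[j] '' F)) := by
  have hper : periodicPts T.symm = ∅ := periodicPts_eq_empty_of_leftInverse T.apply_symm_apply
    (eq_empty_of_forall_notMem fun x ⟨n, hn, hx⟩ => hT x n hn hx)
  let ν : Measure X := ∑ i, ∑ j ∈ Finset.Ico 1 m, (μ i).map T^[j]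
  obtain ⟨S, hSm, hνS, hS⟩ := exists_measure_lt_meetsForwardOrbits T.symm.measurable
    hper ν (δ := min (ENNReal.ofReal ε) 1) (by simp [hε])
  refine ⟨towerBase T S m, measurableSet_towerBase hSm hS,
    fun i j hi hj hij => disjoint_image_iterate_towerBase hS hi hj hij, fun i => ?_⟩
  refine one_sub_lt_measure_of_measure_compl_lt <|
    (measure_mono (compl_iUnion_image_towerBase_subset hS hm)).trans_lt ?_
  calc μ i (⋃ j ∈ Finset.Ico 1 m, T^[j] ⁻¹' S)
      ≤ (∑ j ∈ Finset.Ico 1 m, (μ i).map T^[j]) S :=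
        measure_biUnion_preimage_le_sum_map _ (fun j => T.measurable.iterate j) _ hSm
    _ ≤ ν S := Measure.le_iff'.1 (Finset.single_le_sum (f := fun i => ∑ j ∈ Finset.Ico 1 m,
        (μ i).map T^[j]) (fun _ _ => Measure.zero_le _) (Finset.mem_univ i)) S
    _ < _ := hνS
end

section
/- Let T be an aperiodic Borel automorphism of a standard Borel space (X, 𝓑). Then there exists a sequence (Aₙ)_{n≥1} of Borel subsets of X such that: (i) X ⊇ A₁ ⊇ A₂ ⊇ ⋯; (ii) ⋂ₙ Aₙ = ∅; (iii) for every n, both Aₙ and X ∖ Aₙ intersect every T-orbit; (iv) for every n, every point x ∈ Aₙ returns to Aₙ, i.e. there is an integer k ≥ 1 with T^k x ∈ Aₙ; (v) for every n, Aₙ ∩ T^i(Aₙ) = ∅ for i = 1, …, n−1. -/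
open MeasureTheory Set

namespace MarkerAux

variable {X : Type*} [MeasurableSpace X]

/-- enumeration of the rationals -/
noncomputable def qq : ℕ → ℚ := fun n => (Encodable.decode (α := ℚ) n).getD 0

lemma qq_encode (q : ℚ) : qq (Encodable.encode q) = q := by
  simp [qq, Encodable.encodek]

/-- integer power of `T` as a function -/
def gz (T : X ≃ᵐ X) (i : ℤ) : X → X := ⇑(T.toEquiv ^ i)

lemma gz_add (T : X ≃ᵐ X) (i j : ℤ) (x : X) :
    gz T (i + j) x = gz T i (gz T j x) := by
  simp only [gz, zpow_add, Equiv.Perm.mul_apply]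

lemma gz_zero (T : X ≃ᵐ X) (x : X) : gz T 0 x = x := by simp [gz]

lemma gz_natCast (T : X ≃ᵐ X) (n : ℕ) : gz T (n : ℤ) = (⇑T)^[n] := by
  simp only [gz, zpow_natCast, ← Equiv.Perm.iterate_eq_pow]
  rfl

lemma measurable_gz (T : X ≃ᵐ X) (i : ℤ) : Measurable (gz T i) := by
  cases i with
  | ofNat n =>
      rw [Int.ofNat_eq_natCast, gz_natCast]
      exact T.measurable.iterate n
  | negSucc n =>
      have : gz T (Int.negSucc n) = (⇑T.symm)^[n+1] := by
        funext x
        simp only [gz, zpow_negSucc, ← inv_pow, ← Equiv.Perm.iterate_eq_pow,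
          Equiv.Perm.inv_def]
        rfl
      rw [this]
      exact T.symm.measurable.iterate (n+1)

section Aperiodic

variable {T : X ≃ᵐ X}
  (hT : ∀ x : X, ∀ n : ℕ, 1 ≤ n → (⇑T)^[n] x ≠ x)

include hT

lemma gz_ne (i : ℤ) (hi : i ≠ 0) (x : X) : gz T i x ≠ x := by
  rcases lt_trichotomy i 0 with h | h | h
  · intro hx
    have h2 : gz T (-i) x = x := by
      have := gz_add T (-i) i x
      rw [hx] at this
      simpa [gz_zero] using this.symm
    have hn : (0:ℤ) < -i := by omega
    obtain ⟨n, hn'⟩ : ∃ n : ℕ, -i = (n : ℤ) := ⟨(-i).toNat, by omega⟩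
    have h1n : 1 ≤ n := by omega
    rw [hn', gz_natCast] at h2
    exact hT x n h1n h2
  · exact absurd h hi
  · obtain ⟨n, hn'⟩ : ∃ n : ℕ, i = (n : ℤ) := ⟨i.toNat, by omega⟩
    have h1n : 1 ≤ n := by omega
    rw [hn', gz_natCast]
    exact hT x n h1n

lemma gz_ne_gz {i j : ℤ} (hij : i ≠ j) (x : X) : gz T i x ≠ gz T j x := by
  intro h
  have : gz T (i - j) (gz T j x) = gz T j x := by
    rw [← gz_add]
    simpa using h
  exact gz_ne hT (i - j) (by omega) (gz T j x) this

end Aperiodic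

/-- cut pattern of `f x` with respect to the first `N` rationals -/
noncomputable def patF (f : X → ℝ) (N : ℕ) (x : X) : Finset ℕ :=
  (Finset.range N).filter (fun k => f x < (qq k : ℝ))

lemma patF_eq_filter (f : X → ℝ) {N M : ℕ} (h : N ≤ M) (x : X) :
    patF f N x = (patF f M x).filter (· < N) := by
  ext k
  simp only [patF, Finset.mem_filter, Finset.mem_range]
  constructor
  · rintro ⟨h1, h2⟩; exact ⟨⟨by omega, h2⟩, h1⟩
  · rintro ⟨⟨h1, h2⟩, h3⟩; exact ⟨h3, h2⟩

/-- two points with distinct `f`-values get eventually distinguished -/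
lemma exists_patF_ne_lt (f : X → ℝ) {x y : X} (hlt : f x < f y) :
    ∃ K, ∀ M, K < M → patF f M x ≠ patF f M y := by
  obtain ⟨q, hq1, hq2⟩ := exists_rat_btwn hlt
  refine ⟨Encodable.encode q, fun M hM hpat => ?_⟩
  have hk : qq (Encodable.encode q) = q := qq_encode q
  have hmem : Encodable.encode q ∈ patF f M x := by
    rw [patF, Finset.mem_filter, Finset.mem_range]
    exact ⟨hM, by rw [hk]; exact hq1⟩
  have hnmem : Encodable.encode q ∉ patF f M y := by
    rw [patF, Finset.mem_filter]
    rintro ⟨-, h⟩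
    rw [hk] at h
    exact absurd h (not_lt.2 hq2.le)
  rw [hpat] at hmem
  exact hnmem hmem

lemma exists_patF_ne (f : X → ℝ) {x y : X} (h : f x ≠ f y) :
    ∃ K, ∀ M, K < M → patF f M x ≠ patF f M y := by
  rcases h.lt_or_gt with hlt | hlt
  · exact exists_patF_ne_lt f hlt
  · obtain ⟨K, hK⟩ := exists_patF_ne_lt f hlt
    exact ⟨K, fun M hM h' => hK M hM h'.symm⟩

/-- the set of points whose radius-`r` neighbours are distinguished at precision `N` -/
def distSet (T : X ≃ᵐ X) (f : X → ℝ) (r N : ℕ) : Set X :=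
  {x | ∀ i : ℤ, i ≠ 0 → |i| ≤ (r : ℤ) → patF f N (gz T i x) ≠ patF f N x}

lemma exists_mem_distSet {T : X ≃ᵐ X} {f : X → ℝ}
    (hf : Function.Injective f)
    (hT : ∀ x : X, ∀ n : ℕ, 1 ≤ n → (⇑T)^[n] x ≠ x) (r : ℕ) (x : X) :
    ∃ N, x ∈ distSet T f r N := by
  classical
  set I : Finset ℤ := (Finset.Icc (-(r:ℤ)) r).erase 0 with hI
  have hwit : ∀ i : ℤ, i ≠ 0 → ∃ K, ∀ M, K < M → patF f M (gz T i x) ≠ patF f M x := by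
    intro i hi
    have hne : gz T i x ≠ x := gz_ne hT i hi x
    exact exists_patF_ne f (fun h => hne (hf h))
  set K : ℤ → ℕ := fun i => if h : i ≠ 0 then (hwit i h).choose else 0 with hK
  refine ⟨(I.sup K) + 1, ?_⟩
  intro i hi hir
  have hiI : i ∈ I := by
    simp [hI, Finset.mem_erase, Finset.mem_Icc, hi, abs_le.1 hir]
  have hKi : K i ≤ I.sup K := Finset.le_sup hiI
  have : K i = (hwit i hi).choose := by simp [hK, hi]
  exact (hwit i hi).choose_spec (I.sup K + 1) (by omega)

/-- eligibility at code `m` -/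
def elig (T : X ≃ᵐ X) (f : X → ℝ) (r m : ℕ) : Set X :=
  {x | ∃ N, Encodable.encode (N, patF f N x) = m ∧ x ∈ distSet T f r N}

/-- greedy stages of the maximal `r`-discrete subset of `P` -/
def gstage (T : X ≃ᵐ X) (f : X → ℝ) (P : Set X) (r : ℕ) : ℕ → Set X
  | 0 => ∅
  | m + 1 => gstage T f P r m ∪
      {x | x ∈ P ∧ x ∈ elig T f r m ∧
        ∀ i : ℤ, i ≠ 0 → |i| ≤ (r : ℤ) → gz T i x ∉ gstage T f P r m}

/-- the maximal `r`-discrete subset of `P` -/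
def msec (T : X ≃ᵐ X) (f : X → ℝ) (P : Set X) (r : ℕ) : Set X :=
  ⋃ m, gstage T f P r m

lemma gstage_mono (T : X ≃ᵐ X) (f : X → ℝ) (P : Set X) (r : ℕ) {m m' : ℕ}
    (h : m ≤ m') : gstage T f P r m ⊆ gstage T f P r m' := by
  induction m' with
  | zero => simp_all
  | succ k ih =>
      rcases Nat.eq_or_lt_of_le h with rfl | h'
      · exact le_rfl
      · exact (ih (by omega)).trans (subset_union_left)

lemma gstage_subset (T : X ≃ᵐ X) (f : X → ℝ) (P : Set X) (r : ℕ) (m : ℕ) :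
    gstage T f P r m ⊆ P := by
  induction m with
  | zero => simp [gstage]
  | succ k ih =>
      rintro x (hx | hx)
      · exact ih hx
      · exact hx.1

lemma msec_subset (T : X ≃ᵐ X) (f : X → ℝ) (P : Set X) (r : ℕ) :
    msec T f P r ⊆ P :=
  iUnion_subset fun m => gstage_subset T f P r m

lemma exists_addedAt {T : X ≃ᵐ X} {f : X → ℝ} {P : Set X} {r : ℕ} {x : X}
    (hx : x ∈ msec T f P r) :
    ∃ m, x ∈ gstage T f P r (m + 1) ∧ x ∉ gstage T f P r m := by
  obtain ⟨m0, hm0⟩ := mem_iUnion.1 hx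
  have hne : ∃ m, x ∈ gstage T f P r m := ⟨m0, hm0⟩
  classical
  have hmem : x ∈ gstage T f P r (Nat.find hne) := Nat.find_spec hne
  have hpos : Nat.find hne ≠ 0 := by
    intro h
    rw [h] at hmem
    simp [gstage] at hmem
  obtain ⟨m, hm⟩ := Nat.exists_eq_succ_of_ne_zero hpos
  rw [hm] at hmem
  refine ⟨m, hmem, Nat.find_min hne (by omega)⟩

lemma msec_discrete {T : X ≃ᵐ X} {f : X → ℝ} {P : Set X} {r : ℕ} {x : X}
    (hx : x ∈ msec T f P r) {i : ℤ} (hi : i ≠ 0) (hir : |i| ≤ (r : ℤ)) :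
    gz T i x ∉ msec T f P r := by
  intro hy
  obtain ⟨a, hxa, hxa'⟩ := exists_addedAt hx
  obtain ⟨b, hyb, hyb'⟩ := exists_addedAt hy
  have hxadd : x ∈ P ∧ x ∈ elig T f r a ∧
      ∀ j : ℤ, j ≠ 0 → |j| ≤ (r : ℤ) → gz T j x ∉ gstage T f P r a := by
    rcases hxa with h | h
    · exact absurd h hxa'
    · exact h
  have hyadd : gz T i x ∈ P ∧ gz T i x ∈ elig T f r b ∧
      ∀ j : ℤ, j ≠ 0 → |j| ≤ (r : ℤ) → gz T j (gz T i x) ∉ gstage T f P r b := by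
    rcases hyb with h | h
    · exact absurd h hyb'
    · exact h
  rcases lt_trichotomy a b with hab | rfl | hab
  · -- x was added earlier; contradiction with y's neighbour condition
    have hxb : x ∈ gstage T f P r b := gstage_mono T f P r (by omega) hxa
    have : gz T (-i) (gz T i x) ∉ gstage T f P r b :=
      hyadd.2.2 (-i) (by omega) (by simpa [abs_neg] using hir)
    rw [← gz_add] at this
    simp [gz_zero] at this
    exact this hxb
  · -- same stage: the codes agree, contradicting the distinguishing property
    obtain ⟨N, hNx, hNd⟩ := hxadd.2.1
    obtain ⟨N', hNy, _⟩ := hyadd.2.1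
    rw [← hNx] at hNy
    have := Encodable.encode_injective hNy
    obtain ⟨rfl, hpat⟩ : N' = N ∧ patF f N' (gz T i x) = patF f N x := by
      have h1 := congrArg Prod.fst this
      have h2 := congrArg Prod.snd this
      simp at h1 h2
      exact ⟨h1, by rw [h1] at h2 ⊢; exact h2⟩
    exact hNd i hi hir hpat
  · have hya : gz T i x ∈ gstage T f P r a := gstage_mono T f P r (by omega) hyb
    exact hxadd.2.2 i hi hir hya

lemma msec_maximal {T : X ≃ᵐ X} {f : X → ℝ}
    (hf : Function.Injective f)
    (hT : ∀ x : X, ∀ n : ℕ, 1 ≤ n → (⇑T)^[n] x ≠ x)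
    {P : Set X} {r : ℕ} {x : X} (hxP : x ∈ P) (hx : x ∉ msec T f P r) :
    ∃ i : ℤ, i ≠ 0 ∧ |i| ≤ (r : ℤ) ∧ gz T i x ∈ msec T f P r := by
  obtain ⟨N, hN⟩ := exists_mem_distSet hf hT r x
  set m := Encodable.encode (N, patF f N x) with hm
  have hnot : x ∉ gstage T f P r (m + 1) :=
    fun h => hx (mem_iUnion.2 ⟨m + 1, h⟩)
  simp only [gstage, mem_union, mem_setOf_eq, not_or, not_and] at hnot
  obtain ⟨h1, h2⟩ := hnot
  by_contra hcon
  push_neg at hcon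
  refine h2 hxP ⟨N, rfl, hN⟩ ?_
  intro i hi hir hmem
  exact hcon i hi hir (mem_iUnion.2 ⟨m, hmem⟩)

section Meas

variable {T : X ≃ᵐ X} {f : X → ℝ} (hfm : Measurable f)

include hfm

lemma meas_patF_eq (N : ℕ) (s : Finset ℕ) :
    MeasurableSet {x : X | patF f N x = s} := by
  have h : {x : X | patF f N x = s} = ⋂ k : ℕ, {x : X | k ∈ patF f N x ↔ k ∈ s} := by
    ext x
    simp [Finset.ext_iff]
  rw [h]
  refine MeasurableSet.iInter fun k => ?_
  by_cases hks : k ∈ s <;> by_cases hkN : k < N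
  · have h2 : {x : X | k ∈ patF f N x ↔ k ∈ s} = {x | f x < (qq k : ℝ)} := by
      ext x; simp [patF, hks, hkN]
    rw [h2]; exact measurableSet_lt hfm measurable_const
  · have h2 : {x : X | k ∈ patF f N x ↔ k ∈ s} = ∅ := by
      ext x; simp [patF, hks, hkN]
    rw [h2]; exact MeasurableSet.empty
  · have h2 : {x : X | k ∈ patF f N x ↔ k ∈ s} = {x | ¬ f x < (qq k : ℝ)} := by
      ext x; simp [patF, hks, hkN]
    rw [h2]; exact (measurableSet_lt hfm measurable_const).compl
  · have h2 : {x : X | k ∈ patF f N x ↔ k ∈ s} = univ := by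
      ext x; simp [patF, hks, hkN]
    rw [h2]; exact MeasurableSet.univ

lemma meas_patF_pair (i : ℤ) (N : ℕ) :
    MeasurableSet {x : X | patF f N (gz T i x) = patF f N x} := by
  have h : {x : X | patF f N (gz T i x) = patF f N x}
      = ⋃ s : Finset ℕ, (gz T i ⁻¹' {x | patF f N x = s} ∩ {x | patF f N x = s}) := by
    ext x
    simp only [mem_setOf_eq, mem_iUnion, mem_inter_iff, mem_preimage]
    constructor
    · intro h'; exact ⟨patF f N x, h', rfl⟩
    · rintro ⟨s, h1, h2⟩; rw [h1, h2]
  rw [h]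
  exact MeasurableSet.iUnion fun s =>
    ((measurable_gz T i (meas_patF_eq hfm N s)).inter (meas_patF_eq hfm N s))

lemma meas_distSet (r N : ℕ) : MeasurableSet (distSet T f r N) := by
  have h : distSet T f r N = ⋂ i : ℤ,
      {x : X | i ≠ 0 → |i| ≤ (r : ℤ) → patF f N (gz T i x) ≠ patF f N x} := by
    ext x; simp [distSet]
  rw [h]
  refine MeasurableSet.iInter fun i => ?_
  by_cases hc : i ≠ 0 ∧ |i| ≤ (r : ℤ)
  · have h2 : {x : X | i ≠ 0 → |i| ≤ (r : ℤ) → patF f N (gz T i x) ≠ patF f N x}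
        = {x : X | patF f N (gz T i x) = patF f N x}ᶜ := by
      ext x; simp [hc.1, hc.2]
    rw [h2]; exact (meas_patF_pair hfm i N).compl
  · have h2 : {x : X | i ≠ 0 → |i| ≤ (r : ℤ) → patF f N (gz T i x) ≠ patF f N x} = univ := by
      ext x
      simp only [mem_setOf_eq, mem_univ, iff_true]
      intro h1 h2
      exact absurd ⟨h1, h2⟩ hc
    rw [h2]; exact MeasurableSet.univ

lemma meas_elig (r m : ℕ) : MeasurableSet (elig T f r m) := by
  have h : elig T f r m = ⋃ N, ⋃ s : Finset ℕ, ⋃ (_ : Encodable.encode (N, s) = m),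
      ({x : X | patF f N x = s} ∩ distSet T f r N) := by
    ext x
    simp only [elig, mem_setOf_eq, mem_iUnion, mem_inter_iff]
    constructor
    · rintro ⟨N, hN, hd⟩; exact ⟨N, patF f N x, hN, rfl, hd⟩
    · rintro ⟨N, s, he, hs, hd⟩; exact ⟨N, by rw [hs]; exact he, hd⟩
  rw [h]
  exact MeasurableSet.iUnion fun N => MeasurableSet.iUnion fun s =>
    MeasurableSet.iUnion fun _ => (meas_patF_eq hfm N s).inter (meas_distSet hfm r N)

lemma meas_gstage {P : Set X} (hP : MeasurableSet P) (r : ℕ) (m : ℕ) :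
    MeasurableSet (gstage T f P r m) := by
  induction m with
  | zero => exact MeasurableSet.empty
  | succ k ih =>
      refine ih.union ?_
      have h : {x : X | x ∈ P ∧ x ∈ elig T f r k ∧
          ∀ i : ℤ, i ≠ 0 → |i| ≤ (r : ℤ) → gz T i x ∉ gstage T f P r k}
          = (P ∩ elig T f r k) ∩
            ⋂ i : ℤ, {x : X | i ≠ 0 → |i| ≤ (r : ℤ) → gz T i x ∉ gstage T f P r k} := by
        ext x
        simp only [mem_setOf_eq, mem_inter_iff, mem_iInter]
        tauto
      rw [show ({x | x ∈ P ∧ x ∈ elig T f r k ∧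
          ∀ i : ℤ, i ≠ 0 → |i| ≤ (r : ℤ) → gz T i x ∉ gstage T f P r k} : Set X) =
          (P ∩ elig T f r k) ∩
            ⋂ i : ℤ, {x : X | i ≠ 0 → |i| ≤ (r : ℤ) → gz T i x ∉ gstage T f P r k} from h]
      refine (hP.inter (meas_elig hfm r k)).inter (MeasurableSet.iInter fun i => ?_)
      by_cases hc : i ≠ 0 ∧ |i| ≤ (r : ℤ)
      · have h2 : {x : X | i ≠ 0 → |i| ≤ (r : ℤ) → gz T i x ∉ gstage T f P r k}
            = (gz T i ⁻¹' gstage T f P r k)ᶜ := by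
          ext x; simp [hc.1, hc.2]
        rw [h2]; exact (measurable_gz T i ih).compl
      · have h2 : {x : X | i ≠ 0 → |i| ≤ (r : ℤ) → gz T i x ∉ gstage T f P r k} = univ := by
          ext x
          simp only [mem_setOf_eq, mem_univ, iff_true]
          intro h1 h2
          exact absurd ⟨h1, h2⟩ hc
        rw [h2]; exact MeasurableSet.univ

lemma meas_msec {P : Set X} (hP : MeasurableSet P) (r : ℕ) :
    MeasurableSet (msec T f P r) :=
  MeasurableSet.iUnion fun m => meas_gstage hfm hP r m

end Meas

/-- the nested sequence of maximal discrete sections -/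
def dseq (T : X ≃ᵐ X) (f : X → ℝ) : ℕ → Set X
  | 0 => univ
  | k + 1 => msec T f (dseq T f k) (k + 1)

lemma dseq_succ (T : X ≃ᵐ X) (f : X → ℝ) (k : ℕ) :
    dseq T f (k + 1) = msec T f (dseq T f k) (k + 1) := rfl

lemma meas_dseq {T : X ≃ᵐ X} {f : X → ℝ} (hfm : Measurable f) (k : ℕ) :
    MeasurableSet (dseq T f k) := by
  induction k with
  | zero => exact MeasurableSet.univ
  | succ k ih => exact meas_msec hfm ih (k + 1)

lemma dseq_antitone (T : X ≃ᵐ X) (f : X → ℝ) {k k' : ℕ} (h : k ≤ k') :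
    dseq T f k' ⊆ dseq T f k := by
  induction k' with
  | zero => simp_all
  | succ a ih =>
      rcases Nat.eq_or_lt_of_le h with rfl | h'
      · exact le_rfl
      · exact (msec_subset T f (dseq T f a) (a + 1)).trans (ih (by omega))

lemma dseq_discrete {T : X ≃ᵐ X} {f : X → ℝ} (k : ℕ) {x : X}
    (hx : x ∈ dseq T f (k + 1)) {i : ℤ} (hi : i ≠ 0)
    (hir : |i| ≤ ((k + 1 : ℕ) : ℤ)) : gz T i x ∉ dseq T f (k + 1) :=
  msec_discrete hx hi hir

lemma dseq_unbounded {T : X ≃ᵐ X} {f : X → ℝ}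
    (hf : Function.Injective f)
    (hT : ∀ x : X, ∀ n : ℕ, 1 ≤ n → (⇑T)^[n] x ≠ x) (k : ℕ) (x : X) (m : ℤ) :
    (∃ j : ℤ, m ≤ j ∧ gz T j x ∈ dseq T f k) ∧
    (∃ j : ℤ, j ≤ m ∧ gz T j x ∈ dseq T f k) := by
  induction k generalizing m with
  | zero => exact ⟨⟨m, le_rfl, mem_univ _⟩, ⟨m, le_rfl, mem_univ _⟩⟩
  | succ k ih =>
      constructor
      · obtain ⟨j, hj, hmem⟩ := (ih (m + (k + 1))).1
        by_cases hin : gz T j x ∈ dseq T f (k + 1)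
        · exact ⟨j, by omega, hin⟩
        · obtain ⟨i, hi0, hir, hmem'⟩ := msec_maximal hf hT hmem hin
          refine ⟨i + j, ?_, ?_⟩
          · have h1 := (abs_le.1 hir).1
            push_cast at h1
            omega
          · rw [gz_add]; exact hmem'
      · obtain ⟨j, hj, hmem⟩ := (ih (m - (k + 1))).2
        by_cases hin : gz T j x ∈ dseq T f (k + 1)
        · exact ⟨j, by omega, hin⟩
        · obtain ⟨i, hi0, hir, hmem'⟩ := msec_maximal hf hT hmem hin
          refine ⟨i + j, ?_, ?_⟩
          · have h1 := (abs_le.1 hir).2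
            push_cast at h1
            omega
          · rw [gz_add]; exact hmem'

end MarkerAux

open MarkerAux in
/-- **Vanishing sequence of markers.** Let `T` be an aperiodic Borel automorphism of a
standard Borel space `X`. Then there is a decreasing sequence `(Aₙ)` of Borel sets with
empty intersection such that each `Aₙ` and its complement meet every `T`-orbit, every
point of `Aₙ` returns to `Aₙ`, and `Aₙ ∩ Tⁱ(Aₙ) = ∅` for `i = 1, …, n-1`. -/
theorem stmt_1 {X : Type*} [MeasurableSpace X] [StandardBorelSpace X]
    (T : X ≃ᵐ X)
    (hT : ∀ x : X, ∀ n : ℕ, 1 ≤ n → (T : X → X)^[n] x ≠ x) :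
    ∃ A : ℕ → Set X,
      (∀ n, MeasurableSet (A n)) ∧
      (∀ n, A (n + 1) ⊆ A n) ∧
      (⋂ n, A n) = ∅ ∧
      (∀ n, ∀ x : X, ∃ k : ℤ, (T.toEquiv ^ k) x ∈ A n) ∧
      (∀ n, ∀ x : X, ∃ k : ℤ, (T.toEquiv ^ k) x ∉ A n) ∧
      (∀ n, ∀ x ∈ A n, ∃ k : ℕ, 1 ≤ k ∧ (T : X → X)^[k] x ∈ A n) ∧
      (∀ n, ∀ i : ℕ, 1 ≤ i → i < n → Disjoint (A n) ((T : X → X)^[i] '' A n)) := by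
  classical
  obtain ⟨f, hf⟩ := exists_measurableEmbedding_real X
  set B : Set X := ⋂ k, dseq T f k with hB
  set r : ℕ → ℕ := fun n => max (n - 1) 1 with hr
  have hr1 : ∀ n, 1 ≤ r n := fun n => le_max_right _ _
  -- B meets each orbit in at most one point
  have Bsmall : ∀ y : X, y ∈ B → ∀ i : ℤ, i ≠ 0 → gz T i y ∉ B := by
    intro y hy i hi hzy
    obtain ⟨k', hk'⟩ : ∃ k', i.natAbs = k' + 1 := ⟨i.natAbs - 1, by omega⟩
    have h1 : y ∈ dseq T f (k' + 1) := by
      rw [hB] at hy; exact Set.mem_iInter.1 hy (k' + 1)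
    have h2 : gz T i y ∈ dseq T f (k' + 1) := by
      rw [hB] at hzy; exact Set.mem_iInter.1 hzy (k' + 1)
    exact dseq_discrete k' h1 hi (by rw [Int.abs_eq_natAbs, hk']) h2
  -- each level set (minus B) is unbounded in both directions along every orbit
  have key : ∀ (ρ : ℕ) (x : X) (m : ℤ),
      ∃ j : ℤ, m ≤ j ∧ gz T j x ∈ dseq T f ρ \ B := by
    intro ρ x m
    obtain ⟨j1, hj1, hm1⟩ := (dseq_unbounded hf.injective hT ρ x m).1
    by_cases hB1 : gz T j1 x ∈ B
    · obtain ⟨j2, hj2, hm2⟩ := (dseq_unbounded hf.injective hT ρ x (j1 + 1)).1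
      refine ⟨j2, by omega, hm2, fun hB2 => ?_⟩
      have heq : gz T (j2 - j1) (gz T j1 x) = gz T j2 x := by
        rw [← gz_add]; norm_num
      exact Bsmall (gz T j1 x) hB1 (j2 - j1) (by omega) (heq ▸ hB2)
    · exact ⟨j1, hj1, hm1, hB1⟩
  refine ⟨fun n => dseq T f (r n) \ B, ?_, ?_, ?_, ?_, ?_, ?_, ?_⟩
  · intro n
    exact (meas_dseq hf.measurable (r n)).diff
      (MeasurableSet.iInter fun k => meas_dseq hf.measurable k)
  · intro n
    exact Set.diff_subset_diff_left
      (dseq_antitone T f (by simp [hr]; omega))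
  · apply Set.eq_empty_iff_forall_notMem.2
    intro x hx
    have hxB : x ∈ B := by
      rw [hB]
      refine Set.mem_iInter.2 fun k => ?_
      have h1 := Set.mem_iInter.1 hx (k + 2)
      have h2 : k ≤ r (k + 2) := by simp [hr]
      exact dseq_antitone T f h2 h1.1
    exact (Set.mem_iInter.1 hx 0).2 hxB
  · intro n x
    obtain ⟨j, _, hj⟩ := key (r n) x 0
    exact ⟨j, hj⟩
  · intro n x
    obtain ⟨j, _, hm⟩ := (dseq_unbounded hf.injective hT 1 x 0).1
    refine ⟨j + 1, fun hmem => ?_⟩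
    have h1 : gz T (j + 1) x ∈ dseq T f 1 :=
      dseq_antitone T f (hr1 n) hmem.1
    have h2 : gz T 1 (gz T j x) ∈ dseq T f 1 := by
      rw [← gz_add]; rw [show (1 : ℤ) + j = j + 1 by ring]; exact h1
    exact dseq_discrete 0 hm one_ne_zero (by norm_num) h2
  · intro n x hx
    obtain ⟨j, hj1, hj2⟩ := key (r n) x 1
    refine ⟨j.toNat, by omega, ?_⟩
    have hcast : ((j.toNat : ℤ)) = j := by omega
    have := congrFun (gz_natCast T j.toNat) x
    rw [hcast] at this
    rw [← this]
    exact hj2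
  · intro n i hi1 hin
    rw [Set.disjoint_left]
    rintro y hy ⟨z, hz, rfl⟩
    have hzi : gz T (i : ℤ) z ∈ dseq T f (r n) := by
      rw [congrFun (gz_natCast T i) z]
      exact hy.1
    obtain ⟨k', hk'⟩ : ∃ k', r n = k' + 1 := ⟨r n - 1, by have := hr1 n; omega⟩
    have hrn : (i : ℤ).natAbs ≤ r n := by
      rw [Int.natAbs_natCast]
      simp only [hr]
      exact le_trans (by omega : i ≤ n - 1) (le_max_left _ _)
    refine dseq_discrete k' (hk' ▸ hz.1) (i := (i : ℤ)) (by omega) ?_ (hk' ▸ hzi)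
    rw [Int.abs_eq_natAbs, ← hk']
    exact_mod_cast hrn
end

section
/- Let T be an aperiodic Borel automorphism of a standard Borel space (X, 𝓑). Then there exists a sequence (Pₙ) of Borel automorphisms of X such that: each Pₙ is pointwise periodic (for every x ∈ X there is an integer k ≥ 1 with Pₙ^k x = x); each Pₙ belongs to the full group of T (Pₙ x ∈ {T^m x : m ∈ ℤ} for every x ∈ X); and Pₙ converges to T in the uniform topology in the pointwise-eventual sense: for every x ∈ X there exists N ∈ ℕ such that Pₙ x = T x for all n ≥ N. -/
open MeasureTheory

namespace Stmt2Aux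
variable {X : Type*} [MeasurableSpace X]

noncomputable def Zp (T : X ≃ᵐ X) (k : ℤ) (x : X) : X := (T.toEquiv ^ k) x

variable (T : X ≃ᵐ X)

lemma zp_add (a b : ℤ) (x : X) : Zp T (a + b) x = Zp T a (Zp T b x) := by
  simp [Zp, zpow_add, Equiv.Perm.mul_apply]

lemma zp_zero (x : X) : Zp T 0 x = x := by simp [Zp]

lemma zp_one (x : X) : Zp T 1 x = T x := by simp [Zp]

lemma zp_neg_one (x : X) : Zp T (-1) x = T.symm x := by
  simp [Zp, zpow_neg, Equiv.Perm.inv_def]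

lemma zp_natCast (n : ℕ) (x : X) : Zp T (n : ℤ) x = (⇑T)^[n] x := by
  induction n with
  | zero => simp [zp_zero]
  | succ m ih =>
    have : ((m+1 : ℕ) : ℤ) = 1 + (m : ℤ) := by push_cast; ring
    rw [this, zp_add, ih, zp_one, Function.iterate_succ_apply']

lemma zp_negNat (n : ℕ) (x : X) : Zp T (-(n : ℤ)) x = (⇑T.symm)^[n] x := by
  induction n with
  | zero => simp [zp_zero]
  | succ m ih =>
    have : (-((m+1 : ℕ) : ℤ)) = (-1) + (-(m : ℤ)) := by push_cast; ring
    rw [this, zp_add, ih, zp_neg_one, Function.iterate_succ_apply']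

lemma zp_inj (k : ℤ) {x y : X} (h : Zp T k x = Zp T k y) : x = y :=
  (T.toEquiv ^ k).injective h

lemma zp_meas (k : ℤ) : Measurable (Zp T k) := by
  cases k with
  | ofNat n =>
      have : Zp T (Int.ofNat n) = (⇑T)^[n] := by
        funext x; exact zp_natCast T n x
      rw [this]; exact T.measurable.iterate n
  | negSucc n =>
      have : Zp T (Int.negSucc n) = (⇑T.symm)^[n+1] := by
        funext x
        have : (Int.negSucc n) = -((n+1 : ℕ) : ℤ) := by
          simp [Int.negSucc_eq]
        rw [this]; exact zp_negNat T (n+1) x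
      rw [this]; exact T.symm.measurable.iterate (n+1)

lemma zp_fix (hT : ∀ x : X, ∀ n : ℕ, 1 ≤ n → (⇑T)^[n] x ≠ x)
    {k : ℤ} {x : X} (h : Zp T k x = x) : k = 0 := by
  rcases lt_trichotomy k 0 with hk | hk | hk
  · exfalso
    have h2 : Zp T (-k) (Zp T k x) = Zp T (-k) x := by rw [h]
    rw [← zp_add, neg_add_cancel, zp_zero] at h2
    have hn : (-k) = ((((-k).toNat) : ℕ) : ℤ) := by omega
    rw [hn, zp_natCast] at h2
    exact hT x (-k).toNat (by omega) h2.symm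
  · exact hk
  · exfalso
    have hn : k = (((k.toNat) : ℕ) : ℤ) := by omega
    rw [hn, zp_natCast] at h
    exact hT x k.toNat (by omega) h


section Markers
variable (f : X → ℝ) (e : ℕ → ℚ)

/-- the `n`-th rational, used as separating family -/
noncomputable def qq (n : ℕ) : ℝ := ((e n : ℚ) : ℝ)

open Classical in
/-- lexicographic rank of the first `n` bits of `x` -/
noncomputable def vv (n : ℕ) (x : X) : ℕ :=
  ∑ i ∈ Finset.range n, if f x < qq e i then 2 ^ (n - 1 - i) else 0

lemma vv_succ (n : ℕ) (x : X) :
    vv f e (n+1) x = 2 * vv f e n x + (if f x < qq e n then 1 else 0) := by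
  classical
  unfold vv
  rw [Finset.sum_range_succ, Finset.mul_sum]
  congr 1
  · apply Finset.sum_congr rfl
    intro i hi
    have hi' : i < n := Finset.mem_range.mp hi
    have : (n + 1 - 1 - i) = (n - 1 - i) + 1 := by omega
    rw [this]
    by_cases h : f x < qq e i <;> simp [h, pow_succ, mul_comm]
  · simp

lemma vv_step {n : ℕ} {x y : X} (h : vv f e (n+1) x ≤ vv f e (n+1) y) :
    vv f e n x ≤ vv f e n y := by
  by_contra hc
  push_neg at hc
  rw [vv_succ, vv_succ] at h
  have h1 : (if f x < qq e n then 1 else 0) ≤ 1 := by split <;> omega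
  have h2 : (if f y < qq e n then 1 else 0) ≤ 1 := by split <;> omega
  omega

lemma vv_inj (he : Function.Surjective e) (hf : Function.Injective f) {x y : X}
    (h : ∀ n, vv f e n x = vv f e n y) : x = y := by
  by_contra hne
  have hfne : f x ≠ f y := fun hc => hne (hf hc)
  have hbits : ∀ n, (f x < qq e n ↔ f y < qq e n) := by
    intro n
    have h1 := h n
    have h2 := h (n+1)
    rw [vv_succ, vv_succ, h1] at h2
    by_cases hx : f x < qq e n <;> by_cases hy : f y < qq e n <;>
      simp [hx, hy] at h2 ⊢ <;> omega
  rcases lt_or_gt_of_ne hfne with hlt | hlt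
  · rcases exists_rat_btwn hlt with ⟨q, hq1, hq2⟩
    obtain ⟨n, hn⟩ := he q
    have hqn : qq e n = (q : ℝ) := by rw [qq, hn]
    have := hbits n
    rw [hqn] at this
    exact absurd (this.mp hq1) (not_lt.mpr hq2.le)
  · rcases exists_rat_btwn hlt with ⟨q, hq1, hq2⟩
    obtain ⟨n, hn⟩ := he q
    have hqn : qq e n = (q : ℝ) := by rw [qq, hn]
    have := hbits n
    rw [hqn] at this
    exact absurd (this.mpr hq1) (not_lt.mpr hq2.le)

lemma vv_meas (hf : Measurable f) (n : ℕ) : Measurable (vv f e n) := by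
  classical
  apply Finset.measurable_sum
  intro i _
  exact Measurable.ite (measurableSet_lt hf measurable_const)
    measurable_const measurable_const

/-- `x` has minimal level-`n` rank within its orbit -/
def Sn (n : ℕ) (x : X) : Prop := ∀ j : ℤ, vv f e n x ≤ vv f e n (Zp T j x)

lemma sn_exists (n : ℕ) (x : X) : ∃ j : ℤ, Sn T f e n (Zp T j x) := by
  set V : Set ℕ := {m | ∃ j : ℤ, vv f e n (Zp T j x) = m} with hV
  have hne : V.Nonempty := ⟨vv f e n (Zp T 0 x), ⟨0, rfl⟩⟩
  obtain ⟨j, hj⟩ := Nat.sInf_mem hne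
  refine ⟨j, fun i => ?_⟩
  rw [hj]
  exact Nat.sInf_le ⟨i + j, by rw [zp_add]⟩

lemma sn_antitone {m n : ℕ} (hmn : m ≤ n) {x : X} (h : Sn T f e n x) : Sn T f e m x := by
  induction n with
  | zero => exact (Nat.le_zero.mp hmn) ▸ h
  | succ k ih =>
    rcases Nat.lt_or_ge m (k+1) with hlt | hge
    · exact ih (by omega) (fun j => vv_step f e (h j))
    · exact (by omega : m = k + 1) ▸ h

/-- `x` is the global minimum of its orbit at every level -/
def ZZ (x : X) : Prop := ∀ n, Sn T f e n x

lemma zz_unique (hT : ∀ x : X, ∀ n : ℕ, 1 ≤ n → (⇑T)^[n] x ≠ x)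
    (he : Function.Surjective e) (hf : Function.Injective f) {x : X} {j : ℤ}
    (h1 : ZZ T f e x) (h2 : ZZ T f e (Zp T j x)) : j = 0 := by
  have hveq : ∀ n, vv f e n x = vv f e n (Zp T j x) := by
    intro n
    have ha := h1 n j
    have hb := h2 n (-j)
    rw [← zp_add, neg_add_cancel, zp_zero] at hb
    omega
  have : x = Zp T j x := vv_inj f e he hf hveq
  exact zp_fix T hT this.symm

def lastv (n : ℕ) (x : X) : Prop := Sn T f e n x ∧ ∀ k : ℤ, 0 < k → ¬ Sn T f e n (Zp T k x)

def firstv (n : ℕ) (x : X) : Prop := Sn T f e n x ∧ ∀ k : ℤ, k < 0 → ¬ Sn T f e n (Zp T k x)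

def Dn (n : ℕ) (x : X) : Prop := ∃ j : ℤ, lastv T f e n (Zp T j x) ∨ firstv T f e n (Zp T j x)

def DD (x : X) : Prop := ∃ n, Dn T f e n x

lemma lastv_unique {n : ℕ} {x : X} {a b : ℤ}
    (ha : lastv T f e n (Zp T a x)) (hb : lastv T f e n (Zp T b x)) : a = b := by
  by_contra hne
  rcases lt_or_gt_of_ne hne with hlt | hlt
  · exact ha.2 (b - a) (by omega) (by rw [← zp_add]; ring_nf; exact hb.1)
  · exact hb.2 (a - b) (by omega) (by rw [← zp_add]; ring_nf; exact ha.1)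

lemma firstv_unique {n : ℕ} {x : X} {a b : ℤ}
    (ha : firstv T f e n (Zp T a x)) (hb : firstv T f e n (Zp T b x)) : a = b := by
  by_contra hne
  rcases lt_or_gt_of_ne hne with hlt | hlt
  · exact hb.2 (a - b) (by omega) (by rw [← zp_add]; ring_nf; exact ha.1)
  · exact ha.2 (b - a) (by omega) (by rw [← zp_add]; ring_nf; exact hb.1)

lemma dn_shift {n : ℕ} {x : X} (t : ℤ) : Dn T f e n (Zp T t x) ↔ Dn T f e n x := by
  constructor
  · rintro ⟨j, hj⟩
    exact ⟨j + t, by rwa [zp_add]⟩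
  · rintro ⟨j, hj⟩
    exact ⟨j - t, by rw [← zp_add]; ring_nf; exact hj⟩

lemma dd_shift {x : X} (t : ℤ) : DD T f e (Zp T t x) ↔ DD T f e x := by
  unfold DD; exact exists_congr fun n => dn_shift T f e t

/-- basepoint predicate: `Zp T j x` is the canonical basepoint at level `n0` -/
def bP (n0 : ℕ) (x : X) (j : ℤ) : Prop :=
  lastv T f e n0 (Zp T j x) ∨
    ((∀ i : ℤ, ¬ lastv T f e n0 (Zp T i x)) ∧ firstv T f e n0 (Zp T j x))

lemma bp_unique {n0 : ℕ} {x : X} {a b : ℤ}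
    (ha : bP T f e n0 x a) (hb : bP T f e n0 x b) : a = b := by
  rcases ha with ha | ⟨hno, ha⟩
  · rcases hb with hb | ⟨hno, hb⟩
    · exact lastv_unique T f e ha hb
    · exact absurd ha (hno a)
  · rcases hb with hb | ⟨_, hb⟩
    · exact absurd hb (hno b)
    · exact firstv_unique T f e ha hb

lemma bp_exists {n0 : ℕ} {x : X} (h : Dn T f e n0 x) : ∃ j, bP T f e n0 x j := by
  by_cases hl : ∃ i, lastv T f e n0 (Zp T i x)
  · obtain ⟨i, hi⟩ := hl
    exact ⟨i, Or.inl hi⟩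
  · push_neg at hl
    obtain ⟨j, hj⟩ := h
    rcases hj with hj | hj
    · exact absurd hj (hl j)
    · exact ⟨j, Or.inr ⟨hl, hj⟩⟩

lemma bp_shift {n0 : ℕ} {x : X} {t j : ℤ} :
    bP T f e n0 (Zp T t x) j ↔ bP T f e n0 x (j + t) := by
  unfold bP
  rw [← zp_add]
  constructor
  · rintro (h | ⟨hno, h⟩)
    · exact Or.inl h
    · refine Or.inr ⟨fun i => ?_, h⟩
      have := hno (i - t)
      rw [← zp_add] at this
      simpa using this
  · rintro (h | ⟨hno, h⟩)
    · exact Or.inl h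
    · refine Or.inr ⟨fun i => ?_, h⟩
      have := hno (i + t)
      rw [zp_add] at this
      exact this

def leastD (x : X) (n0 : ℕ) : Prop := Dn T f e n0 x ∧ ∀ m < n0, ¬ Dn T f e m x

/-- the cut set at stage `n` -/
def CC (n : ℕ) (x : X) : Prop :=
  (∃ n0, leastD T f e x n0 ∧
    ∃ j : ℤ, bP T f e n0 x j ∧ (-j) % ((n : ℤ) + 1) = ((n : ℤ) + 1) / 2)
  ∨ (¬ DD T f e x ∧ Sn T f e n x ∧ ¬ ZZ T f e x)

section Meas
variable (hfm : Measurable f)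
include hfm

lemma m_vzp (n : ℕ) (j : ℤ) : Measurable fun x => vv f e n (Zp T j x) :=
  (vv_meas f e hfm n).comp (zp_meas T j)

lemma mSet_sn (n : ℕ) (j : ℤ) : MeasurableSet {x | Sn T f e n (Zp T j x)} := by
  have hset : {x | Sn T f e n (Zp T j x)} =
      ⋂ i : ℤ, {x | vv f e n (Zp T j x) ≤ vv f e n (Zp T (i + j) x)} := by
    ext x
    simp only [Set.mem_iInter, Set.mem_setOf_eq, Sn]
    constructor
    · intro h i
      have := h i
      rwa [← zp_add] at this
    · intro h i
      rw [← zp_add]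
      exact h i
  rw [hset]
  exact MeasurableSet.iInter fun i =>
    measurableSet_le (m_vzp T f e hfm n j) (m_vzp T f e hfm n (i + j))

lemma mSet_lastv (n : ℕ) (j : ℤ) : MeasurableSet {x | lastv T f e n (Zp T j x)} := by
  have hset : {x | lastv T f e n (Zp T j x)} =
      {x | Sn T f e n (Zp T j x)} ∩
        ⋂ (k : ℤ), ⋂ (_ : 0 < k), {x | Sn T f e n (Zp T (k + j) x)}ᶜ := by
    ext x
    simp only [Set.mem_inter_iff, Set.mem_iInter, Set.mem_setOf_eq, Set.mem_compl_iff,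
      lastv]
    constructor
    · rintro ⟨h1, h2⟩
      exact ⟨h1, fun k hk => by rw [zp_add]; exact h2 k hk⟩
    · rintro ⟨h1, h2⟩
      exact ⟨h1, fun k hk => by rw [← zp_add]; exact h2 k hk⟩
  rw [hset]
  exact (mSet_sn T f e hfm n j).inter (MeasurableSet.iInter fun k =>
    MeasurableSet.iInter fun _ => (mSet_sn T f e hfm n (k + j)).compl)

lemma mSet_firstv (n : ℕ) (j : ℤ) : MeasurableSet {x | firstv T f e n (Zp T j x)} := by
  have hset : {x | firstv T f e n (Zp T j x)} =
      {x | Sn T f e n (Zp T j x)} ∩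
        ⋂ (k : ℤ), ⋂ (_ : k < 0), {x | Sn T f e n (Zp T (k + j) x)}ᶜ := by
    ext x
    simp only [Set.mem_inter_iff, Set.mem_iInter, Set.mem_setOf_eq, Set.mem_compl_iff,
      firstv]
    constructor
    · rintro ⟨h1, h2⟩
      exact ⟨h1, fun k hk => by rw [zp_add]; exact h2 k hk⟩
    · rintro ⟨h1, h2⟩
      exact ⟨h1, fun k hk => by rw [← zp_add]; exact h2 k hk⟩
  rw [hset]
  exact (mSet_sn T f e hfm n j).inter (MeasurableSet.iInter fun k =>
    MeasurableSet.iInter fun _ => (mSet_sn T f e hfm n (k + j)).compl)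

lemma mSet_dn (n : ℕ) : MeasurableSet {x | Dn T f e n x} := by
  have hset : {x | Dn T f e n x} =
      ⋃ j : ℤ, ({x | lastv T f e n (Zp T j x)} ∪ {x | firstv T f e n (Zp T j x)}) := by
    ext x
    simp [Dn]
  rw [hset]
  exact MeasurableSet.iUnion fun j =>
    (mSet_lastv T f e hfm n j).union (mSet_firstv T f e hfm n j)

lemma mSet_dd : MeasurableSet {x | DD T f e x} := by
  have hset : {x | DD T f e x} = ⋃ n, {x | Dn T f e n x} := by
    ext x; simp [DD]
  rw [hset]
  exact MeasurableSet.iUnion fun n => mSet_dn T f e hfm n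

lemma mSet_zz : MeasurableSet {x | ZZ T f e x} := by
  have hset : {x | ZZ T f e x} = ⋂ n, {x | Sn T f e n (Zp T 0 x)} := by
    ext x; simp [ZZ, zp_zero]
  rw [hset]
  exact MeasurableSet.iInter fun n => mSet_sn T f e hfm n 0

lemma mSet_bp (n0 : ℕ) (j : ℤ) : MeasurableSet {x | bP T f e n0 x j} := by
  have hset : {x | bP T f e n0 x j} =
      {x | lastv T f e n0 (Zp T j x)} ∪
        ((⋂ i : ℤ, {x | lastv T f e n0 (Zp T i x)}ᶜ) ∩ {x | firstv T f e n0 (Zp T j x)}) := by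
    ext x
    simp [bP]
  rw [hset]
  exact (mSet_lastv T f e hfm n0 j).union
    ((MeasurableSet.iInter fun i => (mSet_lastv T f e hfm n0 i).compl).inter
      (mSet_firstv T f e hfm n0 j))

lemma mSet_cc (n : ℕ) : MeasurableSet {x | CC T f e n x} := by
  have hset : {x | CC T f e n x} =
      (⋃ n0, (({x | Dn T f e n0 x} ∩ ⋂ (m : ℕ), ⋂ (_ : m < n0), {x | Dn T f e m x}ᶜ) ∩
        ⋃ j : ℤ, ⋃ (_ : (-j) % ((n : ℤ) + 1) = ((n : ℤ) + 1) / 2), {x | bP T f e n0 x j}))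
      ∪ (({x | DD T f e x}ᶜ ∩ {x | Sn T f e n (Zp T 0 x)}) ∩ {x | ZZ T f e x}ᶜ) := by
    ext x
    simp only [CC, leastD, Set.mem_union, Set.mem_iUnion, Set.mem_inter_iff,
      Set.mem_iInter, Set.mem_setOf_eq, Set.mem_compl_iff, zp_zero]
    constructor
    · rintro (⟨n0, ⟨hdn, hmin⟩, j, hbp, hcond⟩ | ⟨h1, h2, h3⟩)
      · exact Or.inl ⟨n0, ⟨hdn, fun m hm => hmin m hm⟩, j, hcond, hbp⟩
      · exact Or.inr ⟨⟨h1, h2⟩, h3⟩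
    · rintro (⟨n0, ⟨hdn, hmin⟩, j, hcond, hbp⟩ | ⟨⟨h1, h2⟩, h3⟩)
      · exact Or.inl ⟨n0, ⟨hdn, fun m hm => hmin m hm⟩, j, hbp, hcond⟩
      · exact Or.inr ⟨h1, h2, h3⟩
  rw [hset]
  refine MeasurableSet.union ?_ ?_
  · exact MeasurableSet.iUnion fun n0 =>
      (((mSet_dn T f e hfm n0).inter (MeasurableSet.iInter fun m =>
        MeasurableSet.iInter fun _ => (mSet_dn T f e hfm m).compl)).inter
        (MeasurableSet.iUnion fun j => MeasurableSet.iUnion fun _ => mSet_bp T f e hfm n0 j))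
  · exact (((mSet_dd T f e hfm).compl.inter (mSet_sn T f e hfm n 0)).inter
      (mSet_zz T f e hfm).compl)

end Meas

lemma leastD_exists {x : X} (hD : DD T f e x) : ∃ n0, leastD T f e x n0 := by
  classical
  exact ⟨Nat.find hD, Nat.find_spec hD, fun m hm => Nat.find_min hD hm⟩

lemma leastD_unique {x : X} {a b : ℕ} (ha : leastD T f e x a) (hb : leastD T f e x b) :
    a = b := by
  by_contra hne
  rcases lt_or_gt_of_ne hne with h | h
  · exact hb.2 a h ha.1
  · exact ha.2 b h hb.1

lemma leastD_shift {x : X} {n0 : ℕ} (t : ℤ) :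
    leastD T f e (Zp T t x) n0 ↔ leastD T f e x n0 := by
  unfold leastD
  rw [dn_shift]
  exact and_congr_right fun _ => forall_congr' fun m => imp_congr_right fun _ =>
    not_congr (dn_shift T f e t)

/-- characterization of the cut set on orbits in `DD` -/
lemma cc_char {x : X} {n0 : ℕ} {j0 : ℤ} (hL : leastD T f e x n0)
    (hj0 : bP T f e n0 x j0) (m : ℤ) (n : ℕ) :
    CC T f e n (Zp T m x) ↔ (m - j0) % ((n : ℤ) + 1) = ((n : ℤ) + 1) / 2 := by
  constructor
  · rintro (⟨n0', hL', j, hbp, hcond⟩ | ⟨hnd, -, -⟩)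
    · have hL'' : leastD T f e x n0' := (leastD_shift T f e m).mp hL'
      have hn0 : n0' = n0 := leastD_unique T f e hL'' hL
      subst hn0
      have hbp' : bP T f e n0' x (j + m) := (bp_shift T f e).mp hbp
      have hj : j + m = j0 := bp_unique T f e hbp' hj0
      have hjm : -j = m - j0 := by omega
      rwa [hjm] at hcond
    · exact absurd ((dd_shift T f e m).mpr ⟨n0, hL.1⟩) hnd
  · intro hcond
    left
    refine ⟨n0, (leastD_shift T f e m).mpr hL, j0 - m, ?_, ?_⟩
    · apply (bp_shift T f e).mpr
      rw [show j0 - m + m = j0 by ring]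
      exact hj0
    · rw [show -(j0 - m) = m - j0 by ring]
      exact hcond

lemma half_mod_eventually (a : ℤ) :
    ∃ N : ℕ, ∀ n ≥ N, ¬ (a % ((n : ℤ) + 1) = ((n : ℤ) + 1) / 2) := by
  refine ⟨2 * a.natAbs + 2, fun n hn hc => ?_⟩
  set M : ℤ := (n : ℤ) + 1 with hM
  have hMbig : 2 * (a.natAbs : ℤ) + 3 ≤ M := by
    have : (2 * a.natAbs + 2 : ℤ) ≤ (n : ℤ) := by exact_mod_cast hn
    omega
  rcases le_or_gt 0 a with hpos | hneg
  · have h1 : a % M = a := Int.emod_eq_of_lt hpos (by omega)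
    rw [h1] at hc
    omega
  · have h1 : a % M = a + M := by
      have h2 : (a + M * 1) % M = a % M := Int.add_mul_emod_self_left a M 1
      have h3 : (a + M * 1) % M = a + M * 1 :=
        Int.emod_eq_of_lt (by omega) (by omega)
      omega
    rw [h1] at hc
    omega

/-- key modular computation: `(a % M + M * c - j) % M = (a - j) % M` -/
lemma emod_shift_key (M a j c : ℤ) : (a % M + M * c - j) % M = (a - j) % M := by
  rw [show a % M + M * c - j = (a % M - j) + M * c by ring, Int.add_mul_emod_self_left,
    Int.sub_emod, Int.emod_emod_of_dvd a dvd_rfl, ← Int.sub_emod]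

section Rec
variable (hT : ∀ x : X, ∀ n : ℕ, 1 ≤ n → (⇑T)^[n] x ≠ x)
  (he : Function.Surjective e) (hfinj : Function.Injective f)

/-- on non-smooth orbits, `Sn`-points are unbounded in both directions -/
lemma sn_unbounded (hD : ¬ DD T f e x) (n : ℕ) (t : ℤ) :
    (∃ j > t, Sn T f e n (Zp T j x)) ∧ (∃ j < t, Sn T f e n (Zp T j x)) := by
  constructor
  · by_contra hc
    push_neg at hc
    obtain ⟨g, hg1, hg2⟩ := Int.exists_greatest_of_bdd
      (⟨t, fun j hj => by by_contra h; exact absurd (hc j (by omega)) (not_not.mpr hj)⟩ :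
        ∃ b : ℤ, ∀ z : ℤ, Sn T f e n (Zp T z x) → z ≤ b) (sn_exists T f e n x)
    refine hD ⟨n, g, Or.inl ⟨hg1, fun k hk hS => ?_⟩⟩
    rw [← zp_add] at hS
    have := hg2 (k + g) hS
    omega
  · by_contra hc
    push_neg at hc
    obtain ⟨g, hg1, hg2⟩ := Int.exists_least_of_bdd
      (⟨t, fun j hj => by by_contra h; exact absurd (hc j (by omega)) (not_not.mpr hj)⟩ :
        ∃ b : ℤ, ∀ z : ℤ, Sn T f e n (Zp T z x) → b ≤ z) (sn_exists T f e n x)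
    refine hD ⟨n, g, Or.inr ⟨hg1, fun k hk hS => ?_⟩⟩
    rw [← zp_add] at hS
    have := hg2 (k + g) hS
    omega

include hT he hfinj in
/-- on non-smooth orbits we find non-`ZZ` `Sn`-points beyond any bound, in both directions -/
lemma sn_unbounded' {x : X} (hD : ¬ DD T f e x) (n : ℕ) (t : ℤ) :
    (∃ j > t, Sn T f e n (Zp T j x) ∧ ¬ ZZ T f e (Zp T j x)) ∧
    (∃ j < t, Sn T f e n (Zp T j x) ∧ ¬ ZZ T f e (Zp T j x)) := by
  constructor
  · obtain ⟨j1, hj1, hS1⟩ := (sn_unbounded T f e hD n t).1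
    by_cases hZ : ZZ T f e (Zp T j1 x)
    · obtain ⟨j2, hj2, hS2⟩ := (sn_unbounded T f e hD n j1).1
      refine ⟨j2, by omega, hS2, fun hZ2 => ?_⟩
      have : Zp T (j2 - j1) (Zp T j1 x) = Zp T j2 x := by
        rw [← zp_add]; ring_nf
      rw [← this] at hZ2
      have := zz_unique T f e hT he hfinj hZ hZ2
      omega
    · exact ⟨j1, hj1, hS1, hZ⟩
  · obtain ⟨j1, hj1, hS1⟩ := (sn_unbounded T f e hD n t).2
    by_cases hZ : ZZ T f e (Zp T j1 x)
    · obtain ⟨j2, hj2, hS2⟩ := (sn_unbounded T f e hD n j1).2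
      refine ⟨j2, by omega, hS2, fun hZ2 => ?_⟩
      have : Zp T (j2 - j1) (Zp T j1 x) = Zp T j2 x := by
        rw [← zp_add]; ring_nf
      rw [← this] at hZ2
      have := zz_unique T f e hT he hfinj hZ hZ2
      omega
    · exact ⟨j1, hj1, hS1, hZ⟩

include hT he hfinj in
/-- forward and backward recurrence of the cut sets -/
lemma cc_rec (n : ℕ) (x : X) :
    (∃ k : ℕ, CC T f e n (Zp T ((k : ℤ) + 1) x)) ∧
    (∃ k : ℕ, CC T f e n (Zp T (-((k : ℤ) + 1)) x)) := by
  by_cases hD : DD T f e x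
  · obtain ⟨n0, hL⟩ := leastD_exists T f e hD
    obtain ⟨j0, hj0⟩ := bp_exists T f e hL.1
    set M : ℤ := (n : ℤ) + 1 with hMdef
    have hMpos : 0 < M := by omega
    have hs : 0 ≤ (M / 2 + j0) % M ∧ (M / 2 + j0) % M < M :=
      ⟨Int.emod_nonneg _ (by omega), Int.emod_lt_of_pos _ hMpos⟩
    have hhalf : (M / 2) % M = M / 2 := Int.emod_eq_of_lt (by omega) (by omega)
    constructor
    · set t : ℤ := (M / 2 + j0) % M + M with htdef
      have ht1 : 1 ≤ t := by omega
      refine ⟨(t - 1).toNat, ?_⟩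
      have hcast : ((t - 1).toNat : ℤ) + 1 = t := by omega
      rw [hcast, cc_char T f e hL hj0 t n]
      have := emod_shift_key M (M / 2 + j0) j0 1
      rw [show M / 2 + j0 - j0 = M / 2 by ring] at this
      rw [show t - j0 = (M / 2 + j0) % M + M * 1 - j0 by omega]
      rw [this, hhalf]
    · set t : ℤ := (M / 2 + j0) % M + M * (-2) with htdef
      have ht1 : t ≤ -1 := by omega
      refine ⟨(-t - 1).toNat, ?_⟩
      have hcast : -(((-t - 1).toNat : ℤ) + 1) = t := by omega
      rw [hcast, cc_char T f e hL hj0 t n]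
      have := emod_shift_key M (M / 2 + j0) j0 (-2)
      rw [show M / 2 + j0 - j0 = M / 2 by ring] at this
      rw [htdef, this, hhalf]
  · constructor
    · obtain ⟨j, hj, hS, hZ⟩ := (sn_unbounded' T f e hT he hfinj hD n 0).1
      refine ⟨(j - 1).toNat, ?_⟩
      have hcast : ((j - 1).toNat : ℤ) + 1 = j := by omega
      rw [hcast]
      exact Or.inr ⟨fun hD2 => hD ((dd_shift T f e j).mp hD2), hS, hZ⟩
    · obtain ⟨j, hj, hS, hZ⟩ := (sn_unbounded' T f e hT he hfinj hD n 0).2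
      refine ⟨(-j - 1).toNat, ?_⟩
      have hcast : -(((-j - 1).toNat : ℤ) + 1) = j := by omega
      rw [hcast]
      exact Or.inr ⟨fun hD2 => hD ((dd_shift T f e j).mp hD2), hS, hZ⟩

/-- eventual avoidance: every point is eventually outside the cut sets -/
lemma cc_avoid (x : X) : ∃ N : ℕ, ∀ n ≥ N, ¬ CC T f e n x := by
  by_cases hD : DD T f e x
  · obtain ⟨n0, hL⟩ := leastD_exists T f e hD
    obtain ⟨j0, hj0⟩ := bp_exists T f e hL.1
    obtain ⟨N, hN⟩ := half_mod_eventually (-j0)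
    refine ⟨N, fun n hn hc => ?_⟩
    rw [← zp_zero T x] at hc
    rw [cc_char T f e hL hj0 0 n] at hc
    rw [show (0 : ℤ) - j0 = -j0 by ring] at hc
    exact hN n hn hc
  · by_cases hZ : ZZ T f e x
    · refine ⟨0, fun n _ hc => ?_⟩
      rcases hc with ⟨n0, hL, -⟩ | ⟨-, -, hnZ⟩
      · exact hD ⟨n0, hL.1⟩
      · exact hnZ hZ
    · have hnz : ∃ n1, ¬ Sn T f e n1 x := by
        by_contra hc
        push_neg at hc
        exact hZ hc
      obtain ⟨n1, hn1⟩ := hnz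
      refine ⟨n1, fun n hn hc => ?_⟩
      rcases hc with ⟨n0, hL, -⟩ | ⟨-, hS, -⟩
      · exact hD ⟨n0, hL.1⟩
      · exact hn1 (sn_antitone T f e hn hS)

end Rec
end Markers

section Tower
variable (C : Set X)

open Classical in
/-- first strictly positive hitting time, minus one -/
noncomputable def r0 (hfw : ∀ x : X, ∃ k : ℕ, Zp T ((k : ℤ) + 1) x ∈ C) (x : X) : ℕ := Nat.find (hfw x)

open Classical in
/-- first nonnegative backward hitting time -/
noncomputable def l0 (hbk : ∀ x : X, ∃ k : ℕ, Zp T (-(k : ℤ)) x ∈ C) (x : X) : ℕ := Nat.find (hbk x)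

lemma r0_mem (hfw : ∀ x : X, ∃ k : ℕ, Zp T ((k : ℤ) + 1) x ∈ C) (x : X) : Zp T ((r0 T C hfw x : ℤ) + 1) x ∈ C := by
  classical
  exact Nat.find_spec (hfw x)

lemma r0_min (hfw : ∀ x : X, ∃ k : ℕ, Zp T ((k : ℤ) + 1) x ∈ C) (x : X) {k : ℕ} (hk : k < r0 T C hfw x) : Zp T ((k : ℤ) + 1) x ∉ C := by
  classical
  exact Nat.find_min (hfw x) hk

lemma r0_eq (hfw : ∀ x : X, ∃ k : ℕ, Zp T ((k : ℤ) + 1) x ∈ C) {x : X} {m : ℕ} (hm : Zp T ((m : ℤ) + 1) x ∈ C)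
    (hmin : ∀ k < m, Zp T ((k : ℤ) + 1) x ∉ C) : r0 T C hfw x = m := by
  classical
  exact le_antisymm (Nat.find_le hm) (Nat.le_find_iff (hfw x) m |>.mpr
    (fun k hk => hmin k hk) |> fun h => h)

lemma l0_mem (hbk : ∀ x : X, ∃ k : ℕ, Zp T (-(k : ℤ)) x ∈ C) (x : X) : Zp T (-(l0 T C hbk x : ℤ)) x ∈ C := by
  classical
  exact Nat.find_spec (hbk x)

lemma l0_min (hbk : ∀ x : X, ∃ k : ℕ, Zp T (-(k : ℤ)) x ∈ C) (x : X) {k : ℕ} (hk : k < l0 T C hbk x) : Zp T (-(k : ℤ)) x ∉ C := by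
  classical
  exact Nat.find_min (hbk x) hk

lemma l0_eq (hbk : ∀ x : X, ∃ k : ℕ, Zp T (-(k : ℤ)) x ∈ C) {x : X} {m : ℕ} (hm : Zp T (-(m : ℤ)) x ∈ C)
    (hmin : ∀ k < m, Zp T (-(k : ℤ)) x ∉ C) : l0 T C hbk x = m := by
  classical
  exact le_antisymm (Nat.find_le hm) (Nat.le_find_iff (hbk x) m |>.mpr
    (fun k hk => hmin k hk) |> fun h => h)

open Classical in
/-- the tower permutation -/
noncomputable def Pf (hbk : ∀ x : X, ∃ k : ℕ, Zp T (-(k : ℤ)) x ∈ C) (x : X) : X :=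
  if T x ∈ C then Zp T (-(l0 T C hbk x : ℤ)) x else T x

open Classical in
/-- the inverse tower permutation -/
noncomputable def Qf (hfw : ∀ x : X, ∃ k : ℕ, Zp T ((k : ℤ) + 1) x ∈ C) (x : X) : X :=
  if x ∈ C then Zp T (r0 T C hfw x : ℤ) x else T.symm x

lemma l0_top (hfw : ∀ x : X, ∃ k : ℕ, Zp T ((k : ℤ) + 1) x ∈ C) (hbk : ∀ x : X, ∃ k : ℕ, Zp T (-(k : ℤ)) x ∈ C) {x : X} (hx : x ∈ C) :
    l0 T C hbk (Zp T (r0 T C hfw x : ℤ) x) = r0 T C hfw x := by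
  apply l0_eq
  · rw [← zp_add]
    simpa [zp_zero] using hx
  · intro k hk
    rw [← zp_add]
    have hke : -(k : ℤ) + (r0 T C hfw x : ℤ) = ((r0 T C hfw x - k - 1 : ℕ) : ℤ) + 1 := by
      omega
    rw [hke]
    exact r0_min T C hfw x (by omega)

lemma r0_bot (hfw : ∀ x : X, ∃ k : ℕ, Zp T ((k : ℤ) + 1) x ∈ C) (hbk : ∀ x : X, ∃ k : ℕ, Zp T (-(k : ℤ)) x ∈ C) {x : X} (hTx : T x ∈ C) :
    r0 T C hfw (Zp T (-(l0 T C hbk x : ℤ)) x) = l0 T C hbk x := by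
  apply r0_eq
  · rw [← zp_add]
    have : ((l0 T C hbk x : ℤ)) + -(l0 T C hbk x : ℤ) = 0 := by ring
    rw [show ((l0 T C hbk x : ℤ)) + 1 + -(l0 T C hbk x : ℤ) = 1 by ring, zp_one]
    exact hTx
  · intro k hk
    rw [← zp_add]
    have hke : ((k : ℤ)) + 1 + -(l0 T C hbk x : ℤ) = -((l0 T C hbk x - (k + 1) : ℕ) : ℤ) := by
      omega
    rw [hke]
    exact l0_min T C hbk x (by omega)

lemma Qf_Pf (hfw : ∀ x : X, ∃ k : ℕ, Zp T ((k : ℤ) + 1) x ∈ C) (hbk : ∀ x : X, ∃ k : ℕ, Zp T (-(k : ℤ)) x ∈ C) (x : X) : Qf T C hfw (Pf T C hbk x) = x := by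
  classical
  by_cases hTx : T x ∈ C
  · rw [Pf, if_pos hTx, Qf, if_pos (l0_mem T C hbk x), r0_bot T C hfw hbk hTx, ← zp_add]
    simp [zp_zero]
  · rw [Pf, if_neg hTx, Qf, if_neg hTx]
    exact T.symm_apply_apply x

lemma Pf_Qf (hfw : ∀ x : X, ∃ k : ℕ, Zp T ((k : ℤ) + 1) x ∈ C) (hbk : ∀ x : X, ∃ k : ℕ, Zp T (-(k : ℤ)) x ∈ C) (x : X) : Pf T C hbk (Qf T C hfw x) = x := by
  classical
  by_cases hx : x ∈ C
  · have hT2 : T (Zp T (r0 T C hfw x : ℤ) x) ∈ C := by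
      rw [← zp_one T (Zp T _ x), ← zp_add]
      rw [show (1 : ℤ) + (r0 T C hfw x : ℤ) = ((r0 T C hfw x : ℤ)) + 1 by ring]
      exact r0_mem T C hfw x
    rw [Qf, if_pos hx, Pf, if_pos hT2, l0_top T C hfw hbk hx, ← zp_add]
    simp [zp_zero]
  · have hT2 : T (T.symm x) ∉ C := by
      rw [T.apply_symm_apply]
      exact hx
    rw [Qf, if_neg hx, Pf, if_neg hT2, T.apply_symm_apply]

lemma l0_measurable (hC : MeasurableSet C) (hbk : ∀ x : X, ∃ k : ℕ, Zp T (-(k : ℤ)) x ∈ C) : Measurable (l0 T C hbk) := by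
  intro s _
  have : (l0 T C hbk) ⁻¹' s = ⋃ m ∈ s, {x | l0 T C hbk x = m} := by
    ext x; simp
  rw [this]
  refine MeasurableSet.biUnion (Set.to_countable s) fun m _ => ?_
  have hset : {x | l0 T C hbk x = m} =
      (Zp T (-(m : ℤ)) ⁻¹' C) ∩ ⋂ (k : ℕ), ⋂ (_ : k < m), (Zp T (-(k : ℤ)) ⁻¹' C)ᶜ := by
    ext x
    simp only [Set.mem_inter_iff, Set.mem_preimage, Set.mem_iInter, Set.mem_compl_iff,
      Set.mem_setOf_eq]
    constructor
    · rintro rfl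
      exact ⟨l0_mem T C hbk x, fun k hk => l0_min T C hbk x hk⟩
    · rintro ⟨h1, h2⟩
      exact l0_eq T C hbk h1 h2
  rw [hset]
  exact ((zp_meas T _) hC).inter (MeasurableSet.iInter fun k =>
    MeasurableSet.iInter fun _ => ((zp_meas T _) hC).compl)

lemma r0_measurable (hC : MeasurableSet C) (hfw : ∀ x : X, ∃ k : ℕ, Zp T ((k : ℤ) + 1) x ∈ C) : Measurable (r0 T C hfw) := by
  intro s _
  have : (r0 T C hfw) ⁻¹' s = ⋃ m ∈ s, {x | r0 T C hfw x = m} := by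
    ext x; simp
  rw [this]
  refine MeasurableSet.biUnion (Set.to_countable s) fun m _ => ?_
  have hset : {x | r0 T C hfw x = m} =
      (Zp T ((m : ℤ) + 1) ⁻¹' C) ∩ ⋂ (k : ℕ), ⋂ (_ : k < m), (Zp T ((k : ℤ) + 1) ⁻¹' C)ᶜ := by
    ext x
    simp only [Set.mem_inter_iff, Set.mem_preimage, Set.mem_iInter, Set.mem_compl_iff,
      Set.mem_setOf_eq]
    constructor
    · rintro rfl
      exact ⟨r0_mem T C hfw x, fun k hk => r0_min T C hfw x hk⟩
    · rintro ⟨h1, h2⟩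
      exact r0_eq T C hfw h1 h2
  rw [hset]
  exact ((zp_meas T _) hC).inter (MeasurableSet.iInter fun k =>
    MeasurableSet.iInter fun _ => ((zp_meas T _) hC).compl)

lemma Pf_measurable (hC : MeasurableSet C) (hbk : ∀ x : X, ∃ k : ℕ, Zp T (-(k : ℤ)) x ∈ C) : Measurable (Pf T C hbk) := by
  classical
  have hcond : MeasurableSet {x | T x ∈ C} := T.measurable hC
  have hbranch : Measurable fun x => Zp T (-(l0 T C hbk x : ℤ)) x := by
    intro s hs
    have : (fun x => Zp T (-(l0 T C hbk x : ℤ)) x) ⁻¹' s =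
        ⋃ m : ℕ, ({x | l0 T C hbk x = m} ∩ Zp T (-(m : ℤ)) ⁻¹' s) := by
      ext x
      simp only [Set.mem_preimage, Set.mem_iUnion, Set.mem_inter_iff, Set.mem_setOf_eq]
      constructor
      · intro h
        exact ⟨l0 T C hbk x, rfl, h⟩
      · rintro ⟨m, rfl, h⟩
        exact h
    rw [this]
    refine MeasurableSet.iUnion fun m => MeasurableSet.inter ?_ ((zp_meas T _) hs)
    exact (l0_measurable T C hC hbk) (measurableSet_singleton m)
  exact Measurable.ite hcond hbranch T.measurable

lemma Qf_measurable (hC : MeasurableSet C) (hfw : ∀ x : X, ∃ k : ℕ, Zp T ((k : ℤ) + 1) x ∈ C) : Measurable (Qf T C hfw) := by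
  classical
  have hbranch : Measurable fun x => Zp T (r0 T C hfw x : ℤ) x := by
    intro s hs
    have : (fun x => Zp T (r0 T C hfw x : ℤ) x) ⁻¹' s =
        ⋃ m : ℕ, ({x | r0 T C hfw x = m} ∩ Zp T (m : ℤ) ⁻¹' s) := by
      ext x
      simp only [Set.mem_preimage, Set.mem_iUnion, Set.mem_inter_iff, Set.mem_setOf_eq]
      constructor
      · intro h
        exact ⟨r0 T C hfw x, rfl, h⟩
      · rintro ⟨m, rfl, h⟩
        exact h
    rw [this]
    refine MeasurableSet.iUnion fun m => MeasurableSet.inter ?_ ((zp_meas T _) hs)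
    exact (r0_measurable T C hC hfw) (measurableSet_singleton m)
  exact Measurable.ite hC hbranch T.symm.measurable

/-- the tower permutation as a measurable equivalence -/
noncomputable def Peq (hC : MeasurableSet C) (hfw : ∀ x : X, ∃ k : ℕ, Zp T ((k : ℤ) + 1) x ∈ C) (hbk : ∀ x : X, ∃ k : ℕ, Zp T (-(k : ℤ)) x ∈ C) : X ≃ᵐ X where
  toEquiv :=
    { toFun := Pf T C hbk
      invFun := Qf T C hfw
      left_inv := Qf_Pf T C hfw hbk
      right_inv := Pf_Qf T C hfw hbk }
  measurable_toFun := Pf_measurable T C hC hbk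
  measurable_invFun := Qf_measurable T C hC hfw

lemma Peq_apply (hC : MeasurableSet C) (hfw : ∀ x : X, ∃ k : ℕ, Zp T ((k : ℤ) + 1) x ∈ C) (hbk : ∀ x : X, ∃ k : ℕ, Zp T (-(k : ℤ)) x ∈ C) (x : X) : Peq T C hC hfw hbk x = Pf T C hbk x := rfl

lemma Pf_iter_eq (hfw : ∀ x : X, ∃ k : ℕ, Zp T ((k : ℤ) + 1) x ∈ C) (hbk : ∀ x : X, ∃ k : ℕ, Zp T (-(k : ℤ)) x ∈ C) {c : X} (hc : c ∈ C) :
    ∀ j : ℕ, j ≤ r0 T C hfw c → (Pf T C hbk)^[j] c = Zp T (j : ℤ) c := by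
  intro j
  induction j with
  | zero => intro _; simp [zp_zero]
  | succ m ih =>
    intro hm
    rw [Function.iterate_succ_apply', ih (by omega)]
    have hnot : T (Zp T (m : ℤ) c) ∉ C := by
      rw [← zp_one T (Zp T _ c), ← zp_add, show (1 : ℤ) + (m : ℤ) = (m : ℤ) + 1 by ring]
      exact r0_min T C hfw c (by omega)
    rw [Pf, if_neg hnot, ← zp_one T (Zp T _ c), ← zp_add]
    congr 1
    push_cast
    ring

lemma Pf_cycle (hfw : ∀ x : X, ∃ k : ℕ, Zp T ((k : ℤ) + 1) x ∈ C) (hbk : ∀ x : X, ∃ k : ℕ, Zp T (-(k : ℤ)) x ∈ C) {c : X} (hc : c ∈ C) :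
    (Pf T C hbk)^[r0 T C hfw c + 1] c = c := by
  rw [Function.iterate_succ_apply', Pf_iter_eq T C hfw hbk hc _ le_rfl]
  have hT2 : T (Zp T (r0 T C hfw c : ℤ) c) ∈ C := by
    rw [← zp_one T (Zp T _ c), ← zp_add, show (1 : ℤ) + (r0 T C hfw c : ℤ) =
      ((r0 T C hfw c : ℤ)) + 1 by ring]
    exact r0_mem T C hfw c
  rw [Pf, if_pos hT2, l0_top T C hfw hbk hc, ← zp_add]
  simp [zp_zero]

lemma Pf_periodic (hfw : ∀ x : X, ∃ k : ℕ, Zp T ((k : ℤ) + 1) x ∈ C) (hbk : ∀ x : X, ∃ k : ℕ, Zp T (-(k : ℤ)) x ∈ C) (x : X) : ∃ k : ℕ, 1 ≤ k ∧ (Pf T C hbk)^[k] x = x := by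
  set b := Zp T (-(l0 T C hbk x : ℤ)) x with hbdef
  have hb : b ∈ C := l0_mem T C hbk x
  have hlr : l0 T C hbk x ≤ r0 T C hfw b := by
    by_contra hcon
    push_neg at hcon
    have := r0_mem T C hfw b
    rw [hbdef, ← zp_add] at this
    have hke : ((r0 T C hfw b : ℤ)) + 1 + -(l0 T C hbk x : ℤ) =
        -((l0 T C hbk x - (r0 T C hfw b + 1) : ℕ) : ℤ) := by omega
    rw [hke] at this
    exact l0_min T C hbk x (by omega) this
  have hxb : (Pf T C hbk)^[l0 T C hbk x] b = x := by
    rw [Pf_iter_eq T C hfw hbk hb _ hlr, hbdef, ← zp_add]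
    simp [zp_zero]
  refine ⟨r0 T C hfw b + 1, by omega, ?_⟩
  conv_lhs => rw [← hxb]
  rw [← Function.iterate_add_apply, add_comm, Function.iterate_add_apply,
    Pf_cycle T C hfw hbk hb, hxb]

lemma Pf_full_group (hbk : ∀ x : X, ∃ k : ℕ, Zp T (-(k : ℤ)) x ∈ C) (x : X) : ∃ m : ℤ, Pf T C hbk x = Zp T m x := by
  classical
  by_cases hTx : T x ∈ C
  · exact ⟨-(l0 T C hbk x : ℤ), by rw [Pf, if_pos hTx]⟩
  · exact ⟨1, by rw [Pf, if_neg hTx, zp_one]⟩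

lemma Pf_agree (hbk : ∀ x : X, ∃ k : ℕ, Zp T (-(k : ℤ)) x ∈ C) {x : X} (hTx : T x ∉ C) : Pf T C hbk x = T x := by
  classical
  rw [Pf, if_neg hTx]

end Tower
end Stmt2Aux

open Stmt2Aux in
/-- **Periodic approximation in Borel dynamics (Nadkarni).** For every aperiodic Borel
automorphism `T` of a standard Borel space there is a sequence `(Pₙ)` of pointwise
periodic Borel automorphisms belonging to the full group `[T]` which converges to `T` in
the uniform topology, i.e. pointwise eventually. -/
theorem stmt_2 {X : Type*} [MeasurableSpace X] [StandardBorelSpace X]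
    (T : X ≃ᵐ X)
    (hT : ∀ x : X, ∀ n : ℕ, 1 ≤ n → (T : X → X)^[n] x ≠ x) :
    ∃ P : ℕ → (X ≃ᵐ X),
      (∀ n, ∀ x : X, ∃ k : ℕ, 1 ≤ k ∧ ((P n : X → X))^[k] x = x) ∧
      (∀ n, ∀ x : X, ∃ m : ℤ, (P n) x = (T.toEquiv ^ m) x) ∧
      (∀ x : X, ∃ N : ℕ, ∀ n ≥ N, (P n) x = T x) := by
  classical
  obtain ⟨f, hf⟩ := exists_measurableEmbedding_real X
  obtain ⟨e, he⟩ : ∃ e : ℕ → ℚ, Function.Surjective e :=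
    ⟨(Denumerable.eqv ℚ).symm, (Denumerable.eqv ℚ).symm.surjective⟩
  set C : ℕ → Set X := fun n => {x | CC T f e n x} with hCdef
  have hCm : ∀ n, MeasurableSet (C n) := fun n => mSet_cc T f e hf.measurable n
  have hrec := fun n (x : X) => cc_rec T f e hT he hf.injective n x
  have hfw : ∀ n, ∀ x : X, ∃ k : ℕ, Zp T ((k : ℤ) + 1) x ∈ C n := fun n x => (hrec n x).1
  have hbk : ∀ n, ∀ x : X, ∃ k : ℕ, Zp T (-(k : ℤ)) x ∈ C n := by
    intro n x
    obtain ⟨k, hk⟩ := (hrec n x).2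
    refine ⟨k + 1, ?_⟩
    have : (-(((k : ℕ) + 1 : ℕ) : ℤ)) = -((k : ℤ) + 1) := by push_cast; ring
    rw [this]
    exact hk
  refine ⟨fun n => Peq T (C n) (hCm n) (hfw n) (hbk n), ?_, ?_, ?_⟩
  · intro n x
    exact Pf_periodic T (C n) (hfw n) (hbk n) x
  · intro n x
    obtain ⟨m, hm⟩ := Pf_full_group T (C n) (hbk n) x
    exact ⟨m, hm⟩
  · intro x
    obtain ⟨N, hN⟩ := cc_avoid T f e (T x)
    exact ⟨N, fun n hn => Pf_agree T (C n) (hbk n) (hN n hn)⟩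
end

section
/- Let T be an aperiodic Borel automorphism of a nonempty standard Borel space (X, 𝓑), and let F₁, …, Fₙ be a finite Borel partition of X. Then there exists a Borel automorphism P of X which is not aperiodic (i.e. P has a periodic point: there exist x ∈ X and an integer k ≥ 1 with P^k x = x) and which satisfies P(Fᵢ) = T(Fᵢ) for every i = 1, …, n. Consequently, the set of aperiodic Borel automorphisms has empty interior in the weak topology p on Aut(X, 𝓑). -/
open MeasureTheory

/-- The swap of two points as a measurable equivalence (in a space with measurable
singletons). -/
def swapME {X : Type*} [MeasurableSpace X] [MeasurableSingletonClass X] [DecidableEq X]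
    (u v : X) : X ≃ᵐ X where
  toEquiv := Equiv.swap u v
  measurable_toFun := by
    have : (Equiv.swap u v : X → X) = fun x => if x = u then v else if x = v then u else x := by
      funext x; simp [Equiv.swap_apply_def]
    rw [this]
    apply Measurable.ite (by simpa using (MeasurableSet.singleton u)) measurable_const
    exact Measurable.ite (by simpa using (MeasurableSet.singleton v)) measurable_const
      measurable_id
  measurable_invFun := by
    have : ((Equiv.swap u v).symm : X → X)
        = fun x => if x = u then v else if x = v then u else x := by
      funext x; simp [Equiv.symm_swap, Equiv.swap_apply_def]
    rw [this]
    apply Measurable.ite (by simpa using (MeasurableSet.singleton u)) measurable_const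
    exact Measurable.ite (by simpa using (MeasurableSet.singleton v)) measurable_const
      measurable_id

lemma swapME_coe {X : Type*} [MeasurableSpace X] [MeasurableSingletonClass X] [DecidableEq X]
    (u v : X) : (swapME u v : X → X) = Equiv.swap u v := rfl

/-- **Aperiodic automorphisms have empty interior in the weak topology.** Given an
aperiodic Borel automorphism `T` of a nonempty standard Borel space and a finite Borel
partition `F₁, …, Fₙ` of `X`, there is a non-aperiodic Borel automorphism `P` (one having
a periodic point) with `P(Fᵢ) = T(Fᵢ)` for all `i`. -/
theorem stmt_3 {X : Type*} [MeasurableSpace X] [StandardBorelSpace X] [Nonempty X]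
    (T : X ≃ᵐ X)
    (hT : ∀ x : X, ∀ n : ℕ, 1 ≤ n → (T : X → X)^[n] x ≠ x)
    (n : ℕ) (F : Fin n → Set X)
    (hF : ∀ i, MeasurableSet (F i))
    (hdisj : ∀ i j : Fin n, i ≠ j → Disjoint (F i) (F j))
    (hcover : (⋃ i, F i) = Set.univ) :
    ∃ P : X ≃ᵐ X,
      (∃ x : X, ∃ k : ℕ, 1 ≤ k ∧ ((P : X → X))^[k] x = x) ∧
      (∀ i, (P : X → X) '' F i = (T : X → X) '' F i) := by
  classical
  obtain ⟨x₀⟩ := ‹Nonempty X›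
  -- index of the piece containing T^[m] x₀
  have hmem : ∀ m : ℕ, ∃ i : Fin n, (T : X → X)^[m] x₀ ∈ F i := by
    intro m
    have : (T : X → X)^[m] x₀ ∈ ⋃ i, F i := by rw [hcover]; trivial
    simpa using this
  choose f hf using hmem
  -- pigeonhole: two iterates in the same piece
  obtain ⟨a', b', hab', hfab⟩ :
      ∃ a b : Fin (n + 1), a ≠ b ∧ f (a : ℕ) = f (b : ℕ) := by
    obtain ⟨a, b, hab, h⟩ := Fintype.exists_ne_map_eq_of_card_lt
      (fun m : Fin (n + 1) => f (m : ℕ)) (by simp)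
    exact ⟨a, b, hab, h⟩
  -- wlog a < b as naturals
  obtain ⟨a, b, hab, hfeq⟩ : ∃ a b : ℕ, a < b ∧ f a = f b := by
    rcases lt_or_gt_of_ne hab' with h | h
    · exact ⟨a', b', h, hfab⟩
    · exact ⟨b', a', h, hfab.symm⟩
  set i₀ := f a with hi₀
  set u := (T : X → X)^[a] x₀ with hu
  set v := (T : X → X)^[b] x₀ with hv
  have hui : u ∈ F i₀ := hf a
  have hvi : v ∈ F i₀ := by rw [hfeq]; exact hf b
  -- all iterates of x₀ are distinct
  have hdist : ∀ p q : ℕ, p < q → (T : X → X)^[p] x₀ ≠ (T : X → X)^[q] x₀ := by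
    intro p q hpq h
    have : (T : X → X)^[q - p] ((T : X → X)^[p] x₀) = (T : X → X)^[p] x₀ := by
      rw [← Function.iterate_add_apply]
      rw [Nat.sub_add_cancel hpq.le]
      exact h.symm
    exact hT _ (q - p) (by omega) this
  have huv : u ≠ v := hdist a b hab
  -- the automorphism: swap u v, then T
  set σ : X ≃ᵐ X := swapME u v with hσ
  have hPapp : ∀ x : X, (σ.trans T : X → X) x = T (Equiv.swap u v x) := fun x => rfl
  refine ⟨σ.trans T, ?_, ?_⟩
  · -- periodic point: v, with period b - a
    have hswap_other : ∀ x : X, x ≠ u → x ≠ v → Equiv.swap u v x = x := by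
      intro x h1 h2; exact Equiv.swap_apply_of_ne_of_ne h1 h2
    have key : ∀ j : ℕ, j ≤ b - a - 1 →
        (⇑(σ.trans T))^[j] ((T : X → X)^[a + 1] x₀) = (T : X → X)^[a + 1 + j] x₀ := by
      intro j hj
      induction j with
      | zero => simp
      | succ k ih =>
        rw [Function.iterate_succ_apply', ih (by omega), hPapp]
        have hne1 : (T : X → X)^[a + 1 + k] x₀ ≠ u := (hdist a (a + 1 + k) (by omega)).symm
        have hne2 : (T : X → X)^[a + 1 + k] x₀ ≠ v := hdist (a + 1 + k) b (by omega)
        rw [hswap_other _ hne1 hne2]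
        rw [← Function.iterate_succ_apply' (T : X → X)]
        congr 1
    refine ⟨v, b - a, by omega, ?_⟩
    obtain ⟨c, hc⟩ : ∃ c, b - a = c + 1 := ⟨b - a - 1, by omega⟩
    have h2 : (⇑(σ.trans T)) v = (T : X → X)^[a + 1] x₀ := by
      rw [hPapp, Equiv.swap_apply_right, hu, ← Function.iterate_succ_apply' (T : X → X)]
    rw [hc, Function.iterate_succ_apply, h2, key c (by omega)]
    rw [hv]
    congr 1
    omega
  · -- images agree
    intro j
    have hcoe : (⇑(σ.trans T) : X → X) = (T : X → X) ∘ (Equiv.swap u v) := by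
      funext x; exact hPapp x
    -- swap maps each F j onto itself
    have himg : (Equiv.swap u v) '' F j = (Equiv.swap u v) ⁻¹' F j := by
      rw [Equiv.image_eq_preimage_symm]
      simp [Equiv.symm_swap]
    have hfix : (Equiv.swap u v) '' F j = F j := by
      rw [himg]
      ext x
      show Equiv.swap u v x ∈ F j ↔ x ∈ F j
      by_cases hj : j = i₀
      · subst hj
        by_cases hxu : x = u
        · subst hxu; rw [Equiv.swap_apply_left]; exact ⟨fun _ => hui, fun _ => hvi⟩
        · by_cases hxv : x = v
          · subst hxv; rw [Equiv.swap_apply_right]; exact ⟨fun _ => hvi, fun _ => hui⟩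
          · rw [Equiv.swap_apply_of_ne_of_ne hxu hxv]
      · have hunotj : u ∉ F j := fun h => (hdisj j i₀ hj).le_bot ⟨h, hui⟩
        have hvnotj : v ∉ F j := fun h => (hdisj j i₀ hj).le_bot ⟨h, hvi⟩
        by_cases hxu : x = u
        · subst hxu; rw [Equiv.swap_apply_left]
          exact ⟨fun h => absurd h hvnotj, fun h => absurd h hunotj⟩
        · by_cases hxv : x = v
          · subst hxv; rw [Equiv.swap_apply_right]
            exact ⟨fun h => absurd h hunotj, fun h => absurd h hvnotj⟩
          · rw [Equiv.swap_apply_of_ne_of_ne hxu hxv]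
    rw [hcoe, Set.image_comp, hfix]
end

section
/- Let T be a Borel automorphism of a standard Borel space (X, 𝓑) and let F₁, …, Fₙ be Borel subsets of X. Then there exists a smooth Borel automorphism S of X (i.e. there exists a Borel set A ⊆ X which intersects every S-orbit in exactly one point) such that S(Fᵢ) = T(Fᵢ) for every i = 1, …, n. In other words, the smooth Borel automorphisms are dense in Aut(X, 𝓑) with respect to the weak topology p. -/
/-!
Refine `F₁, …, Fₙ` to the finite partition into atoms `Aₚ` and put `Bₚ = T(Aₚ)`; it suffices
to find a smooth `S` with `S(Aₚ) = Bₚ` for all `p`. Collect into a countable set `V` every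
countable cell `Aₚ ∩ B_q` and a countably infinite part of every uncountable one, so that
`Aₚ ∩ V` and `Bₚ ∩ V` are equinumerous. Off `V` every cell is uncountable, so there is a Borel
`ℓ : X → ℤ` whose level sets meet each of these cells in an uncountable set. The Borel
isomorphism theorem then gives a Borel automorphism `S` mapping `Aₚ ∩ V` onto `Bₚ ∩ V` and the
level-`k` part of `Aₚ \ V` onto the level-`(k + 1)` part of `Bₚ \ V`. Thus `S` preserves `V`
and raises `ℓ` by one off `V`, and a Borel transversal of its orbits consists of one point of
each orbit in `V` together with `{ℓ = 0} \ V`.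
-/

open Set

namespace Equiv.Perm

variable {α : Type*}

def IsSmooth [MeasurableSpace α] (f : Perm α) : Prop :=
  ∃ A : Set α, MeasurableSet A ∧ ∀ x, ∃! y, y ∈ A ∧ f.SameCycle x y

theorem existsUnique_mem_range_sameCycle {f : Perm α} {r : α → α}
    (hr : ∀ x, f.SameCycle x (r x)) (hr' : ∀ x y, f.SameCycle x y → r x = r y) (x : α) :
    ∃! y, y ∈ range r ∧ f.SameCycle x y := by
  refine ⟨r x, ⟨mem_range_self x, hr x⟩, ?_⟩
  rintro _ ⟨⟨z, rfl⟩, hxz⟩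
  rw [hr' x (r z) hxz, ← hr' z (r z) (hr z)]

theorem zpow_apply_mem_iff {f : Perm α} {s : Set α} (hs : ∀ x, f x ∈ s ↔ x ∈ s) (k : ℤ)
    (x : α) : (f ^ k) x ∈ s ↔ x ∈ s := by
  induction k using Int.induction_on generalizing x with
  | zero => rfl
  | succ k ih => rw [zpow_add_one, mul_apply, ih, hs]
  | pred k ih => rw [zpow_sub_one, mul_apply, ih, ← hs, ← mul_apply, mul_inv_cancel, one_apply]

theorem zpow_apply_eq_add {f : Perm α} {s : Set α} (hs : ∀ x, f x ∈ s ↔ x ∈ s)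
    {ℓ : α → ℤ} (hℓ : ∀ x ∉ s, ℓ (f x) = ℓ x + 1) (k : ℤ) {x : α} (hx : x ∉ s) :
    ℓ ((f ^ k) x) = ℓ x + k := by
  induction k using Int.induction_on generalizing x with
  | zero => simp
  | succ k ih => rw [zpow_add_one, mul_apply, ih (by rwa [hs]), hℓ x hx]; ring
  | pred k ih =>
    have hf : f (f⁻¹ x) = x := by rw [← mul_apply, mul_inv_cancel, one_apply]
    have hx' : f⁻¹ x ∉ s := by rwa [← hs, hf]
    have hstep := hℓ _ hx'
    rw [hf] at hstep
    rw [zpow_sub_one, mul_apply, ih hx', hstep]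
    ring

theorem isSmooth_of_shift [MeasurableSpace α] [MeasurableSingletonClass α] {f : Perm α}
    {V : Set α} (hV : V.Countable) (hfV : ∀ x, f x ∈ V ↔ x ∈ V) {ℓ : α → ℤ}
    (hℓ : Measurable ℓ) (hfℓ : ∀ x ∉ V, ℓ (f x) = ℓ x + 1) : f.IsSmooth := by
  classical
  let r : α → α := fun x =>
    if x ∈ V then (⟦x⟧ : Quotient (SameCycle.setoid f)).out else (f ^ (-ℓ x)) x
  have hrV : ∀ x ∉ V, r x ∉ V ∧ ℓ (r x) = 0 := fun x hx => by
    simp only [r, if_neg hx, zpow_apply_mem_iff hfV, zpow_apply_eq_add hfV hfℓ _ hx]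
    exact ⟨hx, by ring⟩
  have hr : ∀ x, f.SameCycle x (r x) := fun x => by
    by_cases hx : x ∈ V
    · simp only [r, if_pos hx]
      exact (Quotient.mk_out (s := SameCycle.setoid f) x).symm
    · simp only [r, if_neg hx]
      exact ⟨_, rfl⟩
  have hr' : ∀ x y, f.SameCycle x y → r x = r y := by
    rintro x _ ⟨k, rfl⟩
    by_cases hx : x ∈ V
    · simp only [r, if_pos hx, if_pos ((zpow_apply_mem_iff hfV k x).2 hx)]
      exact congrArg Quotient.out (Quotient.sound ⟨k, rfl⟩)
    · simp only [r, if_neg hx, if_neg (mt (zpow_apply_mem_iff hfV k x).1 hx),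
        zpow_apply_eq_add hfV hfℓ k hx, ← mul_apply, ← zpow_add]
      congr 2
      ring
  have hrange : range r = r '' V ∪ (Vᶜ ∩ ℓ ⁻¹' {0}) := by
    refine Subset.antisymm ?_ (union_subset (image_subset_range r V) ?_)
    · rintro _ ⟨x, rfl⟩
      by_cases hx : x ∈ V
      · exact Or.inl (mem_image_of_mem r hx)
      · exact Or.inr (hrV x hx)
    · rintro x ⟨hx, hx0 : ℓ x = 0⟩
      refine ⟨x, ?_⟩
      simp only [r, if_neg hx, hx0, neg_zero, zpow_zero, one_apply]
  refine ⟨range r, ?_, existsUnique_mem_range_sameCycle hr hr'⟩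
  rw [hrange]
  exact (hV.image r).measurableSet.union
    (hV.measurableSet.compl.inter (hℓ (measurableSet_singleton 0)))

end Equiv.Perm

theorem measurable_of_domRestrict_preimage_singleton {X Y I : Type*} [MeasurableSpace X]
    [MeasurableSpace Y] [Countable I] {f : X → I} (hf : ∀ i, MeasurableSet (f ⁻¹' {i}))
    {h : X → Y} (hh : ∀ i, Measurable ((f ⁻¹' {i}).domRestrict h)) : Measurable h := by
  convert measurable_liftCover (fun i => f ⁻¹' {i}) hf _ hh (fun _ _ _ _ _ => rfl)
    (by ext x; simp)
  funext x
  exact (liftCover_of_mem (f := fun i => (f ⁻¹' {i}).domRestrict h) (i := f x) rfl).symm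

theorem exists_measurableEquiv_apply_eq {X Y I : Type*} [MeasurableSpace X]
    [StandardBorelSpace X] [MeasurableSpace Y] [StandardBorelSpace Y] [Countable I]
    {f : X → I} {g : Y → I} (hf : ∀ i, MeasurableSet (f ⁻¹' {i}))
    (hg : ∀ i, MeasurableSet (g ⁻¹' {i}))
    (hfg : ∀ i, Nonempty (f ⁻¹' {i} ≃ g ⁻¹' {i})) :
    ∃ S : X ≃ᵐ Y, ∀ x, g (S x) = f x := by
  have e : ∀ i, f ⁻¹' {i} ≃ᵐ g ⁻¹' {i} := fun i =>
    have := (hf i).standardBorel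
    have := (hg i).standardBorel
    PolishSpace.Equiv.measurableEquiv (hfg i).some
  let σ : X ≃ Y := (Equiv.sigmaFiberEquiv f).symm.trans
    ((Equiv.sigmaCongrRight fun i => (e i).toEquiv).trans (Equiv.sigmaFiberEquiv g))
  have hσ : ∀ i, (f ⁻¹' {i}).domRestrict σ = Subtype.val ∘ e i := by
    intro i; ext ⟨x, hx⟩; obtain rfl : f x = i := hx; rfl
  have hσ' : ∀ i, (g ⁻¹' {i}).domRestrict σ.symm = Subtype.val ∘ (e i).symm := by
    intro i; ext ⟨y, hy⟩; obtain rfl : g y = i := hy; rfl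
  refine ⟨⟨σ, ?_, ?_⟩, fun x => (e (f x) ⟨x, rfl⟩).2⟩
  · refine measurable_of_domRestrict_preimage_singleton hf fun i => ?_
    rw [hσ]
    exact measurable_subtype_coe.comp (e i).measurable
  · refine measurable_of_domRestrict_preimage_singleton hg fun i => ?_
    rw [hσ']
    exact measurable_subtype_coe.comp (e i).symm.measurable

theorem Set.nonempty_equiv_of_countable_of_infinite {X : Type*} {s t : Set X}
    (hs : s.Countable) (hs' : s.Infinite) (ht : t.Countable) (ht' : t.Infinite) :
    Nonempty (s ≃ t) :=
  have := hs.to_subtype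
  have := hs'.to_subtype
  have := ht.to_subtype
  have := ht'.to_subtype
  nonempty_equiv_of_countable

theorem MeasurableSet.nonempty_equiv_of_not_countable {X : Type*} [MeasurableSpace X]
    [StandardBorelSpace X] {s t : Set X} (hs : MeasurableSet s) (ht : MeasurableSet t)
    (hs' : ¬s.Countable) (ht' : ¬t.Countable) : Nonempty (s ≃ t) :=
  have := hs.standardBorel
  have := ht.standardBorel
  ⟨(PolishSpace.measurableEquivOfNotCountable (by rwa [countable_coe_iff])
    (by rwa [countable_coe_iff])).toEquiv⟩

theorem exists_countable_forall_subset_and_infinite_inter {X J : Type*} [Countable J]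
    (C : J → Set X) :
    ∃ V : Set X, V.Countable ∧ (∀ j, (C j).Countable → C j ⊆ V) ∧
      ∀ j, (C j).Infinite → (C j ∩ V).Infinite := by
  have : ∀ j, ∃ N ⊆ C j, N.Countable ∧ ((C j).Countable → C j ⊆ N) ∧
      ((C j).Infinite → N.Infinite) := fun j => by
    by_cases h : (C j).Countable
    · exact ⟨C j, subset_rfl, h, fun _ => subset_rfl, id⟩
    · obtain ⟨N, hN, hNc, hNi⟩ :=
        Infinite.exists_subset_countable_infinite fun hfin => h hfin.countable
      exact ⟨N, hN, hNc, fun hc => absurd hc h, fun _ => hNi⟩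
  choose N hNC hNc hNsub hNinf using this
  exact ⟨⋃ j, N j, countable_iUnion hNc, fun j hj => (hNsub j hj).trans (subset_iUnion N j),
    fun j hj => (hNinf j hj).mono (subset_inter (hNC j) (subset_iUnion N j))⟩

theorem exists_measurable_int_not_countable_inter_preimage {X J : Type*} [MeasurableSpace X]
    [StandardBorelSpace X] [Countable J] {c : X → J} (hc : ∀ j, MeasurableSet (c ⁻¹' {j})) :
    ∃ ℓ : X → ℤ, Measurable ℓ ∧
      ∀ j, ¬(c ⁻¹' {j}).Countable → ∀ k,
        ¬(c ⁻¹' {j} ∩ ℓ ⁻¹' {k}).Countable := by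
  classical
  have θ : ∀ j, ¬(c ⁻¹' {j}).Countable → c ⁻¹' {j} ≃ᵐ ℝ × ℤ := fun j hj =>
    have := (hc j).standardBorel
    PolishSpace.measurableEquivOfNotCountable (by rwa [countable_coe_iff]) not_countable
  let ℓ : X → ℤ := fun x =>
    if h : (c ⁻¹' {c x}).Countable then 0 else (θ (c x) h ⟨x, rfl⟩).2
  have hℓ : ∀ j hj (x : c ⁻¹' {j}), ℓ x = (θ j hj x).2 := by
    rintro j hj ⟨x, hx⟩
    obtain rfl : c x = j := hx
    simp only [ℓ, dif_neg hj]
  refine ⟨ℓ, measurable_of_domRestrict_preimage_singleton hc fun j => ?_, fun j hj k => ?_⟩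
  · by_cases hj : (c ⁻¹' {j}).Countable
    · have := hj.to_subtype
      exact measurable_of_countable _
    · have : (c ⁻¹' {j}).domRestrict ℓ = Prod.snd ∘ θ j hj := funext (hℓ j hj)
      rw [this]
      exact measurable_snd.comp (θ j hj).measurable
  · intro hcount
    have hmaps : MapsTo (fun r : ℝ => ((θ j hj).symm (r, k) : X)) univ
        (c ⁻¹' {j} ∩ ℓ ⁻¹' {k}) :=
      fun r _ => ⟨((θ j hj).symm (r, k)).2, by simp [hℓ j hj]⟩
    have hinj : InjOn (fun r : ℝ => ((θ j hj).symm (r, k) : X)) univ := fun r _ r' _ h => by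
      simpa using (θ j hj).symm.injective (Subtype.ext h)
    exact Cardinal.not_countable_real (hmaps.countable_of_injOn hinj hcount)

theorem exists_mem_not_countable_fiber {X J : Type*} [Countable J] {c : X → J} {s : Set X}
    (hs : ¬s.Countable) : ∃ x ∈ s, ¬(c ⁻¹' {c x}).Countable := by
  by_contra! h
  refine hs (((c '' s).to_countable.biUnion (t := fun j _ => c ⁻¹' {j}) ?_).mono ?_)
  · rintro _ ⟨x, hx, rfl⟩
    exact h x hx
  · exact fun x hx => mem_biUnion (mem_image_of_mem c hx) rfl

section Cells

variable {X J P : Type*} {c : X → J} {a : X → P} {V : Set X} {p : P}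
variable (hac : ∀ x y, c x = c y → a x = a y)
include hac

theorem preimage_subset_of_countable (hV : ∀ j, (c ⁻¹' {j}).Countable → c ⁻¹' {j} ⊆ V)
    (hp : (a ⁻¹' {p}).Countable) : a ⁻¹' {p} ⊆ V := fun x hx =>
  hV _ (hp.mono fun y hy => (hac y x hy).trans hx) rfl

variable [Countable J]

theorem infinite_inter_of_not_countable
    (hV : ∀ j, (c ⁻¹' {j}).Infinite → (c ⁻¹' {j} ∩ V).Infinite)
    (hp : ¬(a ⁻¹' {p}).Countable) : (a ⁻¹' {p} ∩ V).Infinite := by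
  obtain ⟨x, hx, hcx⟩ := exists_mem_not_countable_fiber (c := c) hp
  exact (hV _ fun hfin => hcx hfin.countable).mono
    (inter_subset_inter_left V fun y hy => (hac y x hy).trans hx)

theorem not_countable_diff_inter_of_not_countable (hV : V.Countable) {ℓ : X → ℤ}
    (hℓ : ∀ j, ¬(c ⁻¹' {j}).Countable → ∀ k, ¬(c ⁻¹' {j} ∩ ℓ ⁻¹' {k}).Countable)
    (hp : ¬(a ⁻¹' {p}).Countable) (k : ℤ) :
    ¬((a ⁻¹' {p} \ V) ∩ ℓ ⁻¹' {k}).Countable := by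
  obtain ⟨x, hx, hcx⟩ := exists_mem_not_countable_fiber (c := c) hp
  refine fun h => hℓ _ hcx k ((h.union hV).mono ?_)
  rintro y ⟨hy, hyk⟩
  by_cases hyV : y ∈ V
  · exact Or.inr hyV
  · exact Or.inl ⟨⟨(hac y x hy).trans hx, hyV⟩, hyk⟩

end Cells

section CellPairs

variable {X J P : Type*} [Countable J] {c : X → J} {a b : X → P} {V : Set X} {p : P}
variable (hac : ∀ x y, c x = c y → a x = a y) (hbc : ∀ x y, c x = c y → b x = b y)
include hac hbc

theorem nonempty_equiv_inter_of_nonempty_equiv (hV : V.Countable)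
    (hVsub : ∀ j, (c ⁻¹' {j}).Countable → c ⁻¹' {j} ⊆ V)
    (hVinf : ∀ j, (c ⁻¹' {j}).Infinite → (c ⁻¹' {j} ∩ V).Infinite)
    (hab : Nonempty (a ⁻¹' {p} ≃ b ⁻¹' {p})) : Nonempty (↥(a ⁻¹' {p} ∩ V) ≃ ↥(b ⁻¹' {p} ∩ V)) := by
  have hcount : (a ⁻¹' {p}).Countable ↔ (b ⁻¹' {p}).Countable := by
    simpa only [countable_coe_iff] using hab.some.countable_iff
  by_cases hp : (a ⁻¹' {p}).Countable
  · rwa [inter_eq_left.2 (preimage_subset_of_countable hac hVsub hp),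
      inter_eq_left.2 (preimage_subset_of_countable hbc hVsub (hcount.1 hp))]
  · exact nonempty_equiv_of_countable_of_infinite (hV.mono inter_subset_right)
      (infinite_inter_of_not_countable hac hVinf hp) (hV.mono inter_subset_right)
      (infinite_inter_of_not_countable hbc hVinf (mt hcount.2 hp))

theorem nonempty_equiv_diff_inter_of_nonempty_equiv [MeasurableSpace X] [StandardBorelSpace X]
    [MeasurableSpace P] [MeasurableSingletonClass P] (ha : Measurable a) (hb : Measurable b)
    (hV : V.Countable) (hVsub : ∀ j, (c ⁻¹' {j}).Countable → c ⁻¹' {j} ⊆ V) {ℓ₁ ℓ₂ : X → ℤ}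
    (hℓ₁m : Measurable ℓ₁) (hℓ₂m : Measurable ℓ₂)
    (hℓ₁ : ∀ j, ¬(c ⁻¹' {j}).Countable → ∀ k, ¬(c ⁻¹' {j} ∩ ℓ₁ ⁻¹' {k}).Countable)
    (hℓ₂ : ∀ j, ¬(c ⁻¹' {j}).Countable → ∀ k, ¬(c ⁻¹' {j} ∩ ℓ₂ ⁻¹' {k}).Countable)
    (hab : Nonempty (a ⁻¹' {p} ≃ b ⁻¹' {p})) (k₁ k₂ : ℤ) :
    Nonempty (↥((a ⁻¹' {p} \ V) ∩ ℓ₁ ⁻¹' {k₁}) ≃ ↥((b ⁻¹' {p} \ V) ∩ ℓ₂ ⁻¹' {k₂})) := by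
  have hcount : (a ⁻¹' {p}).Countable ↔ (b ⁻¹' {p}).Countable := by
    simpa only [countable_coe_iff] using hab.some.countable_iff
  by_cases hp : (a ⁻¹' {p}).Countable
  · rw [sdiff_eq_empty.2 (preimage_subset_of_countable hac hVsub hp),
      sdiff_eq_empty.2 (preimage_subset_of_countable hbc hVsub (hcount.1 hp)),
      empty_inter, empty_inter]
    exact ⟨Equiv.refl _⟩
  · exact MeasurableSet.nonempty_equiv_of_not_countable
      (((ha (measurableSet_singleton p)).diff hV.measurableSet).inter
        (hℓ₁m (measurableSet_singleton k₁)))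
      (((hb (measurableSet_singleton p)).diff hV.measurableSet).inter
        (hℓ₂m (measurableSet_singleton k₂)))
      (not_countable_diff_inter_of_not_countable hac hV hℓ₁ hp k₁)
      (not_countable_diff_inter_of_not_countable hbc hV hℓ₂ (mt hcount.2 hp) k₂)

end CellPairs

section AtomLevel

variable {X P : Type*} (V : Set X) (ℓ : X → ℤ) (a : X → P)

open Classical in
noncomputable def atomLevel (x : X) : P × Option ℤ :=
  (a x, if x ∈ V then none else some (ℓ x))

theorem atomLevel_preimage_none (p : P) :
    atomLevel V ℓ a ⁻¹' {(p, none)} = a ⁻¹' {p} ∩ V := by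
  ext x
  by_cases hx : x ∈ V <;> simp [atomLevel, hx]

theorem atomLevel_preimage_some (p : P) (k : ℤ) :
    atomLevel V ℓ a ⁻¹' {(p, some k)} = (a ⁻¹' {p} \ V) ∩ ℓ ⁻¹' {k} := by
  ext x
  by_cases hx : x ∈ V <;> simp [atomLevel, hx]

variable {V ℓ a} in
theorem measurableSet_atomLevel_preimage [MeasurableSpace X] [MeasurableSpace P]
    [MeasurableSingletonClass P] (hV : MeasurableSet V) (hℓ : Measurable ℓ) (ha : Measurable a)
    (i : P × Option ℤ) :
    MeasurableSet (atomLevel V ℓ a ⁻¹' {i}) := by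
  obtain ⟨p, _ | k⟩ := i
  · rw [atomLevel_preimage_none]
    exact (ha (measurableSet_singleton p)).inter hV
  · rw [atomLevel_preimage_some]
    exact ((ha (measurableSet_singleton p)).diff hV).inter (hℓ (measurableSet_singleton k))

variable {V ℓ a} in
theorem atomLevel_eq_atomLevel_iff {ℓ' : X → ℤ} {b : X → P} {x y : X} :
    atomLevel V ℓ a x = atomLevel V ℓ' b y ↔
      a x = b y ∧ (x ∈ V ↔ y ∈ V) ∧ (x ∉ V → ℓ x = ℓ' y) := by
  by_cases hx : x ∈ V <;> by_cases hy : y ∈ V <;> simp [atomLevel, hx, hy]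

end AtomLevel

theorem exists_isSmooth_apply_eq {X P : Type*} [MeasurableSpace X] [StandardBorelSpace X]
    [MeasurableSpace P] [MeasurableSingletonClass P] [Countable P] {a b : X → P}
    (ha : Measurable a) (hb : Measurable b)
    (hab : ∀ p, Nonempty (a ⁻¹' {p} ≃ b ⁻¹' {p})) :
    ∃ S : X ≃ᵐ X, Equiv.Perm.IsSmooth S.toEquiv ∧ ∀ x, b (S x) = a x := by
  let c : X → P × P := fun x => (a x, b x)
  have hac : ∀ x y, c x = c y → a x = a y := fun _ _ h => congrArg Prod.fst h
  have hbc : ∀ x y, c x = c y → b x = b y := fun _ _ h => congrArg Prod.snd h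
  obtain ⟨V, hVc, hVsub, hVinf⟩ :=
    exists_countable_forall_subset_and_infinite_inter fun j => c ⁻¹' {j}
  obtain ⟨ℓ, hℓm, hℓ⟩ := exists_measurable_int_not_countable_inter_preimage fun j =>
    (ha.prodMk hb) (measurableSet_singleton j)
  have hℓ' : ∀ j, ¬(c ⁻¹' {j}).Countable → ∀ k,
      ¬(c ⁻¹' {j} ∩ (fun x => ℓ x + 1) ⁻¹' {k}).Countable := fun j hj k => by
    have : (fun x => ℓ x + 1) ⁻¹' {k} = ℓ ⁻¹' {k - 1} := by ext; simp [eq_sub_iff_add_eq]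
    rw [this]
    exact hℓ j hj (k - 1)
  -- Labelling the source by level `ℓ + 1` and the target by level `ℓ` forces
  -- `ℓ (S x) = ℓ x + 1` off `V`.
  have hequiv : ∀ i, Nonempty (atomLevel V (fun x => ℓ x + 1) a ⁻¹' {i} ≃
      atomLevel V ℓ b ⁻¹' {i}) := by
    rintro ⟨p, _ | k⟩
    · rw [atomLevel_preimage_none, atomLevel_preimage_none]
      exact nonempty_equiv_inter_of_nonempty_equiv hac hbc hVc hVsub hVinf (hab p)
    · rw [atomLevel_preimage_some, atomLevel_preimage_some]
      exact nonempty_equiv_diff_inter_of_nonempty_equiv hac hbc ha hb hVc hVsub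
        (hℓm.add_const 1) hℓm hℓ' hℓ (hab p) k k
  obtain ⟨S, hS⟩ := exists_measurableEquiv_apply_eq
    (measurableSet_atomLevel_preimage hVc.measurableSet (hℓm.add_const 1) ha)
    (measurableSet_atomLevel_preimage hVc.measurableSet hℓm hb) hequiv
  have hS' := fun x => atomLevel_eq_atomLevel_iff.1 (hS x).symm
  exact ⟨S, Equiv.Perm.isSmooth_of_shift hVc (fun x => (hS' x).2.1.symm) hℓm
    (fun x hx => ((hS' x).2.2 hx).symm), fun x => (hS' x).1.symm⟩

theorem Equiv.image_preimage_of_apply_eq {α β γ : Type*} (e : α ≃ β) {a : α → γ}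
    {b : β → γ} (h : ∀ x, b (e x) = a x) (U : Set γ) : e '' (a ⁻¹' U) = b ⁻¹' U := by
  ext y
  rw [e.image_eq_preimage_symm]
  simp only [mem_preimage, ← h (e.symm y), e.apply_symm_apply]

/-- **Smooth automorphisms are weakly dense.** For every Borel automorphism `T` of a
standard Borel space and every finite list of Borel sets `F₁, …, Fₙ` there is a smooth
Borel automorphism `S` (one admitting a Borel set meeting every `S`-orbit exactly once)
with `S(Fᵢ) = T(Fᵢ)` for all `i`. -/
theorem stmt_4 {X : Type*} [MeasurableSpace X] [StandardBorelSpace X]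
    (T : X ≃ᵐ X) (n : ℕ) (F : Fin n → Set X) (hF : ∀ i, MeasurableSet (F i)) :
    ∃ S : X ≃ᵐ X,
      (∃ A : Set X, MeasurableSet A ∧
        ∀ x : X, ∃! y : X, y ∈ A ∧ ∃ k : ℤ, (S.toEquiv ^ k) x = y) ∧
      (∀ i, (S : X → X) '' F i = (T : X → X) '' F i) := by
  let a : X → Set (Fin n) := fun x => {i | x ∈ F i}
  have ha : Measurable a := measurable_set_iff.2 fun i => (hF i).mem
  have hTa : ∀ x, (a ∘ T.symm) (T x) = a x := fun x => by simp
  obtain ⟨S, hS, hSa⟩ := exists_isSmooth_apply_eq ha (ha.comp T.symm.measurable)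
    fun p => ⟨T.toEquiv.subtypeEquiv fun x => by simp⟩
  refine ⟨S, hS, fun i => ?_⟩
  change S.toEquiv '' (a ⁻¹' {p | i ∈ p}) = T.toEquiv '' (a ⁻¹' {p | i ∈ p})
  rw [S.toEquiv.image_preimage_of_apply_eq hSa, T.toEquiv.image_preimage_of_apply_eq hTa]
end

section
/- Let T and R be aperiodic Borel automorphisms of a standard Borel space (X, 𝓑). Then for every ε > 0 and any finite list of Borel probability measures μ₁, …, μ_k on X there exists a Borel automorphism S of X such that μᵢ(E(S⁻¹ T S, R)) < ε for every i = 1, …, k. That is, the conjugacy class {S⁻¹ T S : S ∈ Aut(X, 𝓑)} of any aperiodic T is dense in the set of aperiodic Borel automorphisms with respect to the uniform topology τ. -/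
/-!
Pick a Borel set `A` that is `M`-separated and syndetic for `R` (a marker set, built greedily
from a countable cover of `X` by separated Borel sets); of its `M` pairwise disjoint translates
along the orbits one has small measure, together with its `R`-preimage. Every point then lies on
a level `< 2M` of an `R`-tower with base in `A`. Copy the `R`-tower over `a` level by level onto
the `T`-tower of the same height over `u a`, where `u` is a Borel injection into a marker set for
`T`: this gives a Borel injection `σ` with `σ R = T σ` off the tops `R⁻¹ A` of the towers. To make
it onto, the columns over a piece `P ⊆ A` of full cardinality and small measure are instead sent,
by the Borel isomorphism theorem, onto the complement of the image, which still contains a second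
Borel copy of `X`. Then `S⁻¹ T S` agrees with `R` except on `R⁻¹ A`, the discarded columns, and
their images under `R`.
-/

open MeasureTheory Set Function
open scoped Cardinal ENNReal

namespace BorelConjugacy

universe v

variable {X : Type v}

section Iterate

variable [MeasurableSpace X] (e : X ≃ᵐ X)

lemma iterate_apply_iterate_symm (n : ℕ) (x : X) : e^[n] (e.symm^[n] x) = x :=
  (LeftInverse.iterate e.apply_symm_apply n) x

lemma iterate_symm_apply_iterate (n : ℕ) (x : X) : e.symm^[n] (e^[n] x) = x :=
  (LeftInverse.iterate e.symm_apply_apply n) x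

lemma commute_iterate_iterate_symm (m n : ℕ) : Function.Commute e^[m] e.symm^[n] :=
  Function.Commute.iterate_iterate (fun x => by simp) m n

lemma iterate_apply_iterate_symm_of_le {m n : ℕ} (h : m ≤ n) (x : X) :
    e^[m] (e.symm^[n] x) = e.symm^[n - m] x := by
  conv_lhs => rw [show n = (n - m) + m by omega, iterate_add_apply]
  rw [(commute_iterate_iterate_symm e m (n - m)).eq, iterate_apply_iterate_symm]

lemma iterate_symm_apply_iterate_of_le {m n : ℕ} (h : m ≤ n) (x : X) :
    e.symm^[m] (e^[n] x) = e^[n - m] x := by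
  conv_lhs => rw [show n = (n - m) + m by omega, iterate_add_apply]
  rw [← (commute_iterate_iterate_symm e (n - m) m).eq, iterate_symm_apply_iterate]

end Iterate

section Separated

def OrbitSeparated (f : X → X) (N : ℕ) (s : Set X) : Prop :=
  ∀ x ∈ s, ∀ j, 0 < j → j < N → f^[j] x ∉ s

def Syndetic (f : X → X) (N : ℕ) (s : Set X) : Prop :=
  ∀ x, ∃ n, 0 < n ∧ n ≤ N ∧ f^[n] x ∈ s

lemma Syndetic.mono {f : X → X} {N N' : ℕ} {s : Set X} (hs : Syndetic f N s) (h : N ≤ N') :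
    Syndetic f N' s := fun x => (hs x).imp fun _ hn => ⟨hn.1, hn.2.1.trans h, hn.2.2⟩

lemma OrbitSeparated.eq_of_iterate_eq {f : X → X} {N : ℕ} {s : Set X}
    (hs : OrbitSeparated f N s) (hf : Injective f) {i j : ℕ} {x y : X} (hx : x ∈ s) (hy : y ∈ s)
    (hi : i < N) (hj : j < N) (h : f^[i] x = f^[j] y) : i = j ∧ x = y := by
  wlog hij : i ≤ j generalizing i j x y
  · obtain ⟨h1, h2⟩ := this hy hx hj hi h.symm (by omega)
    exact ⟨h1.symm, h2.symm⟩
  rw [show j = i + (j - i) by omega, iterate_add_apply] at h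
  have hx' : x = f^[j - i] y := hf.iterate i h
  rcases Nat.eq_zero_or_pos (j - i) with h0 | hpos
  · exact ⟨by omega, by rwa [h0, iterate_zero_apply] at hx'⟩
  · exact absurd (hx' ▸ hx) (hs y hy _ hpos (by omega))

lemma exists_orbitSeparated_cover [MeasurableSpace X] [StandardBorelSpace X] {f : X → X}
    (hfm : Measurable f) (hf : ∀ x, x ∉ periodicPts f) (N : ℕ) :
    ∃ C : ℕ → Set X, (∀ n, MeasurableSet (C n)) ∧ (∀ n, OrbitSeparated f N (C n)) ∧
      ⋃ n, C n = univ := by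
  let := upgradeStandardBorel X
  obtain ⟨B, hBc, -, hB⟩ := TopologicalSpace.exists_countable_basis X
  let sep : Set X → Set X := fun U => U ∩ ⋂ j ∈ Finset.Ioo 0 N, f^[j] ⁻¹' Uᶜ
  have hsep (U : Set X) : OrbitSeparated f N (sep U) := fun x hx j hj0 hjN hjx =>
    (mem_iInter₂.1 hx.2 j (Finset.mem_Ioo.2 ⟨hj0, hjN⟩)) hjx.1
  refine ⟨fun n => sep (enumerateCountable hBc ∅ n), fun n => ?_, fun n => hsep _, ?_⟩
  · have hU : MeasurableSet (enumerateCountable hBc ∅ n) := by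
      rcases range_enumerateCountable_subset hBc ∅ (mem_range_self n) with h | h
      · rw [h]; exact .empty
      · exact (hB.isOpen h).measurableSet
    exact hU.inter (.biInter (to_countable _) fun j _ => hU.compl.preimage (hfm.iterate j))
  · refine eq_univ_of_forall fun x => ?_
    let F := (fun j => f^[j] x) '' (Finset.Ioo 0 N : Set ℕ)
    have hxF : x ∉ F := by
      rintro ⟨j, hj, hjx⟩
      exact hf x ⟨j, (Finset.mem_Ioo.1 hj).1, hjx⟩
    obtain ⟨U, hUB, hxU, hUF⟩ := hB.exists_subset_of_mem_open hxF
      ((Finset.finite_toSet _).image _).isClosed.isOpen_compl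
    obtain ⟨n, hn⟩ := subset_range_enumerate hBc ∅ hUB
    refine mem_iUnion.2 ⟨n, ?_⟩
    rw [hn]
    exact ⟨hxU, mem_iInter₂.2 fun j hj hjU => hUF hjU ⟨j, hj, rfl⟩⟩

variable [MeasurableSpace X]

def orbitNbhd (e : X ≃ᵐ X) (N : ℕ) (s : Set X) : Set X :=
  ⋃ j ∈ Finset.range N, (e^[j] ⁻¹' s ∪ e.symm^[j] ⁻¹' s)

lemma mem_orbitNbhd {e : X ≃ᵐ X} {N : ℕ} {s : Set X} {x : X} :
    x ∈ orbitNbhd e N s ↔ ∃ j < N, e^[j] x ∈ s ∨ e.symm^[j] x ∈ s := by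
  simp [orbitNbhd]

lemma measurableSet_orbitNbhd {s : Set X} (hs : MeasurableSet s) (e : X ≃ᵐ X) (N : ℕ) :
    MeasurableSet (orbitNbhd e N s) :=
  .biUnion (to_countable _) fun j _ =>
    (hs.preimage (e.measurable.iterate j)).union (hs.preimage (e.symm.measurable.iterate j))

lemma syndetic_of_orbitNbhd_eq_univ {e : X ≃ᵐ X} {N : ℕ} {s : Set X}
    (h : orbitNbhd e N s = univ) : Syndetic e (2 * N) s := by
  intro x
  obtain ⟨j, hj, hjx | hjx⟩ := mem_orbitNbhd.1 (h ▸ mem_univ (e^[N] x))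
  · exact ⟨j + N, by omega, by omega, by rwa [iterate_add_apply]⟩
  · exact ⟨N - j, by omega, by omega, by rwa [iterate_symm_apply_iterate_of_le e hj.le] at hjx⟩

def greedyMarker (e : X ≃ᵐ X) (N : ℕ) (C : ℕ → Set X) : ℕ → Set X
  | 0 => ∅
  | n + 1 => greedyMarker e N C n ∪ (C n \ orbitNbhd e N (greedyMarker e N C n))

lemma exists_orbitSeparated_syndetic [StandardBorelSpace X] (e : X ≃ᵐ X)
    (he : ∀ x, x ∉ periodicPts e) {N : ℕ} (hN : 0 < N) :
    ∃ A, MeasurableSet A ∧ OrbitSeparated e N A ∧ Syndetic e (2 * N) A := by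
  obtain ⟨C, hCm, hCsep, hCcov⟩ := exists_orbitSeparated_cover e.measurable he N
  set U := greedyMarker e N C
  set B : ℕ → Set X := fun n => C n \ orbitNbhd e N (U n)
  have hUm (n : ℕ) : MeasurableSet (U n) := by
    induction n with
    | zero => exact .empty
    | succ n ih => exact ih.union ((hCm n).diff (measurableSet_orbitNbhd ih e N))
  have hUmono : Monotone U := monotone_nat_of_le_succ fun n => subset_union_left
  have hBU {m n : ℕ} (h : m < n) : B m ⊆ U n := subset_union_right.trans (hUmono h)
  have hUB {n : ℕ} {x : X} (hx : x ∈ U n) : ∃ m, x ∈ B m := by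
    induction n with
    | zero => exact absurd hx (notMem_empty x)
    | succ n ih => exact hx.elim ih fun h => ⟨n, h⟩
  refine ⟨⋃ n, U n, .iUnion hUm, ?_, syndetic_of_orbitNbhd_eq_univ ?_⟩
  · rintro x hx j hj0 hjN hy
    obtain ⟨n, hxn⟩ := hUB (mem_iUnion.1 hx).choose_spec
    obtain ⟨m, hym⟩ := hUB (mem_iUnion.1 hy).choose_spec
    rcases lt_trichotomy n m with h | rfl | h
    · refine hym.2 (mem_orbitNbhd.2 ⟨j, hjN, .inr ?_⟩)
      rw [iterate_symm_apply_iterate]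
      exact hBU h hxn
    · exact hCsep n x hxn.1 j hj0 hjN hym.1
    · exact hxn.2 (mem_orbitNbhd.2 ⟨j, hjN, .inl (hBU h hym)⟩)
  · refine eq_univ_of_forall fun x => ?_
    obtain ⟨n, hxn⟩ := mem_iUnion.1 (hCcov ▸ mem_univ x)
    by_cases hx : x ∈ orbitNbhd e N (U n)
    · obtain ⟨j, hj, hjx⟩ := mem_orbitNbhd.1 hx
      exact mem_orbitNbhd.2 ⟨j, hj, hjx.imp (subset_iUnion U n ·) (subset_iUnion U n ·)⟩
    · exact mem_orbitNbhd.2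
        ⟨0, hN, .inl (subset_iUnion U (n + 1) (hBU n.lt_succ_self ⟨hxn, hx⟩))⟩

variable {e : X ≃ᵐ X} {N : ℕ} {A : Set X}

lemma OrbitSeparated.preimage_iterate_symm (hA : OrbitSeparated e N A) (t : ℕ) :
    OrbitSeparated e N (e.symm^[t] ⁻¹' A) := fun x hx j hj0 hjN hjx =>
  hA _ hx j hj0 hjN (by rwa [mem_preimage, ← (commute_iterate_iterate_symm e j t).eq] at hjx)

lemma Syndetic.preimage_iterate_symm (hA : Syndetic e N A) (t : ℕ) :
    Syndetic e N (e.symm^[t] ⁻¹' A) := fun x => by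
  obtain ⟨n, hn0, hnN, hn⟩ := hA (e.symm^[t] x)
  exact ⟨n, hn0, hnN, by rwa [mem_preimage, ← (commute_iterate_iterate_symm e n t).eq]⟩

lemma OrbitSeparated.pairwiseDisjoint_preimage_iterate_symm (hA : OrbitSeparated e N A) :
    (Iio N).PairwiseDisjoint fun t => e.symm^[t] ⁻¹' A := by
  intro s hs t ht hst
  wlog h : s < t generalizing s t
  · exact (this ht hs hst.symm (by omega)).symm
  refine disjoint_left.2 fun x hxs hxt => hA _ hxt (t - s) (by omega) (by simp at ht; omega) ?_
  rwa [iterate_apply_iterate_symm_of_le e (by omega), Nat.sub_sub_self h.le]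

lemma Syndetic.exists_iterate_symm_mem (hA : Syndetic e N A) (x : X) :
    ∃ m < N, e.symm^[m] x ∈ A := by
  obtain ⟨n, hn0, hnN, hn⟩ := hA (e.symm^[N] x)
  exact ⟨N - n, by omega, by rwa [iterate_apply_iterate_symm_of_le e hnN] at hn⟩

lemma Syndetic.mk_eq [Infinite X] (hA : Syndetic e N A) : #A = #X := by
  refine (Cardinal.mk_set_le A).antisymm (not_lt.1 fun hlt => ?_)
  have hsurj : Surjective fun p : Fin N × A => e^[p.1] p.2 := fun x => by
    obtain ⟨m, hm, hmx⟩ := hA.exists_iterate_symm_mem x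
    exact ⟨(⟨m, hm⟩, ⟨_, hmx⟩), iterate_apply_iterate_symm e m x⟩
  have hX := Cardinal.infinite_iff.1 ‹Infinite X›
  have := Cardinal.mk_le_of_surjective hsurj
  simp only [Cardinal.mk_prod, Cardinal.mk_fin, Cardinal.lift_natCast, Cardinal.lift_uzero] at this
  exact this.not_gt (Cardinal.mul_lt_of_lt hX (Cardinal.natCast_lt_aleph0.trans_le hX) hlt)

end Separated

section Measure

variable [MeasurableSpace X]

lemma exists_lt_measure_lt_of_pairwiseDisjoint {ρ : Measure X} {δ : ℝ≥0∞} {M : ℕ}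
    (hM : ρ univ < M * δ) {s : ℕ → Set X} (hs : ∀ t, MeasurableSet (s t))
    (hd : (Iio M).PairwiseDisjoint s) : ∃ t < M, ρ (s t) < δ := by
  by_contra! h
  refine hM.not_ge (calc
    (M : ℝ≥0∞) * δ = ∑ t ∈ Finset.range M, δ := by simp
    _ ≤ ∑ t ∈ Finset.range M, ρ (s t) :=
      Finset.sum_le_sum fun t ht => h t (Finset.mem_range.1 ht)
    _ = ρ (⋃ t ∈ Finset.range M, s t) :=
      (measure_biUnion_finset (by simpa [Finset.coe_range] using hd) fun t _ => hs t).symm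
    _ ≤ ρ univ := measure_mono (subset_univ _))

lemma exists_syndetic_measure_lt [StandardBorelSpace X] (e : X ≃ᵐ X)
    (he : ∀ x, x ∉ periodicPts e) (ρ : Measure X) [IsFiniteMeasure ρ] {δ : ℝ≥0∞} (hδ : δ ≠ 0) :
    ∃ N A, MeasurableSet A ∧ Syndetic e N A ∧ ρ A < δ := by
  obtain ⟨M, hM⟩ := ENNReal.exists_nat_mul_gt hδ (measure_ne_top ρ univ)
  have hM0 : 0 < M := Nat.pos_of_ne_zero fun h => by simp [h] at hM
  obtain ⟨A, hAm, hAsep, hAsyn⟩ := exists_orbitSeparated_syndetic e he hM0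
  obtain ⟨t, -, ht⟩ := exists_lt_measure_lt_of_pairwiseDisjoint hM
    (fun t => hAm.preimage (e.symm.measurable.iterate t))
    hAsep.pairwiseDisjoint_preimage_iterate_symm
  exact ⟨_, _, hAm.preimage (e.symm.measurable.iterate t), hAsyn.preimage_iterate_symm t, ht⟩

end Measure

lemma mk_nat_prod [Infinite X] : #(ℕ × X) = #X := by
  simp [Cardinal.mk_prod, Cardinal.aleph0_mul_eq (Cardinal.infinite_iff.1 ‹_›)]

section BorelIsomorphism

variable [MeasurableSpace X] [StandardBorelSpace X]

lemma nonempty_measurableEquiv_of_mk_eq {Y : Type v} [MeasurableSpace Y] [StandardBorelSpace Y]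
    {s : Set X} (hs : MeasurableSet s) (h : #s = #Y) : Nonempty (s ≃ᵐ Y) :=
  have := hs.standardBorel
  (Cardinal.eq.1 h).map PolishSpace.Equiv.measurableEquiv

lemma exists_injective_nat_prod_subset [Infinite X] {B : Set X} (hB : MeasurableSet B)
    (hBX : #B = #X) : ∃ u : ℕ × X → X, Measurable u ∧ Injective u ∧ ∀ p, u p ∈ B := by
  obtain ⟨φ⟩ := nonempty_measurableEquiv_of_mk_eq hB (hBX.trans mk_nat_prod.symm)
  exact ⟨fun p => φ.symm p, measurable_subtype_coe.comp φ.symm.measurable,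
    Subtype.val_injective.comp φ.symm.injective, fun p => (φ.symm p).2⟩

lemma exists_subset_mk_eq_measure_preimage_lt [Infinite X] {B : Set X} (hB : MeasurableSet B)
    (hBX : #B = #X) {g : X → X} (hg : Measurable g) (ρ : Measure X) [IsFiniteMeasure ρ]
    {δ : ℝ≥0∞} (hδ : δ ≠ 0) : ∃ P ⊆ B, MeasurableSet P ∧ #P = #X ∧ ρ (g ⁻¹' P) < δ := by
  obtain ⟨u, hum, huinj, huB⟩ := exists_injective_nat_prod_subset hB hBX
  have hinj (n : ℕ) : Injective fun z => u (n, z) := huinj.comp (Prod.mk_right_injective n)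
  have hPm (n : ℕ) : MeasurableSet (range fun z => u (n, z)) :=
    ((hum.comp measurable_prodMk_left).measurableEmbedding (hinj n)).measurableSet_range
  obtain ⟨M, hM⟩ := ENNReal.exists_nat_mul_gt hδ (measure_ne_top ρ univ)
  obtain ⟨n, -, hn⟩ := exists_lt_measure_lt_of_pairwiseDisjoint hM (fun n => (hPm n).preimage hg)
    fun m _ n _ hmn =>
      (disjoint_range_iff.2 fun y z h => hmn (Prod.ext_iff.1 (huinj h)).1).preimage g
  exact ⟨_, range_subset_iff.2 fun z => huB _, hPm n, Cardinal.mk_range_eq _ (hinj n), hn⟩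

lemma exists_measurableEquiv_coe_eq {Y : Type*} [MeasurableSpace Y]
    [MeasurableSpace.CountablySeparated Y] {f : X → Y} (hf : Measurable f) (hbij : Bijective f) :
    ∃ S : X ≃ᵐ Y, ⇑S = f :=
  ⟨{ Equiv.ofBijective f hbij with
      measurable_toFun := hf
      measurable_invFun := fun s hs => by
        rw [← Equiv.image_eq_preimage_symm]
        exact (hf.measurableEmbedding hbij.1).measurableSet_image.2 hs }, rfl⟩

lemma exists_measurableEquiv_eqOn_compl {C : Set X} (hC : MeasurableSet C) {σ : X → X}
    (hσ : Measurable σ) (hinj : InjOn σ Cᶜ) (hcard : #C = #↥(σ '' Cᶜ)ᶜ) :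
    ∃ S : X ≃ᵐ X, EqOn S σ Cᶜ := by
  classical
  have := (hC.compl.image_of_measurable_injOn hσ hinj).compl.standardBorel
  obtain ⟨v⟩ := nonempty_measurableEquiv_of_mk_eq hC hcard
  let S : X → X := fun x => if h : x ∈ C then v ⟨x, h⟩ else σ x
  have hSm : Measurable S :=
    (measurable_subtype_coe.comp v.measurable).dite (hσ.comp measurable_subtype_coe) hC
  have hSinj : Injective S := by
    intro x y hxy
    by_cases hx : x ∈ C <;> by_cases hy : y ∈ C <;>
      simp only [S, hx, hy, dite_true, dite_false] at hxy
    · exact congrArg Subtype.val (v.injective (Subtype.ext hxy))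
    · exact ((v ⟨x, hx⟩).2 (hxy ▸ mem_image_of_mem σ hy)).elim
    · exact ((v ⟨y, hy⟩).2 (hxy ▸ mem_image_of_mem σ hx)).elim
    · exact hinj hx hy hxy
  have hSsurj : Surjective S := by
    intro y
    by_cases hy : y ∈ σ '' Cᶜ
    · obtain ⟨x, hx, rfl⟩ := hy
      exact ⟨x, dif_neg hx⟩
    · exact ⟨v.symm ⟨y, hy⟩, by simp [S]⟩
  obtain ⟨S', hS'⟩ := exists_measurableEquiv_coe_eq hSm ⟨hSinj, hSsurj⟩
  exact ⟨S', fun x hx => by rw [hS']; exact dif_neg hx⟩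

end BorelIsomorphism

section Tower

variable [MeasurableSpace X] (e : X ≃ᵐ X) (A : Set X)

-- Junk value `0` (`sInf ∅ = 0`) when the backward orbit of `x` misses `A`.
noncomputable def towerLevel (x : X) : ℕ := sInf {n | e.symm^[n] x ∈ A}

noncomputable def towerBase (x : X) : X := e.symm^[towerLevel e A x] x

variable {e A} {N : ℕ}

lemma iterate_towerLevel_towerBase (x : X) : e^[towerLevel e A x] (towerBase e A x) = x :=
  iterate_apply_iterate_symm e _ x

lemma Syndetic.towerLevel_lt (hA : Syndetic e N A) (x : X) : towerLevel e A x < N := by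
  obtain ⟨m, hm, hmx⟩ := hA.exists_iterate_symm_mem x
  exact (Nat.sInf_le hmx).trans_lt hm

lemma towerBase_of_mem {a : X} (ha : a ∈ A) : towerBase e A a = a := by
  have : towerLevel e A a = 0 := Nat.sInf_eq_zero.2 (.inl ha)
  rw [towerBase, this, iterate_zero_apply]

lemma Syndetic.towerLevel_apply (hA : Syndetic e N A) {x : X} (hx : e x ∉ A) :
    towerLevel e A (e x) = towerLevel e A x + 1 := by
  have hsucc (m : ℕ) : e.symm^[m + 1] (e x) = e.symm^[m] x := by simp
  have hpos : 1 ≤ towerLevel e A (e x) := Nat.one_le_iff_ne_zero.2 fun h =>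
    (Nat.sInf_eq_zero.1 h).elim hx
      ((hA.exists_iterate_symm_mem (e x)).elim fun m hm => nonempty_iff_ne_empty.1 ⟨m, hm.2⟩)
  have := Nat.sInf_add (p := fun m => e.symm^[m] (e x) ∈ A) hpos
  simp only [hsucc] at this
  exact this.symm

lemma Syndetic.towerBase_apply (hA : Syndetic e N A) {x : X} (hx : e x ∉ A) :
    towerBase e A (e x) = towerBase e A x := by
  rw [towerBase, hA.towerLevel_apply hx, iterate_succ_apply, e.symm_apply_apply, towerBase]

lemma measurable_iterate_apply {f : X → X} (hf : Measurable f) {k : X → ℕ} (hk : Measurable k)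
    {g : X → X} (hg : Measurable g) : Measurable fun x => f^[k x] (g x) :=
  (measurable_from_prod_countable_left (f := fun p : X × ℕ => f^[p.2] p.1)
    fun n => hf.iterate n).comp (hg.prodMk hk)

lemma Syndetic.measurable_towerLevel (hA : Syndetic e N A) (hAm : MeasurableSet A) :
    Measurable (towerLevel e A) := by
  classical
  have hne (x : X) : {n | e.symm^[n] x ∈ A}.Nonempty :=
    (hA.exists_iterate_symm_mem x).imp fun _ h => h.2
  have : towerLevel e A = fun x => Nat.find (hne x) := funext fun x => Nat.sInf_def (hne x)
  rw [this]
  exact measurable_find hne fun n => hAm.preimage (e.symm.measurable.iterate n)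

lemma Syndetic.measurable_towerBase (hA : Syndetic e N A) (hAm : MeasurableSet A) :
    Measurable (towerBase e A) :=
  measurable_iterate_apply e.symm.measurable (hA.measurable_towerLevel hAm) measurable_id

noncomputable def towerTransfer (T : X → X) (R : X ≃ᵐ X) (A : Set X) (u : X → X) (x : X) : X :=
  T^[towerLevel R A x] (u (towerBase R A x))

variable {T : X → X} {R : X ≃ᵐ X} {u : X → X}

lemma Syndetic.towerTransfer_apply (hA : Syndetic R N A) {x : X} (hx : R x ∉ A) :
    towerTransfer T R A u (R x) = T (towerTransfer T R A u x) := by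
  rw [towerTransfer, hA.towerLevel_apply hx, hA.towerBase_apply hx, iterate_succ_apply',
    towerTransfer]

lemma Syndetic.measurable_towerTransfer (hA : Syndetic R N A) (hAm : MeasurableSet A)
    (hT : Measurable T) (hu : Measurable u) : Measurable (towerTransfer T R A u) :=
  measurable_iterate_apply hT (hA.measurable_towerLevel hAm) (hu.comp (hA.measurable_towerBase hAm))

lemma Syndetic.towerTransfer_injective (hA : Syndetic R N A) {D : Set X}
    (hD : OrbitSeparated T N D) (hT : Injective T) (hu : Injective u) (huD : ∀ x, u x ∈ D) :
    Injective (towerTransfer T R A u) := by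
  intro x y h
  obtain ⟨hl, hb⟩ := hD.eq_of_iterate_eq hT (huD _) (huD _) (hA.towerLevel_lt x)
    (hA.towerLevel_lt y) h
  rw [← iterate_towerLevel_towerBase (e := R) (A := A) x,
    ← iterate_towerLevel_towerBase (e := R) (A := A) y, hl, hu hb]

lemma Syndetic.towerTransfer_ne (hA : Syndetic R N A) {D : Set X} (hD : OrbitSeparated T N D)
    (hT : Injective T) (huD : ∀ x, u x ∈ D) {d : X} (hd : d ∈ D) (hdu : d ∉ range u) (x : X) :
    towerTransfer T R A u x ≠ d := fun h =>
  hdu ⟨_, (hD.eq_of_iterate_eq (j := 0) hT (huD _) hd (hA.towerLevel_lt x)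
    ((Nat.zero_le _).trans_lt (hA.towerLevel_lt x)) h).2⟩

end Tower

lemma mk_eq_of_subset {s t : Set X} (hst : s ⊆ t) (hs : #s = #X) : #t = #X :=
  (Cardinal.mk_set_le t).antisymm (hs ▸ Cardinal.mk_le_mk_of_subset hst)

theorem exists_conj_eq_of_syndetic [MeasurableSpace X] [StandardBorelSpace X] [Infinite X]
    {T R : X ≃ᵐ X} (hT : ∀ x, x ∉ periodicPts T) {N : ℕ} {A P : Set X} (hAm : MeasurableSet A)
    (hA : Syndetic R N A) (hPm : MeasurableSet P) (hPA : P ⊆ A) (hP : #P = #X) :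
    ∃ S : X ≃ᵐ X, ∀ x, R x ∉ A → towerBase R A x ∉ P → S (R x) = T (S x) := by
  obtain ⟨D, hDm, hDsep, hDsyn⟩ := exists_orbitSeparated_syndetic T hT N.succ_pos
  obtain ⟨u, hum, huinj, huD⟩ := exists_injective_nat_prod_subset hDm hDsyn.mk_eq
  have hA' := hA.mono N.le_succ
  set σ := towerTransfer T R A fun z => u (0, z)
  set C := towerBase R A ⁻¹' P
  have hσinj : Injective σ := hA'.towerTransfer_injective hDsep T.injective
    (huinj.comp (Prod.mk_right_injective 0)) fun z => huD _
  have hcard : #C = #↥(σ '' Cᶜ)ᶜ := by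
    refine (mk_eq_of_subset (fun a ha => ?_) hP).trans (mk_eq_of_subset ?_
      (Cardinal.mk_range_eq _ (huinj.comp (Prod.mk_right_injective 1)))).symm
    · rwa [mem_preimage, towerBase_of_mem (hPA ha)]
    · rintro _ ⟨z, rfl⟩ ⟨x, -, hx⟩
      refine hA'.towerTransfer_ne hDsep T.injective (fun z => huD (0, z)) (huD (1, z)) ?_ x hx
      rintro ⟨y, hy⟩
      exact absurd (Prod.ext_iff.1 (huinj hy)).1 zero_ne_one
  obtain ⟨S, hS⟩ := exists_measurableEquiv_eqOn_compl ((hA.measurable_towerBase hAm) hPm)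
    (hA.measurable_towerTransfer hAm T.measurable (hum.comp measurable_prodMk_left))
    hσinj.injOn hcard
  refine ⟨S, fun x hRx hx => ?_⟩
  rw [hS (show R x ∉ C by rwa [mem_preimage, hA.towerBase_apply hRx]), hS hx,
    hA.towerTransfer_apply hRx]

lemma measure_conj_ne_le [MeasurableSpace X] {S T R : X ≃ᵐ X} {B : Set X} (hB : MeasurableSet B)
    (h : ∀ x ∉ B, S (R x) = T (S x)) (ν : Measure X) :
    ν ({x | S.symm (T (S x)) ≠ R x} ∪ {x | S.symm (T.symm (S x)) ≠ R.symm x}) ≤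
      (ν + ν.map R.symm) B := by
  calc _ ≤ ν (B ∪ R.symm ⁻¹' B) := by
        refine measure_mono (union_subset (fun x hx => ?_) fun x hx => ?_) <;> by_contra hxB <;>
          simp only [mem_union, mem_preimage, not_or] at hxB
        · exact hx (by rw [← h x hxB.1, S.symm_apply_apply])
        · have := h _ hxB.2
          rw [R.apply_symm_apply] at this
          exact hx (by rw [this, T.symm_apply_apply, S.symm_apply_apply])
    _ ≤ ν B + ν (R.symm ⁻¹' B) := measure_union_le _ _
    _ = (ν + ν.map R.symm) B := by rw [Measure.add_apply, Measure.map_apply R.symm.measurable hB]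

end BorelConjugacy

open BorelConjugacy in
/-- **Rokhlin property in Borel dynamics (uniform topology).** Let `T, R` be aperiodic
Borel automorphisms of a standard Borel space. Then for every `ε > 0` and Borel
probability measures `μ₁, …, μ_k` there is a Borel automorphism `S` with
`μᵢ(E(S⁻¹TS, R)) < ε` for all `i`, where `E(U, V) = {x : Ux ≠ Vx} ∪ {x : U⁻¹x ≠ V⁻¹x}`. -/
theorem stmt_5 {X : Type*} [MeasurableSpace X] [StandardBorelSpace X]
    (T R : X ≃ᵐ X)
    (hT : ∀ x : X, ∀ n : ℕ, 1 ≤ n → (T : X → X)^[n] x ≠ x)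
    (hR : ∀ x : X, ∀ n : ℕ, 1 ≤ n → (R : X → X)^[n] x ≠ x)
    (ε : ℝ) (hε : 0 < ε) (k : ℕ) (μ : Fin k → Measure X)
    (hμ : ∀ i, IsProbabilityMeasure (μ i)) :
    ∃ S : X ≃ᵐ X, ∀ i : Fin k,
      μ i ({x : X | S.symm (T (S x)) ≠ R x} ∪ {x : X | S.symm (T.symm (S x)) ≠ R.symm x})
        < ENNReal.ofReal ε := by
  rcases isEmpty_or_nonempty X with hX | ⟨⟨x₀⟩⟩
  · exact ⟨T, fun i => by simp [eq_empty_of_isEmpty, hε]⟩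
  have hT' : ∀ x, x ∉ periodicPts T := fun x ⟨n, hn, hx⟩ => hT x n hn hx
  have hR' : ∀ x, x ∉ periodicPts R := fun x ⟨n, hn, hx⟩ => hR x n hn hx
  have : Infinite X := not_finite_iff_infinite.1 fun _ => hT' x₀ (T.injective.mem_periodicPts x₀)
  let ν : Measure X := ∑ i, μ i
  let ρ : Measure X := ν + ν.map R.symm
  have hδ : ENNReal.ofReal ε / 2 ≠ 0 := by simp [hε]
  obtain ⟨N, A, hAm, hA, hAρ⟩ := exists_syndetic_measure_lt R hR' (ρ.map R) hδ
  obtain ⟨P, hPA, hPm, hP, hPρ⟩ := exists_subset_mk_eq_measure_preimage_lt hAm hA.mk_eq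
    (hA.measurable_towerBase hAm) ρ hδ
  obtain ⟨S, hS⟩ := exists_conj_eq_of_syndetic hT' hAm hA hPm hPA hP
  refine ⟨S, fun i => ?_⟩
  have hB : MeasurableSet (R ⁻¹' A ∪ towerBase R A ⁻¹' P) :=
    (hAm.preimage R.measurable).union (hPm.preimage (hA.measurable_towerBase hAm))
  calc _ ≤ ν _ := Measure.le_iff'.1
          (Finset.single_le_sum (f := μ) (fun j _ => Measure.zero_le _) (Finset.mem_univ i)) _
    _ ≤ ρ (R ⁻¹' A ∪ towerBase R A ⁻¹' P) := measure_conj_ne_le hB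
        (fun x hx => hS x (fun h => hx (.inl h)) fun h => hx (.inr h)) ν
    _ ≤ ρ.map R A + ρ (towerBase R A ⁻¹' P) := by
        rw [Measure.map_apply R.measurable hAm]; exact measure_union_le _ _
    _ < ENNReal.ofReal ε / 2 + ENNReal.ofReal ε / 2 := ENNReal.add_lt_add hAρ hPρ
    _ = ENNReal.ofReal ε := ENNReal.add_halves _
end

section
/- Let T be an aperiodic homeomorphism of a Cantor set Ω. Then for every integer m ≥ 2 there exist a positive integer k, nonempty clopen sets B₁, …, B_k ⊆ Ω, and integers h₁, …, h_k with hᵢ ≥ m, such that the family {T^j(Bᵢ) : 1 ≤ i ≤ k, 0 ≤ j ≤ hᵢ−1} is a partition of Ω into pairwise disjoint sets whose union is Ω (a Kakutani–Rokhlin partition into T-towers of height at least m). -/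
open Set Function

section KR
variable {Ω : Type*} [TopologicalSpace Ω] [CompactSpace Ω] [T2Space Ω]
  [TotallyDisconnectedSpace Ω]

variable {f g : Ω → Ω}

lemma KR_local (hf : Continuous f) {m : ℕ} {x : Ω}
    (hx : ∀ i, 1 ≤ i → i < m → f^[i] x ≠ x) :
    ∃ U : Set Ω, IsClopen U ∧ x ∈ U ∧
      ∀ i, 1 ≤ i → i < m → ∀ y ∈ U, f^[i] y ∉ U := by
  have key : ∀ i ∈ Finset.Ico 1 m, ∃ O : Set Ω, IsOpen O ∧ x ∈ O ∧
      ∀ y ∈ O, f^[i] y ∉ O := by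
    intro i hi
    rw [Finset.mem_Ico] at hi
    obtain ⟨u, v, hu, hv, hfu, hxv, huv⟩ := t2_separation (hx i hi.1 hi.2)
    refine ⟨v ∩ f^[i] ⁻¹' u, hv.inter ((hf.iterate i).isOpen_preimage u hu),
      ⟨hxv, hfu⟩, ?_⟩
    intro y hy hy2
    exact huv.ne_of_mem hy.2 hy2.1 rfl
  choose O hO hxO hdO using key
  set V : Set Ω := ⋂ i ∈ Finset.Ico 1 m, ⋂ h : i ∈ Finset.Ico 1 m, O i h with hV
  have hVopen : IsOpen V := by
    apply isOpen_biInter_finset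
    intro i hi
    exact isOpen_iInter_of_finite fun h => hO i h
  have hxV : x ∈ V := by
    simp only [hV, mem_iInter]
    intro i hi h
    exact hxO i h
  obtain ⟨U, hU, hxU, hUV⟩ := compact_exists_isClopen_in_isOpen hVopen hxV
  refine ⟨U, hU, hxU, ?_⟩
  intro i h1 h2 y hy hy2
  have hi : i ∈ Finset.Ico 1 m := Finset.mem_Ico.2 ⟨h1, h2⟩
  have hsub : V ⊆ O i hi := by
    intro z hz
    simp only [hV, mem_iInter] at hz
    exact hz i hi hi
  exact hdO i hi y (hsub (hUV hy)) (hsub (hUV hy2))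

lemma KR_base (hf : Continuous f) (hg : Continuous g)
    (hfg : LeftInverse g f) {m : ℕ} (hm : 1 ≤ m)
    (hap : ∀ (x : Ω) i, 1 ≤ i → i < m → f^[i] x ≠ x) :
    ∃ A : Set Ω, IsClopen A ∧
      (∀ x ∈ A, ∀ i, 1 ≤ i → i < m → f^[i] x ∉ A) ∧
      (∀ x : Ω, ∃ i, i < m ∧ (g^[i] x ∈ A ∨ f^[i] x ∈ A)) := by
  -- the "m-neighborhood" of a set
  set N : Set Ω → Set Ω :=
    fun A => ⋃ i ∈ Finset.range m, (g^[i] ⁻¹' A ∪ f^[i] ⁻¹' A) with hN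
  have hNmem : ∀ (A : Set Ω) (x : Ω),
      x ∈ N A ↔ ∃ i, i < m ∧ (g^[i] x ∈ A ∨ f^[i] x ∈ A) := by
    intro A x
    simp [hN, Finset.mem_range, and_comm]
  have hNclopen : ∀ A : Set Ω, IsClopen A → IsClopen (N A) := by
    intro A hA
    exact isClopen_biUnion_finset fun i _ =>
      (hA.preimage (hg.iterate i)).union (hA.preimage (hf.iterate i))
  have hNmono : ∀ A B : Set Ω, A ⊆ B → N A ⊆ N B := by
    intro A B hAB x hx
    rw [hNmem] at hx ⊢
    obtain ⟨i, hi, h⟩ := hx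
    exact ⟨i, hi, h.imp (fun h => hAB h) fun h => hAB h⟩
  have hself : ∀ A : Set Ω, A ⊆ N A := by
    intro A x hx
    rw [hNmem]
    exact ⟨0, hm, Or.inl hx⟩
  -- local clopen sets
  have hloc := fun x : Ω => KR_local (f := f) hf (fun i h1 h2 => hap x i h1 h2)
  choose c hc hxc hdc using hloc
  -- finite subcover
  obtain ⟨t, ht⟩ := isCompact_univ.elim_finite_subcover (fun x : Ω => c x)
    (fun x => (hc x).isOpen) (fun x _ => mem_iUnion.2 ⟨x, hxc x⟩)
  -- inductive construction over t
  classical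
  have main : ∀ s : Finset Ω, ∃ A : Set Ω, IsClopen A ∧
      (∀ x ∈ A, ∀ i, 1 ≤ i → i < m → f^[i] x ∉ A) ∧
      ∀ y ∈ s, c y ⊆ N A := by
    intro s
    induction s using Finset.induction_on with
    | empty => exact ⟨∅, isClopen_empty, fun x hx => absurd hx (notMem_empty x),
        fun y hy => absurd hy (Finset.notMem_empty y)⟩
    | @insert y s hy ih =>
      obtain ⟨A, hA, hAdisj, hAcov⟩ := ih
      refine ⟨A ∪ (c y \ N A), (hA.union ((hc y).diff (hNclopen A hA))), ?_, ?_⟩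
      · intro x hx i h1 h2 hx2
        have hfix : ∀ z : Ω, z ∈ A → f^[i] z ∈ N A := by
          intro z hz
          rw [hNmem]
          exact ⟨i, h2, Or.inl (by rw [hfg.iterate i z] ; exact hz)⟩
        rcases hx with hx | hx
        · rcases hx2 with hx2 | hx2
          · exact hAdisj x hx i h1 h2 hx2
          · exact hx2.2 (hfix x hx)
        · rcases hx2 with hx2 | hx2
          · -- x ∈ c y \ N A but f^[i] x ∈ A ⇒ x ∈ N A
            exact hx.2 ((hNmem A x).2 ⟨i, h2, Or.inr hx2⟩)
          · exact hdc y i h1 h2 x hx.1 hx2.1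
      · intro z hz x hx
        rcases Finset.mem_insert.1 hz with rfl | hz'
        · by_cases hxN : x ∈ N A
          · exact hNmono A _ subset_union_left hxN
          · exact hself _ (Or.inr ⟨hx, hxN⟩)
        · exact hNmono A _ subset_union_left (hAcov z hz' hx)
  obtain ⟨A, hA, hAdisj, hAcov⟩ := main t
  refine ⟨A, hA, hAdisj, ?_⟩
  intro x
  have hx : x ∈ ⋃ y ∈ t, c y := ht (mem_univ x)
  rw [mem_iUnion₂] at hx
  obtain ⟨y, hyt, hxy⟩ := hx
  exact (hNmem A x).1 (hAcov y hyt hxy)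

end KR

/-- **Kakutani–Rokhlin partitions for aperiodic Cantor systems.** Let `T` be an aperiodic
homeomorphism of a Cantor set `Ω`. For every `m ≥ 2` there is a partition of `Ω` into
finitely many `T`-towers with nonempty clopen bases and heights at least `m`. -/
theorem stmt_13 {Ω : Type*} [TopologicalSpace Ω] [CompactSpace Ω] [TopologicalSpace.MetrizableSpace Ω]
    [TotallyDisconnectedSpace Ω] [PerfectSpace Ω] [Nonempty Ω]
    (T : Ω ≃ₜ Ω)
    (hT : ∀ x : Ω, ∀ n : ℕ, 1 ≤ n → (T : Ω → Ω)^[n] x ≠ x)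
    (m : ℕ) (hm : 2 ≤ m) :
    ∃ (k : ℕ) (B : Fin k → Set Ω) (h : Fin k → ℕ),
      0 < k ∧
      (∀ i, IsClopen (B i) ∧ (B i).Nonempty) ∧
      (∀ i, m ≤ h i) ∧
      (∀ i i' : Fin k, ∀ j j' : ℕ, j < h i → j' < h i' → (i, j) ≠ (i', j') →
        Disjoint ((T : Ω → Ω)^[j] '' B i) ((T : Ω → Ω)^[j'] '' B i')) ∧
      (⋃ i : Fin k, ⋃ j ∈ Finset.range (h i), (T : Ω → Ω)^[j] '' B i) = Set.univ := by
  classical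
  set f : Ω → Ω := (T : Ω → Ω) with hfdef
  set g : Ω → Ω := (T.symm : Ω → Ω) with hgdef
  have hfg : LeftInverse g f := fun y => T.symm_apply_apply y
  have hgf : LeftInverse f g := fun y => T.apply_symm_apply y
  have hm1 : 1 ≤ m := le_trans (by norm_num) hm
  obtain ⟨A, hA, hAdisj, hcov⟩ := KR_base (f := f) (g := g) T.continuous T.symm.continuous
    hfg hm1 (fun x i h1 _ => hT x i h1)
  -- existence of a bounded forward return time
  have hret : ∀ x : Ω, ∃ n, 1 ≤ n ∧ f^[n] x ∈ A := by
    intro x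
    obtain ⟨i, hi, h⟩ := hcov (f^[m] x)
    rcases h with h | h
    · refine ⟨m - i, by omega, ?_⟩
      have he : f^[m] x = f^[i] (f^[m - i] x) := by
        rw [← Function.iterate_add_apply]
        congr 1
        omega
      rwa [he, hfg.iterate i] at h
    · refine ⟨i + m, by omega, ?_⟩
      rwa [← Function.iterate_add_apply] at h
  have hretb : ∀ x : Ω, ∃ n, 1 ≤ n ∧ n ≤ 2 * m - 1 ∧ f^[n] x ∈ A := by
    intro x
    obtain ⟨i, hi, h⟩ := hcov (f^[m] x)
    rcases h with h | h
    · refine ⟨m - i, by omega, by omega, ?_⟩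
      have he : f^[m] x = f^[i] (f^[m - i] x) := by
        rw [← Function.iterate_add_apply]
        congr 1
        omega
      rwa [he, hfg.iterate i] at h
    · refine ⟨i + m, by omega, by omega, ?_⟩
      rwa [← Function.iterate_add_apply] at h
  set r : Ω → ℕ := fun x => Nat.find (hret x) with hrdef
  have hr1 : ∀ x, 1 ≤ r x := fun x => (Nat.find_spec (hret x)).1
  have hrA : ∀ x, f^[r x] x ∈ A := fun x => (Nat.find_spec (hret x)).2
  have hrmin : ∀ x j, 1 ≤ j → j < r x → f^[j] x ∉ A := by
    intro x j h1 h2 hj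
    exact Nat.find_min (hret x) h2 ⟨h1, hj⟩
  have hrub : ∀ x, r x ≤ 2 * m - 1 := by
    intro x
    obtain ⟨n, h1, h2, h3⟩ := hretb x
    exact le_trans (Nat.find_min' (hret x) ⟨h1, h3⟩) h2
  have hrlb : ∀ x ∈ A, m ≤ r x := by
    intro x hx
    by_contra hc
    exact hAdisj x hx (r x) (hr1 x) (by omega) (hrA x)
  -- every point lies in some tower
  have hTow : ∀ x : Ω, ∃ a ∈ A, ∃ j, j < r a ∧ f^[j] a = x := by
    have claim : ∀ s : ℕ, ∀ x : Ω, g^[s] x ∈ A →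
        ∃ a ∈ A, ∃ j, j < r a ∧ f^[j] a = x := by
      intro s
      induction s using Nat.strong_induction_on with
      | _ s ih =>
        intro x hs
        set a := g^[s] x with ha
        have hfa : f^[s] a = x := hgf.iterate s x
        by_cases hlt : s < r a
        · exact ⟨a, hs, s, hlt, hfa⟩
        · push_neg at hlt
          have hs' : s - r a < s := by have := hr1 a; omega
          apply ih (s - r a) hs' x
          have hx : x = f^[s - r a] (f^[r a] a) := by
            rw [← Function.iterate_add_apply, ← hfa]
            congr 1
            omega
          rw [hx, hfg.iterate (s - r a)]
          exact hrA a
    intro x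
    obtain ⟨i, hi, h⟩ := hcov (g^[m] x)
    rcases h with h | h
    · exact claim (i + m) x (by rwa [← Function.iterate_add_apply] at h)
    · apply claim (m - i) x
      have he : g^[m] x = g^[i] (g^[m - i] x) := by
        rw [← Function.iterate_add_apply]
        congr 1
        omega
      rwa [he, hgf.iterate i] at h
  -- the level sets of the return time
  set An : ℕ → Set Ω :=
    fun n => A ∩ f^[n] ⁻¹' A ∩ ⋂ j ∈ Finset.Ico 1 n, f^[j] ⁻¹' Aᶜ with hAndef
  have hAn_mem : ∀ n x, x ∈ An n ↔
      (x ∈ A ∧ f^[n] x ∈ A ∧ ∀ j, 1 ≤ j → j < n → f^[j] x ∉ A) := by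
    intro n x
    simp only [hAndef, mem_inter_iff, mem_preimage, mem_iInter, Finset.mem_Ico,
      mem_compl_iff, and_assoc]
    constructor
    · rintro ⟨h1, h2, h3⟩
      exact ⟨h1, h2, fun j hj1 hj2 => h3 j ⟨hj1, hj2⟩⟩
    · rintro ⟨h1, h2, h3⟩
      exact ⟨h1, h2, fun j hj => h3 j hj.1 hj.2⟩
  have hAn_r : ∀ n x, 1 ≤ n → (x ∈ An n ↔ x ∈ A ∧ r x = n) := by
    intro n x hn
    rw [hAn_mem]
    constructor
    · rintro ⟨h1, h2, h3⟩
      refine ⟨h1, le_antisymm (Nat.find_min' (hret x) ⟨hn, h2⟩) ?_⟩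
      by_contra hc
      push_neg at hc
      exact h3 (r x) (hr1 x) hc (hrA x)
    · rintro ⟨h1, rfl⟩
      exact ⟨h1, hrA x, fun j hj1 hj2 => hrmin x j hj1 hj2⟩
  have hAn_clopen : ∀ n, IsClopen (An n) := by
    intro n
    refine ((hA.inter (hA.preimage (T.continuous.iterate n))).inter ?_)
    exact isClopen_biInter_finset fun j _ =>
      hA.compl.preimage (T.continuous.iterate j)
  -- key disjointness
  have hinj : ∀ j : ℕ, Function.Injective (f^[j]) := fun j => (hfg.iterate j).injective
  have key : ∀ n n' j j' : ℕ, j ≤ j' → j < n → j' < n' → ¬(n = n' ∧ j = j') →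
      ∀ a ∈ An n, ∀ a' ∈ An n', f^[j] a ≠ f^[j'] a' := by
    intro n n' j j' hjj hjn hjn' hne a ha a' ha' heq
    have hn1 : 1 ≤ n := by omega
    have hn'1 : 1 ≤ n' := by omega
    obtain ⟨haA, hra⟩ := (hAn_r n a hn1).1 ha
    obtain ⟨haA', hra'⟩ := (hAn_r n' a' hn'1).1 ha'
    have heq2 : a = f^[j' - j] a' := by
      apply hinj j
      rw [heq]
      rw [← Function.iterate_add_apply]
      congr 1
      omega
    rcases eq_or_lt_of_le hjj with rfl | hlt
    · have : a = a' := by simpa using heq2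
      subst this
      exact hne ⟨by omega, rfl⟩
    · have h1 : 1 ≤ j' - j := by omega
      have h2 : j' - j < r a' := by omega
      exact hrmin a' (j' - j) h1 h2 (heq2 ▸ haA)
  have hdisjTow : ∀ n n' j j' : ℕ, j < n → j' < n' → ¬(n = n' ∧ j = j') →
      Disjoint (f^[j] '' An n) (f^[j'] '' An n') := by
    intro n n' j j' hjn hjn' hne
    rw [Set.disjoint_left]
    rintro x ⟨a, ha, rfl⟩ ⟨a', ha', heq⟩
    rcases le_total j j' with hle | hle
    · exact key n n' j j' hle hjn hjn' hne a ha a' ha' heq.symm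
    · exact key n' n j' j hle hjn' hjn (fun ⟨h1, h2⟩ => hne ⟨h1.symm, h2.symm⟩)
        a' ha' a ha heq
  -- assemble
  set S : Finset ℕ := (Finset.Icc m (2 * m - 1)).filter (fun n => (An n).Nonempty)
    with hSdef
  have hrS : ∀ x ∈ A, r x ∈ S := by
    intro x hx
    rw [hSdef, Finset.mem_filter, Finset.mem_Icc]
    exact ⟨⟨hrlb x hx, hrub x⟩, ⟨x, (hAn_r (r x) x (hr1 x)).2 ⟨hx, rfl⟩⟩⟩
  obtain ⟨x₀⟩ := ‹Nonempty Ω›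
  obtain ⟨a₀, ha₀, _⟩ := hTow x₀
  have hSne : S.Nonempty := ⟨r a₀, hrS a₀ ha₀⟩
  set e : Fin S.card ≃ S := S.equivFin.symm with hedef
  refine ⟨S.card, fun i => An ((e i : ℕ)), fun i => (e i : ℕ), Finset.card_pos.2 hSne,
    ?_, ?_, ?_, ?_⟩
  · intro i
    refine ⟨hAn_clopen _, ?_⟩
    exact (Finset.mem_filter.1 (e i).2).2
  · intro i
    exact (Finset.mem_Icc.1 (Finset.mem_filter.1 (e i).2).1).1
  · intro i i' j j' hj hj' hne
    apply hdisjTow _ _ _ _ hj hj'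
    rintro ⟨h1, rfl⟩
    apply hne
    have : e i = e i' := Subtype.ext h1
    have : i = i' := e.injective this
    rw [this]
  · apply Set.eq_univ_of_forall
    intro x
    obtain ⟨a, haA, j, hj, hfj⟩ := hTow x
    have hnS : r a ∈ S := hrS a haA
    rw [mem_iUnion]
    refine ⟨e.symm ⟨r a, hnS⟩, ?_⟩
    rw [mem_iUnion₂]
    refine ⟨j, ?_, ?_⟩
    · simp only [Equiv.apply_symm_apply, Finset.mem_range]
      exact hj
    · simp only [Equiv.apply_symm_apply]
      exact ⟨a, (hAn_r (r a) a (hr1 a)).2 ⟨haA, rfl⟩, hfj⟩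
end

section
/- Let T be an aperiodic homeomorphism of a Cantor set Ω. Then for every integer n ≥ 1, every ε > 0, and any finite list of Borel probability measures μ₁, …, μ_k on Ω, there exists a clopen set F ⊆ Ω such that the sets F, T(F), …, T^{n-1}(F) are pairwise disjoint and μᵢ(F ∪ T(F) ∪ ⋯ ∪ T^{n-1}(F)) > 1 − ε for every i = 1, …, k. -/
/-!
A greedy construction over a finite clopen cover, made possible by compactness and aperiodicity,
gives a clopen marker set `A` that no orbit revisits within `N = L * n` steps but that every
backward orbit meets. Cutting the Kakutani skyscraper over a clopen set `B` into blocks of height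
`n`, according to the backward hitting time of `B` modulo `n`, gives a clopen `F` whose first `n`
images are disjoint and cover every point that does not enter `B` during the next `n - 1` steps.

The measures are not invariant, so `B` is taken to be `T^{-sn} A` for a block index `s < L` chosen
by pigeonhole: the `L` blocks `⋃_{m < n} T^{-(sn + m)} A` are disjoint, so one of them has mass at
most `k / L` for `μ₁ + ⋯ + μ_k`, and the part of `Ω` missed by the tower lies in that block.
-/

open MeasureTheory Set Function
open scoped ENNReal

namespace Function.LeftInverse

variable {α : Type*} {f g : α → α}

theorem iterate_apply_iterate_of_le (h : LeftInverse g f) {c i : ℕ} (hci : c ≤ i) (x : α) :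
    g^[c] (f^[i] x) = f^[i - c] x := by
  rw [← Nat.add_sub_cancel' hci, iterate_add_apply, (h.iterate c) _, Nat.add_sub_cancel_left]

theorem iterate_apply_iterate_of_ge (h : LeftInverse g f) {c i : ℕ} (hic : i ≤ c) (x : α) :
    g^[c] (f^[i] x) = g^[c - i] x := by
  rw [← Nat.sub_add_cancel hic, iterate_add_apply, (h.iterate i) _, Nat.add_sub_cancel]

end Function.LeftInverse

namespace Rokhlin

section Orbits

variable {X : Type*}

def avoiding (f : X → X) (B : Set X) (n : ℕ) : Set X :=
  ⋂ m ∈ Finset.Ioo 0 n, f^[m] ⁻¹' Bᶜ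

theorem mem_avoiding {f : X → X} {B : Set X} {n : ℕ} {x : X} :
    x ∈ avoiding f B n ↔ ∀ m ∈ Finset.Ioo 0 n, f^[m] x ∉ B := by
  simp [avoiding]

theorem disjoint_preimage_iterate {f : X → X} {A : Set X} {N : ℕ} (hA : A ⊆ avoiding f A N)
    {i j : ℕ} (hij : i < j) (hji : j < i + N) : Disjoint (f^[i] ⁻¹' A) (f^[j] ⁻¹' A) := by
  refine disjoint_left.2 fun x hi hj => mem_avoiding.1 (hA hi) (j - i) ?_ ?_
  · simp only [Finset.mem_Ioo]; omega
  · rwa [← iterate_add_apply, Nat.sub_add_cancel hij.le]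

theorem pairwiseDisjoint_preimage_iterate_blocks {f : X → X} {A : Set X} {L n : ℕ}
    (hA : A ⊆ avoiding f A (L * n)) :
    (Finset.range L : Set ℕ).PairwiseDisjoint
      fun s => ⋃ m ∈ Finset.range n, f^[s * n + m] ⁻¹' A := by
  have hlt : ∀ s t, s < t → t < L → Disjoint (⋃ m ∈ Finset.range n, f^[s * n + m] ⁻¹' A)
      (⋃ m ∈ Finset.range n, f^[t * n + m] ⁻¹' A) := by
    intro s t hst htL
    simp only [disjoint_iUnion_left, disjoint_iUnion_right, Finset.mem_range]
    intro m' hm' m hm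
    have hs : s * n + n ≤ t * n := by rw [← Nat.succ_mul]; exact Nat.mul_le_mul_right n hst
    have ht : t * n + n ≤ L * n := by rw [← Nat.succ_mul]; exact Nat.mul_le_mul_right n htL
    exact disjoint_preimage_iterate hA (by omega) (by omega)
  intro s hs t ht hst
  simp only [Finset.coe_range, mem_Iio] at hs ht
  rcases lt_or_gt_of_ne hst with h | h
  · exact hlt s t h ht
  · exact (hlt t s h hs).symm

theorem compl_avoiding_preimage_iterate_subset {f : X → X} {A : Set X} (j n : ℕ) :
    (avoiding f (f^[j] ⁻¹' A) n)ᶜ ⊆ ⋃ m ∈ Finset.range n, f^[j + m] ⁻¹' A := by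
  intro z hz
  obtain ⟨m, -, hm, hmz⟩ : ∃ m, 0 < m ∧ m < n ∧ f^[m] z ∈ f^[j] ⁻¹' A := by
    simpa [mem_avoiding] using hz
  exact mem_iUnion₂.2 ⟨m, Finset.mem_range.2 hm, by rwa [mem_preimage, iterate_add_apply]⟩

/-- Junk value `0` (as `sInf ∅ = 0`) when the orbit of `x` under `g` never enters `B`. -/
noncomputable def hittingTime (g : X → X) (B : Set X) (x : X) : ℕ :=
  sInf {a | g^[a] x ∈ B}

variable {g : X → X} {B : Set X} {x : X}

theorem iterate_hittingTime_mem (h : ∃ a, g^[a] x ∈ B) : g^[hittingTime g B x] x ∈ B :=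
  Nat.sInf_mem h

theorem iterate_notMem_of_lt_hittingTime {c : ℕ} (h : c < hittingTime g B x) : g^[c] x ∉ B :=
  Nat.notMem_of_lt_sInf h

theorem hittingTime_eq_iff (h : ∃ a, g^[a] x ∈ B) {a : ℕ} :
    hittingTime g B x = a ↔ g^[a] x ∈ B ∧ ∀ c < a, g^[c] x ∉ B := by
  refine ⟨fun ha => ha ▸ ⟨iterate_hittingTime_mem h, fun c => iterate_notMem_of_lt_hittingTime⟩,
    fun ⟨ha, hlt⟩ => le_antisymm (Nat.sInf_le ha) (not_lt.1 fun hlt' => ?_)⟩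
  exact hlt _ hlt' (iterate_hittingTime_mem h)

theorem hittingTime_eq_add {i : ℕ} (h : ∃ a, g^[a] x ∈ B) (hi : ∀ c < i, g^[c] x ∉ B) :
    hittingTime g B x = hittingTime g B (g^[i] x) + i := by
  have hle : i ≤ hittingTime g B x := not_lt.1 fun hlt => hi _ hlt (iterate_hittingTime_mem h)
  simp only [hittingTime, ← iterate_add_apply] at hle ⊢
  exact (Nat.sInf_add hle).symm

theorem hittingTime_iterate {f : X → X} (hgf : LeftInverse g f) {n i : ℕ}
    (h : ∃ a, g^[a] (f^[i] x) ∈ B) (hx : x ∈ avoiding f B n) (hi : i < n) :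
    hittingTime g B (f^[i] x) = hittingTime g B x + i := by
  rw [hittingTime_eq_add h fun c hc => ?_, (hgf.iterate i) x]
  rw [hgf.iterate_apply_iterate_of_le hc.le]
  exact mem_avoiding.1 hx _ (by simp only [Finset.mem_Ioo]; omega)

end Orbits

section Topology

variable {X : Type*} [TopologicalSpace X]

theorem isClopen_avoiding {f : X → X} (hf : Continuous f) {B : Set X} (hB : IsClopen B) (n : ℕ) :
    IsClopen (avoiding f B n) :=
  isClopen_biInter_finset fun m _ => hB.compl.preimage (hf.iterate m)

theorem isLocallyConstant_hittingTime {g : X → X} (hg : Continuous g) {B : Set X}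
    (hB : IsClopen B) (h : ∀ x, ∃ a, g^[a] x ∈ B) : IsLocallyConstant (hittingTime g B) := by
  refine (IsLocallyConstant.iff_isOpen_fiber).2 fun a => ?_
  have hfiber : hittingTime g B ⁻¹' {a} = g^[a] ⁻¹' B ∩ ⋂ c ∈ Finset.range a, g^[c] ⁻¹' Bᶜ := by
    ext y
    simp [hittingTime_eq_iff (h y)]
  rw [hfiber]
  exact (hB.isOpen.preimage (hg.iterate a)).inter
    (isOpen_biInter_finset fun c _ => hB.compl.isOpen.preimage (hg.iterate c))

theorem isClopen_biUnion_image_iterate (T : X ≃ₜ X) {F : Set X} (hF : IsClopen F) (n : ℕ) :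
    IsClopen (⋃ j ∈ Finset.range n, T^[j] '' F) := by
  refine isClopen_biUnion_finset fun j _ => ?_
  rw [image_eq_preimage_of_inverse (LeftInverse.iterate T.symm_apply_apply j)
    (LeftInverse.iterate T.apply_symm_apply j)]
  exact hF.preimage (T.symm.continuous.iterate j)

theorem exists_isClopen_tower (T : X ≃ₜ X) {B : Set X} (hB : IsClopen B)
    (hit : ∀ x, ∃ a, T.symm^[a] x ∈ B) {n : ℕ} (hn : 0 < n) :
    ∃ F, IsClopen F ∧
      (∀ i j, i < n → j < n → i ≠ j → Disjoint (T^[i] '' F) (T^[j] '' F)) ∧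
      avoiding T B n ⊆ ⋃ j ∈ Finset.range n, T^[j] '' F := by
  set τ := hittingTime T.symm B
  have hτ : IsLocallyConstant τ := isLocallyConstant_hittingTime T.symm.continuous hB hit
  have hshift : ∀ x ∈ avoiding T B n, ∀ i < n, τ (T^[i] x) = τ x + i := fun x hx i hi =>
    hittingTime_iterate T.symm_apply_apply (hit _) hx hi
  have hdvd : IsClopen (τ ⁻¹' {a | n ∣ a}) := ⟨⟨hτ {a | n ∣ a}ᶜ⟩, hτ _⟩
  refine ⟨τ ⁻¹' {a | n ∣ a} ∩ avoiding T B n,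
    hdvd.inter (isClopen_avoiding T.continuous hB n), ?_, ?_⟩
  · rintro i j hi hj hij
    refine disjoint_left.2 ?_
    rintro _ ⟨x, ⟨⟨p, hp⟩, hx⟩, rfl⟩ ⟨y, ⟨⟨q, hq⟩, hy⟩, hxy⟩
    have hlevel : n * q + j = n * p + i := by
      rw [← hp, ← hq, ← hshift x hx i hi, ← hshift y hy j hj, hxy]
    have := congrArg (· % n) hlevel
    simp only [Nat.mul_add_mod, Nat.mod_eq_of_lt hi, Nat.mod_eq_of_lt hj] at this
    exact hij this.symm
  · intro z hz
    set i := τ z % n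
    have hi : i < n := Nat.mod_lt _ hn
    have hia : i ≤ τ z := Nat.mod_le _ _
    have hxz : T^[i] (T.symm^[i] z) = z := (LeftInverse.iterate T.apply_symm_apply i) z
    have hx : T.symm^[i] z ∈ avoiding T B n := by
      refine mem_avoiding.2 fun m hm => ?_
      rw [Finset.mem_Ioo] at hm
      rcases le_or_gt m i with hmi | him
      · rw [LeftInverse.iterate_apply_iterate_of_le T.apply_symm_apply hmi]
        exact iterate_notMem_of_lt_hittingTime (show i - m < τ z by omega)
      · rw [LeftInverse.iterate_apply_iterate_of_ge T.apply_symm_apply him.le]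
        exact mem_avoiding.1 hz _ (by simp only [Finset.mem_Ioo]; omega)
    have hτx : τ z = τ (T.symm^[i] z) + i := by rw [← hshift _ hx i hi, hxz]
    refine mem_iUnion₂.2 ⟨i, Finset.mem_range.2 hi, _, ⟨?_, hx⟩, hxz⟩
    show n ∣ τ (T.symm^[i] z)
    rw [show τ (T.symm^[i] z) = τ z - τ z % n by omega]
    exact Nat.dvd_sub_mod _

def nearby (T : X ≃ₜ X) (N : ℕ) (A : Set X) : Set X :=
  ⋃ m ∈ Finset.range N, (T^[m] ⁻¹' A ∪ T.symm^[m] ⁻¹' A)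

section nearby

variable {T : X ≃ₜ X} {N : ℕ} {A : Set X}

theorem mem_nearby {x : X} : x ∈ nearby T N A ↔ ∃ m < N, T^[m] x ∈ A ∨ T.symm^[m] x ∈ A := by
  simp [nearby]

theorem nearby_mono {A' : Set X} (h : A ⊆ A') : nearby T N A ⊆ nearby T N A' :=
  biUnion_mono subset_rfl fun _ _ => union_subset_union (preimage_mono h) (preimage_mono h)

theorem isClopen_nearby (hA : IsClopen A) : IsClopen (nearby T N A) :=
  isClopen_biUnion_finset fun m _ =>
    (hA.preimage (T.continuous.iterate m)).union (hA.preimage (T.symm.continuous.iterate m))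

theorem exists_isClopen_avoiding_extend (hN : 0 < N) (hA : IsClopen A) (hAN : A ⊆ avoiding T A N)
    {U : Set X} (hU : IsClopen U) (hUN : U ⊆ avoiding T U N) :
    ∃ A', IsClopen A' ∧ A' ⊆ avoiding T A' N ∧ A ⊆ A' ∧ U ⊆ nearby T N A' := by
  refine ⟨A ∪ (U \ nearby T N A), hA.union (hU.diff (isClopen_nearby hA)), fun x hx => ?_,
    subset_union_left, fun x hx => ?_⟩
  · refine mem_avoiding.2 fun m hm hmx => ?_
    have hmN : m < N := (Finset.mem_Ioo.1 hm).2
    rcases hx with hx | hx <;> rcases hmx with hmx | hmx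
    · exact mem_avoiding.1 (hAN hx) m hm hmx
    · exact hmx.2 (mem_nearby.2 ⟨m, hmN, Or.inr (by rwa [LeftInverse.iterate T.symm_apply_apply])⟩)
    · exact hx.2 (mem_nearby.2 ⟨m, hmN, Or.inl hmx⟩)
    · exact mem_avoiding.1 (hUN hx.1) m hm hmx.1
  · by_cases hxA : x ∈ nearby T N A
    · exact nearby_mono subset_union_left hxA
    · exact mem_nearby.2 ⟨0, hN, Or.inl (Or.inr ⟨hx, hxA⟩)⟩

end nearby

variable [CompactSpace X] [T2Space X] [TotallyDisconnectedSpace X]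

theorem exists_isClopen_mem_subset_avoiding {f : X → X} (hf : Continuous f) {N : ℕ} {x : X}
    (hx : ∀ m ∈ Finset.Ioo 0 N, f^[m] x ≠ x) :
    ∃ U, IsClopen U ∧ x ∈ U ∧ U ⊆ avoiding f U N := by
  have hsep : ∀ m ∈ Finset.Ioo 0 N, ∃ V, IsClopen V ∧ x ∈ V ∧ f^[m] x ∉ V := fun m hm => by
    obtain ⟨V, hV, hxV, hVx⟩ :=
      compact_exists_isClopen_in_isOpen isOpen_compl_singleton (hx m hm).symm
    exact ⟨V, hV, hxV, fun h => hVx h rfl⟩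
  choose! V hV hxV hfxV using hsep
  refine ⟨⋂ m ∈ Finset.Ioo 0 N, V m ∩ f^[m] ⁻¹' (V m)ᶜ,
    isClopen_biInter_finset fun m hm => (hV m hm).inter ((hV m hm).compl.preimage (hf.iterate m)),
    mem_iInter₂.2 fun m hm => ⟨hxV m hm, hfxV m hm⟩, fun y hy => mem_avoiding.2 fun m hm hfy => ?_⟩
  exact (mem_iInter₂.1 hy m hm).2 (mem_iInter₂.1 hfy m hm).1

theorem exists_isClopen_marker (T : X ≃ₜ X) {N : ℕ} (hN : 0 < N)
    (hT : ∀ x, ∀ m ∈ Finset.Ioo 0 N, T^[m] x ≠ x) :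
    ∃ A, IsClopen A ∧ A ⊆ avoiding T A N ∧ ∀ x, ∃ a, T.symm^[a] x ∈ A := by
  classical
  choose U hU hxU hUN using fun x => exists_isClopen_mem_subset_avoiding T.continuous (hT x)
  obtain ⟨t, ht⟩ := isCompact_univ.elim_finite_subcover U (fun x => (hU x).isOpen)
    fun x _ => mem_iUnion.2 ⟨x, hxU x⟩
  have hgreedy : ∀ s : Finset X,
      ∃ A, IsClopen A ∧ A ⊆ avoiding T A N ∧ ∀ z ∈ s, U z ⊆ nearby T N A := by
    intro s
    induction s using Finset.induction_on with
    | empty => exact ⟨∅, isClopen_empty, empty_subset _, by simp⟩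
    | insert z s _ ih =>
      obtain ⟨A, hA, hAN, hAs⟩ := ih
      obtain ⟨A', hA', hA'N, hAA', hUA'⟩ :=
        exists_isClopen_avoiding_extend hN hA hAN (hU z) (hUN z)
      exact ⟨A', hA', hA'N,
        (Finset.forall_mem_insert _ _ _).2 ⟨hUA', fun w hw => (hAs w hw).trans (nearby_mono hAA')⟩⟩
  obtain ⟨A, hA, hAN, htA⟩ := hgreedy t
  refine ⟨A, hA, hAN, fun x => ?_⟩
  obtain ⟨z, hz, hxz⟩ := mem_iUnion₂.1 (ht (mem_univ (T.symm^[N] x)))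
  obtain ⟨m, hm, hmx | hmx⟩ := mem_nearby.1 (htA z hz hxz)
  · exact ⟨N - m, by rwa [LeftInverse.iterate_apply_iterate_of_le T.apply_symm_apply hm.le] at hmx⟩
  · exact ⟨m + N, by rwa [iterate_add_apply]⟩

end Topology

section Measure

variable {X : Type*} [MeasurableSpace X]

theorem exists_mul_measure_le_measure_univ (ν : Measure X) {L : ℕ} (hL : 0 < L) {E : ℕ → Set X}
    (hE : ∀ s, MeasurableSet (E s)) (hd : (Finset.range L : Set ℕ).PairwiseDisjoint E) :
    ∃ s < L, L * ν (E s) ≤ ν univ := by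
  obtain ⟨s, hs, hmin⟩ :=
    (Finset.range L).exists_min_image (fun s => ν (E s)) (Finset.nonempty_range_iff.2 hL.ne')
  refine ⟨s, Finset.mem_range.1 hs, ?_⟩
  calc (L : ℝ≥0∞) * ν (E s) = (Finset.range L).card • ν (E s) := by
        rw [Finset.card_range, nsmul_eq_mul]
    _ ≤ ∑ t ∈ Finset.range L, ν (E t) := Finset.card_nsmul_le_sum _ _ _ hmin
    _ ≤ ν univ := sum_measure_le_measure_univ (fun t _ => (hE t).nullMeasurableSet)
      fun _ ha _ hb hab => (hd ha hb hab).aedisjoint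

/-- The bound `1` in `min a 1` matters when `a ≥ 1`, where truncated subtraction makes the
left-hand side `0`. -/
theorem one_sub_lt_measure {μ : Measure X} [IsProbabilityMeasure μ] {s : Set X}
    (hs : MeasurableSet s) {a : ℝ≥0∞} (h : μ sᶜ < min a 1) : 1 - a < μ s := by
  calc 1 - a ≤ 1 - min a 1 := tsub_le_tsub_left (min_le_left _ _) _
    _ < μ s := ENNReal.sub_lt_of_lt_add (min_le_right _ _) <| by
      calc 1 = μ s + μ sᶜ := (measure_add_measure_compl hs).trans measure_univ |>.symm
        _ < μ s + min a 1 := ENNReal.add_lt_add_left (measure_ne_top _ _) h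

variable [TopologicalSpace X] [CompactSpace X] [T2Space X] [TotallyDisconnectedSpace X]
  [OpensMeasurableSpace X]

theorem exists_isClopen_tower_mul_measure_compl_le (T : X ≃ₜ X)
    (hT : ∀ x, ∀ m, 1 ≤ m → T^[m] x ≠ x) (ν : Measure X) {n L : ℕ} (hn : 0 < n) (hL : 0 < L) :
    ∃ F, IsClopen F ∧
      (∀ i j, i < n → j < n → i ≠ j → Disjoint (T^[i] '' F) (T^[j] '' F)) ∧
      L * ν (⋃ j ∈ Finset.range n, T^[j] '' F)ᶜ ≤ ν univ := by
  obtain ⟨A, hA, hAN, hAhit⟩ := exists_isClopen_marker T (Nat.mul_pos hL hn)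
    fun x m hm => hT x m (Finset.mem_Ioo.1 hm).1
  obtain ⟨s, -, hs⟩ := exists_mul_measure_le_measure_univ ν hL
    (E := fun s => ⋃ m ∈ Finset.range n, T^[s * n + m] ⁻¹' A)
    (fun s => (isOpen_biUnion fun m _ => hA.isOpen.preimage (T.continuous.iterate _)).measurableSet)
    (pairwiseDisjoint_preimage_iterate_blocks hAN)
  have hit : ∀ x, ∃ a, T.symm^[a] x ∈ T^[s * n] ⁻¹' A := fun x => by
    obtain ⟨a, ha⟩ := hAhit x
    exact ⟨s * n + a, by
      rwa [mem_preimage, iterate_add_apply, LeftInverse.iterate T.apply_symm_apply]⟩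
  obtain ⟨F, hF, hFd, hFcov⟩ :=
    exists_isClopen_tower T (hA.preimage (T.continuous.iterate (s * n))) hit hn
  refine ⟨F, hF, hFd, le_trans ?_ hs⟩
  gcongr
  exact (compl_subset_compl.2 hFcov).trans (compl_avoiding_preimage_iterate_subset _ _)

end Measure

end Rokhlin

theorem stmt_14_general {Ω : Type*} [TopologicalSpace Ω] [CompactSpace Ω]
    [TopologicalSpace.MetrizableSpace Ω] [TotallyDisconnectedSpace Ω]
    [MeasurableSpace Ω] [BorelSpace Ω]
    (T : Ω ≃ₜ Ω)
    (hT : ∀ x : Ω, ∀ n : ℕ, 1 ≤ n → (T : Ω → Ω)^[n] x ≠ x)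
    (n : ℕ) (hn : 1 ≤ n) (ε : ℝ) (hε : 0 < ε)
    (k : ℕ) (μ : Fin k → Measure Ω) (hμ : ∀ i, IsProbabilityMeasure (μ i)) :
    ∃ F : Set Ω, IsClopen F ∧
      (∀ i j : ℕ, i < n → j < n → i ≠ j →
        Disjoint ((T : Ω → Ω)^[i] '' F) ((T : Ω → Ω)^[j] '' F)) ∧
      (∀ i : Fin k,
        1 - ENNReal.ofReal ε < μ i (⋃ j ∈ Finset.range n, (T : Ω → Ω)^[j] '' F)) := by
  obtain ⟨L, hL⟩ := ENNReal.exists_nat_mul_gt (a := min (ENNReal.ofReal ε) 1) (b := k)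
    (by simp [hε]) (ENNReal.natCast_ne_top k)
  have hL0 : 0 < L := Nat.pos_of_ne_zero (by rintro rfl; simp at hL)
  obtain ⟨F, hF, hFd, hcompl⟩ :=
    Rokhlin.exists_isClopen_tower_mul_measure_compl_le T hT (∑ i, μ i) hn hL0
  set U := ⋃ j ∈ Finset.range n, (T : Ω → Ω)^[j] '' F
  have hν : (∑ i, μ i) univ = k := by simp [fun i => (hμ i).measure_univ]
  have hsmall : (∑ i, μ i) Uᶜ < min (ENNReal.ofReal ε) 1 := lt_of_not_ge fun h =>
    (hL.trans_le ((by gcongr : (L : ℝ≥0∞) * _ ≤ L * _).trans (hcompl.trans hν.le))).false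
  refine ⟨F, hF, hFd, fun i => ?_⟩
  have := hμ i
  refine Rokhlin.one_sub_lt_measure
    (Rokhlin.isClopen_biUnion_image_iterate T hF n).isOpen.measurableSet (lt_of_le_of_lt ?_ hsmall)
  rw [Measure.coe_finsetSum, Finset.sum_apply]
  exact Finset.single_le_sum (f := fun j => μ j Uᶜ) (fun _ _ => zero_le) (Finset.mem_univ i)

/-- **Rokhlin lemma in Cantor dynamics.** Let `T` be an aperiodic homeomorphism of a
Cantor set `Ω`. For every `n ≥ 1`, `ε > 0`, and Borel probability measures `μ₁, …, μ_k`
there is a clopen set `F` with `F, T F, …, T^{n-1} F` pairwise disjoint and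
`μᵢ(F ∪ T F ∪ ⋯ ∪ T^{n-1} F) > 1 - ε` for all `i`. -/
theorem stmt_14 {Ω : Type*} [TopologicalSpace Ω] [CompactSpace Ω]
    [TopologicalSpace.MetrizableSpace Ω] [TotallyDisconnectedSpace Ω] [PerfectSpace Ω]
    [Nonempty Ω] [MeasurableSpace Ω] [BorelSpace Ω]
    (T : Ω ≃ₜ Ω)
    (hT : ∀ x : Ω, ∀ n : ℕ, 1 ≤ n → (T : Ω → Ω)^[n] x ≠ x)
    (n : ℕ) (hn : 1 ≤ n) (ε : ℝ) (hε : 0 < ε)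
    (k : ℕ) (μ : Fin k → Measure Ω) (hμ : ∀ i, IsProbabilityMeasure (μ i)) :
    ∃ F : Set Ω, IsClopen F ∧
      (∀ i j : ℕ, i < n → j < n → i ≠ j →
        Disjoint ((T : Ω → Ω)^[i] '' F) ((T : Ω → Ω)^[j] '' F)) ∧
      (∀ i : Fin k,
        1 - ENNReal.ofReal ε < μ i (⋃ j ∈ Finset.range n, (T : Ω → Ω)^[j] '' F)) :=
  stmt_14_general T hT n hn ε hε k μ hμ
end
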